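/- arXiv:1909.08373 — 8 statements merged into one kernel-verified Lean document; each statement's English description precedes it below -/
import Mathlib

section
/- If every countable, finitely diseparable digraph whose underlying graph is 2-connected admits an optimal pair, then every weakly connected digraph admits an optimal pair; likewise, if every countable, finitely diseparable digraph whose underlying graph is 2-connected admits a nested optimal pair, then every weakly connected digraph admits a nested optimal pair. -/
/-- A digraph with vertex type `V` and edge type `E`, allowing parallel edges. -/
structure MultiDigraph (V : Type*) (E : Type*) where
  tail : E → V
  head : E → V

namespace MultiDigraph

variable {V : Type*} {E : Type*} (D : MultiDigraph V E)

/-- Adjacency in the underlying undirected multigraph. -/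
def Adj (u v : V) : Prop :=
  ∃ e : E, (D.tail e = u ∧ D.head e = v) ∨ (D.tail e = v ∧ D.head e = u)

/-- The underlying undirected multigraph is connected. -/
def WeaklyConnected : Prop :=
  ∀ u v : V, Relation.ReflTransGen D.Adj u v

/-- `B` is the dicut of `D` whose in-shore is `X` (every edge of the cut has its
head in `X`, and no edge leaves `X`). -/
def DicutWith (X : Set V) (B : Set E) : Prop :=
  (∀ e : E, D.tail e ∈ X → D.head e ∈ X) ∧
    B = {e : E | D.tail e ∉ X ∧ D.head e ∈ X}

/-- `B` is a dicut of `D`. -/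
def IsDicut (B : Set E) : Prop :=
  ∃ X : Set V, D.DicutWith X B

/-- A dibond is a minimal non-empty dicut. -/
def IsDibond (B : Set E) : Prop :=
  D.IsDicut B ∧ B.Nonempty ∧
    ∀ B' : Set E, D.IsDicut B' → B'.Nonempty → B' ⊆ B → B' = B

/-- A dijoin meets every non-empty dicut. -/
def Dijoin (F : Set E) : Prop :=
  ∀ B : Set E, D.IsDicut B → B.Nonempty → (F ∩ B).Nonempty

/-- A finitary dijoin meets every non-empty finite dicut. -/
def FinitaryDijoin (F : Set E) : Prop :=
  ∀ B : Set E, D.IsDicut B → B.Finite → B.Nonempty → (F ∩ B).Nonempty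

/-- Two dicuts are nested if they have witnessing sides one of which is
`⊆`-comparable with a side of the other. -/
def NestedDicuts (B₁ B₂ : Set E) : Prop :=
  ∃ X₁ X₂ : Set V, D.DicutWith X₁ B₁ ∧ D.DicutWith X₂ B₂ ∧
    (X₁ ⊆ X₂ ∨ X₂ ⊆ X₁ ∨ X₁ ⊆ X₂ᶜ ∨ X₂ᶜ ⊆ X₁)

/-- An optimal pair: a set `ℬ` of pairwise disjoint finite dicuts and a finitary
dijoin `F ⊆ ⋃ ℬ` meeting each member of `ℬ` in exactly one edge. -/
def OptimalPair (F : Set E) (ℬ : Set (Set E)) : Prop :=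
  (∀ B ∈ ℬ, D.IsDicut B ∧ B.Finite) ∧
    ℬ.Pairwise Disjoint ∧
    D.FinitaryDijoin F ∧
    F ⊆ ⋃₀ ℬ ∧
    ∀ B ∈ ℬ, (F ∩ B).ncard = 1

/-- A nested optimal pair. -/
def NestedOptimalPair (F : Set E) (ℬ : Set (Set E)) : Prop :=
  D.OptimalPair F ℬ ∧ ℬ.Pairwise D.NestedDicuts

/-- The underlying multigraph contains no ray. -/
def Rayless : Prop :=
  ¬ ∃ f : ℕ → V, Function.Injective f ∧ ∀ n : ℕ, D.Adj (f n) (f (n + 1))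

/-- The (undirected) cut of `D` with side `X`: all edges with exactly one
endpoint in `X`. -/
def cutEdges (X : Set V) : Set E :=
  {e : E | (D.tail e ∈ X ∧ D.head e ∉ X) ∨ (D.tail e ∉ X ∧ D.head e ∈ X)}

/-- Any two distinct vertices are separated by a finite cut. -/
def FinitelySeparable : Prop :=
  ∀ v w : V, v ≠ w → ∃ X : Set V, (D.cutEdges X).Finite ∧ v ∈ X ∧ w ∉ X

/-- Any two distinct vertices lie on different sides of some finite dicut. -/
def FinitelyDiseparable : Prop :=
  ∀ v w : V, v ≠ w → ∃ (X : Set V) (B : Set E), D.DicutWith X B ∧ B.Finite ∧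
    ((v ∈ X ∧ w ∉ X) ∨ (v ∉ X ∧ w ∈ X))

/-- The underlying multigraph is 2-connected: it is connected and deleting any
single vertex keeps it connected. -/
def UnderlyingTwoConnected : Prop :=
  D.WeaklyConnected ∧ ∀ x u v : V, u ≠ x → v ≠ x →
    Relation.ReflTransGen (fun a b => a ≠ x ∧ b ≠ x ∧ D.Adj a b) u v

/-- `v ∼ w`: no finite dicut of `D` separates `v` and `w`. -/
def Sim (v w : V) : Prop :=
  ∀ (X : Set V) (B : Set E), D.DicutWith X B → B.Finite → (v ∈ X ↔ w ∈ X)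

/-- `W` is a witness for `v ∼ w`: it meets every finite cut separating `v`
and `w` in both directions. -/
def Witness (v w : V) (W : Set E) : Prop :=
  ∀ X : Set V, (D.cutEdges X).Finite → v ∈ X → w ∉ X →
    (∃ e ∈ W, D.tail e ∈ X ∧ D.head e ∉ X) ∧
    (∃ e ∈ W, D.tail e ∉ X ∧ D.head e ∈ X)

end MultiDigraph

/-!
Identifying vertices that no finite dicut separates, and then deleting loops, keeps the finite
dicuts and makes the digraph finitely diseparable; optimal pairs transfer back along both steps.
Such a digraph is glued from its blocks, the maximal nonseparable edge sets. Each block is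
2-connected and finitely diseparable, and it is countable: a vertex with uncountably many
neighbours in a block would, by the Δ-system lemma, be the centre of an infinite fan of internally
disjoint paths from a common vertex, while a finite dicut separating the two centres meets each of
them in a different edge.

Every vertex outside a block attaches to it at a single vertex, so projecting onto the block lifts
each dicut of the block to a dicut of the whole digraph with the same edges, while each finite
dicut restricts to the blocks containing its edges. Hence optimal pairs of the blocks glue to one
of the digraph. Nestedness is preserved: the projection onto one block maps all of a second block
to a single vertex `a`, and every vertex is mapped to `a` by the first projection or to the
corresponding vertex `b` by the second.
-/

open Relation Set

theorem exists_not_countable_fiber {α β : Type*} {T : Set α} {R : Set β} (hT : ¬ T.Countable)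
    (hR : R.Countable) {g : α → β} (hg : ∀ a ∈ T, g a ∈ R) :
    ∃ z ∈ R, ¬ {a ∈ T | g a = z}.Countable := by
  by_contra! h
  exact hT ((hR.biUnion h).mono fun a ha =>
    mem_biUnion (hg a ha) (show a ∈ {b ∈ T | g b = g a} from ⟨ha, rfl⟩))

theorem Relation.countable_setOf_reflTransGen {α : Type*} {r : α → α → Prop}
    (hr : ∀ a, {b | r a b}.Countable) (a : α) : {b | ReflTransGen r a b}.Countable := by
  let layer : ℕ → Set α := fun n => Nat.rec {a} (fun _ L => L ∪ ⋃ b ∈ L, {c | r b c}) n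
  have hlayer (n : ℕ) : (layer n).Countable := by
    induction n with
    | zero => exact countable_singleton a
    | succ n ih => exact ih.union (ih.biUnion fun b _ => hr b)
  refine (countable_iUnion hlayer).mono fun b hab => ?_
  induction hab with
  | refl => exact mem_iUnion.2 ⟨0, rfl⟩
  | tail _ hbc ih =>
    obtain ⟨n, hn⟩ := mem_iUnion.1 ih
    exact mem_iUnion.2 ⟨n + 1, Or.inr (mem_biUnion hn hbc)⟩

section DeltaSystem

variable {α β : Type*}

theorem exists_uncountable_pairwiseDisjoint (f : α → Set β) {S : Set α}
    (hfin : ∀ a ∈ S, (f a).Finite) (hS : ¬ S.Countable)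
    (hf : ∀ x, {a ∈ S | x ∈ f a}.Countable) :
    ∃ T ⊆ S, ¬ T.Countable ∧ T.PairwiseDisjoint f := by
  obtain ⟨M, hM⟩ := zorn_subset {T | T ⊆ S ∧ T.PairwiseDisjoint f} fun c hcS hc =>
    ⟨⋃₀ c, ⟨sUnion_subset fun T hT => (hcS hT).1, hc.pairwise_sUnion.2 fun T hT => (hcS hT).2⟩,
      fun _ => subset_sUnion_of_mem⟩
  refine ⟨M, hM.prop.1, fun hMc => hS ?_, hM.prop.2⟩
  -- by maximality, every member of `S` outside `M` meets some member of `M`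
  have hcover : S ⊆ M ∪ ⋃ b ∈ M, ⋃ x ∈ f b, {a ∈ S | x ∈ f a} := by
    intro a ha
    by_contra hout
    simp only [mem_union, mem_iUnion, mem_ofPred_eq, not_or, not_exists, not_and] at hout
    refine hout.1 (hM.mem_of_prop_insert ⟨insert_subset ha hM.prop.1, ?_⟩)
    exact hM.prop.2.insert fun b hb _ =>
      disjoint_left.2 fun x hxa hxb => hout.2 b hb x hxb ha hxa
  exact (hMc.union <| hMc.biUnion fun b hb =>
    (hfin b (hM.prop.1 hb)).countable.biUnion fun x _ => hf x).mono hcover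

theorem exists_uncountable_deltaSystem_of_ncard_eq (f : α → Set β) (n : ℕ) {S : Set α}
    (hfin : ∀ a ∈ S, (f a).Finite) (hS : ¬ S.Countable) (hcard : ∀ a ∈ S, (f a).ncard = n) :
    ∃ R, ∃ T ⊆ S, ¬ T.Countable ∧ T.Pairwise fun a b => f a ∩ f b = R := by
  induction n generalizing f S with
  | zero =>
    refine ⟨∅, S, Subset.rfl, hS, fun a ha b _ _ => ?_⟩
    simp only [((ncard_eq_zero (hfin a ha)).1 (hcard a ha)), empty_inter]
  | succ n ih =>
    by_cases hx : ∃ x, ¬ {a ∈ S | x ∈ f a}.Countable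
    · obtain ⟨x, hx⟩ := hx
      obtain ⟨R, T, hTS, hT, hR⟩ := ih (fun a => f a \ {x}) (fun a ha => (hfin a ha.1).sdiff)
        hx fun a ha => by rw [ncard_sdiff_singleton_of_mem ha.2, hcard a ha.1, Nat.add_sub_cancel]
      refine ⟨insert x R, T, fun a ha => (hTS ha).1, hT, fun a ha b hb hab => ?_⟩
      beta_reduce
      rw [← hR ha hb hab, ← sdiff_inter_distrib_right, insert_sdiff_singleton,
        insert_eq_of_mem (mem_inter (hTS ha).2 (hTS hb).2)]
    · push Not at hx
      obtain ⟨T, hTS, hT, hdisj⟩ := exists_uncountable_pairwiseDisjoint f hfin hS hx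
      exact ⟨∅, T, hTS, hT, fun a ha b hb hab => disjoint_iff_inter_eq_empty.1 (hdisj ha hb hab)⟩

theorem exists_uncountable_deltaSystem (f : α → Set β) {S : Set α}
    (hfin : ∀ a ∈ S, (f a).Finite) (hS : ¬ S.Countable) :
    ∃ R, ∃ T ⊆ S, ¬ T.Countable ∧ T.Pairwise fun a b => f a ∩ f b = R := by
  obtain ⟨n, -, hn⟩ := exists_not_countable_fiber hS countable_univ (g := fun a => (f a).ncard)
    fun _ _ => mem_univ _
  obtain ⟨R, T, hTS, hT, hR⟩ := exists_uncountable_deltaSystem_of_ncard_eq f n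
    (fun a ha => hfin a ha.1) hn fun a ha => ha.2
  exact ⟨R, T, hTS.trans (sep_subset _ _), hT, hR⟩

end DeltaSystem

namespace MultiDigraph

variable {V E : Type*} {D : MultiDigraph V E}

theorem DicutWith.tail_ne_head {X : Set V} {B : Set E} (h : D.DicutWith X B) {e : E}
    (he : e ∈ B) : D.tail e ≠ D.head e := by
  rw [h.2] at he
  exact fun hloop => he.1 (hloop ▸ he.2)

def SidesNested (X₁ X₂ : Set V) : Prop :=
  X₁ ⊆ X₂ ∨ X₂ ⊆ X₁ ∨ X₁ ⊆ X₂ᶜ ∨ X₂ᶜ ⊆ X₁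

theorem SidesNested.preimage {W : Type*} {X₁ X₂ : Set V} (h : SidesNested X₁ X₂) (f : W → V) :
    SidesNested (f ⁻¹' X₁) (f ⁻¹' X₂) := by
  rcases h with h | h | h | h
  · exact Or.inl (preimage_mono h)
  · exact Or.inr (Or.inl (preimage_mono h))
  · exact Or.inr (Or.inr (Or.inl (preimage_mono h)))
  · exact Or.inr (Or.inr (Or.inr (preimage_mono h)))

theorem sidesNested_preimage_of_forall_or {W : Type*} {f₁ f₂ : V → W} {a b : W}
    (h : ∀ u, f₁ u = a ∨ f₂ u = b) (Y₁ Y₂ : Set W) : SidesNested (f₁ ⁻¹' Y₁) (f₂ ⁻¹' Y₂) := by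
  by_cases ha : a ∈ Y₁ <;> by_cases hb : b ∈ Y₂
  · refine Or.inr (Or.inr (Or.inr fun u hu => ?_))
    rcases h u with h | h <;> simp_all
  · refine Or.inr (Or.inl fun u hu => ?_)
    rcases h u with h | h <;> simp_all
  · refine Or.inl fun u hu => ?_
    rcases h u with h | h <;> simp_all
  · refine Or.inr (Or.inr (Or.inl fun u hu hu' => ?_))
    rcases h u with h | h <;> simp_all

/-- `D` is glued from the pieces `D' i`, whose edges embed along `g i` and whose in-shores extend
along `ext i`. -/
structure IsGluing {ι : Type*} {V' E' : ι → Type*} (D : MultiDigraph V E)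
    (D' : ∀ i, MultiDigraph (V' i) (E' i)) (g : ∀ i, E' i → E)
    (ext : ∀ i, Set (V' i) → Set V) : Prop where
  injective : ∀ i, Function.Injective (g i)
  disjoint : Pairwise fun i j => Disjoint (range (g i)) (range (g j))
  dicutWith : ∀ i Y B, (D' i).DicutWith Y B → D.DicutWith (ext i Y) (g i '' B)
  exists_restrict : ∀ B, D.IsDicut B → B.Finite → B.Nonempty →
    ∃ i, (D' i).IsDicut (g i ⁻¹' B) ∧ (g i ⁻¹' B).Nonempty

namespace IsGluing

variable {ι : Type*} {V' E' : ι → Type*}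
  {D' : ∀ i, MultiDigraph (V' i) (E' i)} {g : ∀ i, E' i → E} {ext : ∀ i, Set (V' i) → Set V}
  {F : ∀ i, Set (E' i)} {ℬ : ∀ i, Set (Set (E' i))}

theorem iUnion_image_inter_image (hD : D.IsGluing D' g ext) (i : ι) (B : Set (E' i)) :
    (⋃ j, g j '' F j) ∩ g i '' B = g i '' (F i ∩ B) := by
  refine Subset.antisymm ?_ (subset_inter ?_ (image_mono inter_subset_right))
  · rintro _ ⟨he, f, hfB, rfl⟩
    obtain ⟨j, f', hf', hf'f⟩ := mem_iUnion.1 he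
    obtain rfl : j = i := by
      by_contra hji
      exact disjoint_left.1 (hD.disjoint hji) ⟨f', rfl⟩ ⟨f, hf'f.symm⟩
    obtain rfl := hD.injective j hf'f
    exact ⟨f', ⟨hf', hfB⟩, rfl⟩
  · exact (image_mono inter_subset_left).trans (subset_iUnion (fun j => g j '' F j) i)

theorem optimalPair (hD : D.IsGluing D' g ext) (h : ∀ i, (D' i).OptimalPair (F i) (ℬ i)) :
    D.OptimalPair (⋃ i, g i '' F i) (⋃ i, image (g i) '' ℬ i) := by
  refine ⟨?_, ?_, ?_, ?_, ?_⟩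
  · intro _ hmem
    obtain ⟨i, B, hB, rfl⟩ := mem_iUnion.1 hmem
    obtain ⟨⟨Y, hY⟩, hfin⟩ := (h i).1 B hB
    exact ⟨⟨_, hD.dicutWith i Y B hY⟩, hfin.image _⟩
  · intro _ hmem₁ _ hmem₂ hne
    obtain ⟨i, B₁, hB₁, rfl⟩ := mem_iUnion.1 hmem₁
    obtain ⟨j, B₂, hB₂, rfl⟩ := mem_iUnion.1 hmem₂
    obtain rfl | hij := eq_or_ne i j
    · exact (disjoint_image_iff (hD.injective i)).2
        ((h i).2.1 hB₁ hB₂ fun h => hne (h ▸ rfl))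
    · exact (hD.disjoint hij).mono (image_subset_range _ _) (image_subset_range _ _)
  · intro B hB hfin hne
    obtain ⟨i, hBi, f, hf⟩ := hD.exists_restrict B hB hfin hne
    obtain ⟨f', hf'F, hf'B⟩ := (h i).2.2.1 _ hBi (hfin.preimage (hD.injective i).injOn) ⟨f, hf⟩
    exact ⟨g i f', mem_iUnion.2 ⟨i, f', hf'F, rfl⟩, hf'B⟩
  · intro e he
    obtain ⟨i, f, hf, rfl⟩ := mem_iUnion.1 he
    obtain ⟨B, hB, hfB⟩ := (h i).2.2.2.1 hf
    exact ⟨g i '' B, mem_iUnion.2 ⟨i, B, hB, rfl⟩, f, hfB, rfl⟩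
  · intro _ hmem
    obtain ⟨i, B, hB, rfl⟩ := mem_iUnion.1 hmem
    rw [hD.iUnion_image_inter_image, ncard_image_of_injective _ (hD.injective i)]
    exact (h i).2.2.2.2 B hB

theorem pairwise_nestedDicuts (hD : D.IsGluing D' g ext)
    (hself : ∀ i Y₁ Y₂, SidesNested Y₁ Y₂ → SidesNested (ext i Y₁) (ext i Y₂))
    (hcross : ∀ i j, i ≠ j → ∀ Y₁ Y₂, SidesNested (ext i Y₁) (ext j Y₂))
    (h : ∀ i, (D' i).NestedOptimalPair (F i) (ℬ i)) :
    (⋃ i, image (g i) '' ℬ i).Pairwise D.NestedDicuts := by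
  intro _ hmem₁ _ hmem₂ hne
  obtain ⟨i, B₁, hB₁, rfl⟩ := mem_iUnion.1 hmem₁
  obtain ⟨j, B₂, hB₂, rfl⟩ := mem_iUnion.1 hmem₂
  obtain rfl | hij := eq_or_ne i j
  · obtain ⟨Y₁, Y₂, hY₁, hY₂, hY⟩ := (h i).2 hB₁ hB₂ fun h => hne (h ▸ rfl)
    exact ⟨_, _, hD.dicutWith i _ _ hY₁, hD.dicutWith i _ _ hY₂, hself i Y₁ Y₂ hY⟩
  · obtain ⟨Y₁, hY₁⟩ := ((h i).1.1 B₁ hB₁).1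
    obtain ⟨Y₂, hY₂⟩ := ((h j).1.1 B₂ hB₂).1
    exact ⟨_, _, hD.dicutWith i _ _ hY₁, hD.dicutWith j _ _ hY₂, hcross i j hij Y₁ Y₂⟩

theorem exists_optimalPair (hD : D.IsGluing D' g ext)
    (h : ∀ i, ∃ F ℬ, (D' i).OptimalPair F ℬ) : ∃ F ℬ, D.OptimalPair F ℬ := by
  choose F ℬ h using h
  exact ⟨_, _, hD.optimalPair h⟩

theorem exists_nestedOptimalPair (hD : D.IsGluing D' g ext)
    (hself : ∀ i Y₁ Y₂, SidesNested Y₁ Y₂ → SidesNested (ext i Y₁) (ext i Y₂))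
    (hcross : ∀ i j, i ≠ j → ∀ Y₁ Y₂, SidesNested (ext i Y₁) (ext j Y₂))
    (h : ∀ i, ∃ F ℬ, (D' i).NestedOptimalPair F ℬ) : ∃ F ℬ, D.NestedOptimalPair F ℬ := by
  choose F ℬ h using h
  exact ⟨_, _, hD.optimalPair fun i => (h i).1, hD.pairwise_nestedDicuts hself hcross h⟩

end IsGluing

section SimQuotient

variable (D)

def simSetoid : Setoid V where
  r := D.Sim
  iseqv := ⟨fun _ _ _ _ _ => Iff.rfl, fun h X B hX hB => (h X B hX hB).symm,
    fun h₁ h₂ X B hX hB => (h₁ X B hX hB).trans (h₂ X B hX hB)⟩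

def simQuotient : MultiDigraph (Quotient D.simSetoid) E where
  tail e := ⟦D.tail e⟧
  head e := ⟦D.head e⟧

variable {D}

theorem simQuotient_dicutWith_iff {Y : Set (Quotient D.simSetoid)} {B : Set E} :
    D.simQuotient.DicutWith Y B ↔ D.DicutWith (Quotient.mk _ ⁻¹' Y) B :=
  Iff.rfl

theorem DicutWith.preimage_mk_image_mk {X : Set V} {B : Set E} (h : D.DicutWith X B)
    (hB : B.Finite) : Quotient.mk D.simSetoid ⁻¹' (Quotient.mk _ '' X) = X :=
  Subset.antisymm (fun _ ⟨_, hx, hxa⟩ => (Quotient.exact hxa X B h hB).1 hx)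
    (subset_preimage_image _ _)

theorem DicutWith.simQuotient {X : Set V} {B : Set E} (h : D.DicutWith X B) (hB : B.Finite) :
    D.simQuotient.DicutWith (Quotient.mk _ '' X) B := by
  rwa [simQuotient_dicutWith_iff, h.preimage_mk_image_mk hB]

theorem WeaklyConnected.simQuotient (h : D.WeaklyConnected) : D.simQuotient.WeaklyConnected := by
  rintro ⟨u⟩ ⟨v⟩
  refine (h u v).lift (Quotient.mk _) fun a b ⟨e, he⟩ => ⟨e, ?_⟩
  rcases he with ⟨rfl, rfl⟩ | ⟨rfl, rfl⟩
  exacts [Or.inl ⟨rfl, rfl⟩, Or.inr ⟨rfl, rfl⟩]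

theorem finitelyDiseparable_simQuotient : D.simQuotient.FinitelyDiseparable := by
  intro p q
  induction p using Quotient.ind with | _ u => ?_
  induction q using Quotient.ind with | _ v => ?_
  intro huv
  have hsim : ¬ D.Sim u v := fun h => huv (Quotient.sound h)
  simp only [Sim, not_forall] at hsim
  obtain ⟨X, B, hX, hB, huv⟩ := hsim
  refine ⟨_, B, hX.simQuotient hB, hB, ?_⟩
  have hmem (a : V) : ⟦a⟧ ∈ Quotient.mk D.simSetoid '' X ↔ a ∈ X :=
    Set.ext_iff.1 (hX.preimage_mk_image_mk hB) a
  rw [hmem, hmem]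
  tauto

theorem isGluing_simQuotient :
    D.IsGluing (fun _ : Unit => D.simQuotient) (fun _ => id) fun _ Y => Quotient.mk _ ⁻¹' Y where
  injective _ := Function.injective_id
  disjoint i j hij := (hij (Subsingleton.elim i j)).elim
  dicutWith _ _ _ h := by rwa [image_id]
  exists_restrict _ := fun ⟨_, hX⟩ hB hne => ⟨(), ⟨_, hX.simQuotient hB⟩, hne⟩

theorem exists_optimalPair_of_simQuotient (h : ∃ F ℬ, D.simQuotient.OptimalPair F ℬ) :
    ∃ F ℬ, D.OptimalPair F ℬ :=
  isGluing_simQuotient.exists_optimalPair fun _ => h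

theorem exists_nestedOptimalPair_of_simQuotient
    (h : ∃ F ℬ, D.simQuotient.NestedOptimalPair F ℬ) : ∃ F ℬ, D.NestedOptimalPair F ℬ :=
  isGluing_simQuotient.exists_nestedOptimalPair (fun _ _ _ hY => hY.preimage _)
    (fun i j hij => (hij (Subsingleton.elim i j)).elim) fun _ => h

end SimQuotient

section RemoveLoops

variable (D)

def removeLoops : MultiDigraph V {e : E // D.tail e ≠ D.head e} where
  tail e := D.tail e
  head e := D.head e

variable {D}

theorem removeLoops_tail_ne_head (e : {e : E // D.tail e ≠ D.head e}) :
    D.removeLoops.tail e ≠ D.removeLoops.head e :=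
  e.2

theorem DicutWith.removeLoops {X : Set V} {B : Set E} (h : D.DicutWith X B) :
    D.removeLoops.DicutWith X (Subtype.val ⁻¹' B) :=
  ⟨fun e => h.1 e, by rw [h.2]; rfl⟩

theorem DicutWith.of_removeLoops {X : Set V} {B : Set {e : E // D.tail e ≠ D.head e}}
    (h : D.removeLoops.DicutWith X B) : D.DicutWith X (Subtype.val '' B) := by
  refine ⟨fun e he => ?_, ?_⟩
  · by_cases hloop : D.tail e = D.head e
    · rwa [← hloop]
    · exact h.1 ⟨e, hloop⟩ he
  · ext e
    refine ⟨?_, fun he => ⟨⟨e, fun hloop => he.1 (hloop ▸ he.2)⟩, by rw [h.2]; exact he, rfl⟩⟩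
    rintro ⟨e, he, rfl⟩
    rw [h.2] at he
    exact he

theorem WeaklyConnected.removeLoops (h : D.WeaklyConnected) : D.removeLoops.WeaklyConnected := by
  intro u v
  induction h u v with
  | refl => rfl
  | @tail b c _ hbc ih =>
    obtain rfl | hne := eq_or_ne b c
    · exact ih
    obtain ⟨e, ⟨rfl, rfl⟩ | ⟨rfl, rfl⟩⟩ := hbc
    exacts [ih.tail ⟨⟨e, hne⟩, Or.inl ⟨rfl, rfl⟩⟩, ih.tail ⟨⟨e, hne.symm⟩, Or.inr ⟨rfl, rfl⟩⟩]

theorem FinitelyDiseparable.removeLoops (h : D.FinitelyDiseparable) :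
    D.removeLoops.FinitelyDiseparable := fun u v huv =>
  let ⟨X, _, hX, hB, hsep⟩ := h u v huv
  ⟨X, _, hX.removeLoops, hB.preimage Subtype.val_injective.injOn, hsep⟩

theorem isGluing_removeLoops :
    D.IsGluing (fun _ : Unit => D.removeLoops) (fun _ => Subtype.val) fun _ Y => Y where
  injective _ := Subtype.val_injective
  disjoint i j hij := (hij (Subsingleton.elim i j)).elim
  dicutWith _ _ _ h := h.of_removeLoops
  exists_restrict _ := fun ⟨_, hX⟩ _ ⟨e, he⟩ =>
    ⟨(), ⟨_, hX.removeLoops⟩, ⟨e, hX.tail_ne_head he⟩, he⟩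

theorem exists_optimalPair_of_removeLoops (h : ∃ F ℬ, D.removeLoops.OptimalPair F ℬ) :
    ∃ F ℬ, D.OptimalPair F ℬ :=
  isGluing_removeLoops.exists_optimalPair fun _ => h

theorem exists_nestedOptimalPair_of_removeLoops
    (h : ∃ F ℬ, D.removeLoops.NestedOptimalPair F ℬ) : ∃ F ℬ, D.NestedOptimalPair F ℬ :=
  isGluing_removeLoops.exists_nestedOptimalPair (fun _ _ _ hY => hY)
    (fun i j hij => (hij (Subsingleton.elim i j)).elim) fun _ => h

end RemoveLoops

section Nonseparable

variable (D)

def Joins (e : E) (a b : V) : Prop :=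
  (D.tail e = a ∧ D.head e = b) ∨ (D.tail e = b ∧ D.head e = a)

def vertsOf (A : Set E) : Set V :=
  {v | ∃ e ∈ A, D.tail e = v ∨ D.head e = v}

def AdjAvoiding (A : Set E) (X : Set V) (a b : V) : Prop :=
  a ∉ X ∧ b ∉ X ∧ ∃ e ∈ A, D.Joins e a b

def Nonseparable (A : Set E) : Prop :=
  ∀ X : Set V, X.Subsingleton → ∀ u ∈ D.vertsOf A, ∀ v ∈ D.vertsOf A, u ∉ X → v ∉ X →
    ReflTransGen (D.AdjAvoiding A X) u v

def IsBlock (A : Set E) : Prop :=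
  A.Nonempty ∧ Maximal D.Nonseparable A

def restrictEdges (A : Set E) : MultiDigraph (D.vertsOf A) A where
  tail e := ⟨D.tail e, e, e.2, Or.inl rfl⟩
  head e := ⟨D.head e, e, e.2, Or.inr rfl⟩

variable {D}

theorem joins_tail_head (e : E) : D.Joins e (D.tail e) (D.head e) :=
  Or.inl ⟨rfl, rfl⟩

theorem Joins.symm {e : E} {a b : V} (h : D.Joins e a b) : D.Joins e b a :=
  Or.symm h

theorem Joins.ne (hl : ∀ e : E, D.tail e ≠ D.head e) {e : E} {a b : V} (h : D.Joins e a b) :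
    a ≠ b := by
  rcases h with ⟨rfl, rfl⟩ | ⟨rfl, rfl⟩
  exacts [hl e, (hl e).symm]

theorem Joins.left_mem_vertsOf {A : Set E} {e : E} (he : e ∈ A) {a b : V} (h : D.Joins e a b) :
    a ∈ D.vertsOf A := by
  rcases h with ⟨rfl, rfl⟩ | ⟨rfl, rfl⟩
  exacts [⟨e, he, Or.inl rfl⟩, ⟨e, he, Or.inr rfl⟩]

theorem Joins.right_mem_vertsOf {A : Set E} {e : E} (he : e ∈ A) {a b : V} (h : D.Joins e a b) :
    b ∈ D.vertsOf A :=
  h.symm.left_mem_vertsOf he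

theorem vertsOf_mono {A A' : Set E} (h : A ⊆ A') : D.vertsOf A ⊆ D.vertsOf A' :=
  fun _ ⟨e, he, hv⟩ => ⟨e, h he, hv⟩

theorem tail_mem_vertsOf {A : Set E} {e : E} (he : e ∈ A) : D.tail e ∈ D.vertsOf A :=
  ⟨e, he, Or.inl rfl⟩

theorem head_mem_vertsOf {A : Set E} {e : E} (he : e ∈ A) : D.head e ∈ D.vertsOf A :=
  ⟨e, he, Or.inr rfl⟩

theorem vertsOf_union (A A' : Set E) : D.vertsOf (A ∪ A') = D.vertsOf A ∪ D.vertsOf A' := by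
  ext v
  simp only [vertsOf, mem_union, mem_ofPred_eq]
  constructor
  · rintro ⟨e, he | he, hv⟩
    exacts [Or.inl ⟨e, he, hv⟩, Or.inr ⟨e, he, hv⟩]
  · rintro (⟨e, he, hv⟩ | ⟨e, he, hv⟩)
    exacts [⟨e, Or.inl he, hv⟩, ⟨e, Or.inr he, hv⟩]

theorem Joins.vertsOf_singleton {e : E} {a b : V} (h : D.Joins e a b) :
    D.vertsOf {e} = {a, b} := by
  ext v
  simp only [vertsOf, mem_singleton_iff, exists_eq_left, mem_insert_iff, mem_ofPred_eq]
  rcases h with ⟨rfl, rfl⟩ | ⟨rfl, rfl⟩ <;> tauto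

theorem DicutWith.mem_of_joins {X : Set V} {B : Set E} (hX : D.DicutWith X B) {e : E} {a b : V}
    (he : D.Joins e a b) (hab : ¬(a ∈ X ↔ b ∈ X)) : e ∈ B := by
  rw [hX.2]
  rcases he with ⟨rfl, rfl⟩ | ⟨rfl, rfl⟩ <;>
  · by_contra hB
    exact hab ⟨fun h => by simp_all [hX.1 e], fun h => by simp_all [hX.1 e]⟩

namespace AdjAvoiding

variable {A A' : Set E} {X X' : Set V} {a b : V}

theorem symm (h : D.AdjAvoiding A X a b) : D.AdjAvoiding A X b a :=
  let ⟨ha, hb, e, he, hab⟩ := h; ⟨hb, ha, e, he, hab.symm⟩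

instance : Std.Symm (D.AdjAvoiding A X) :=
  ⟨fun _ _ => symm⟩

theorem mono (h : D.AdjAvoiding A X a b) (hA : A ⊆ A') (hX : X' ⊆ X) :
    D.AdjAvoiding A' X' a b :=
  let ⟨ha, hb, e, he, hab⟩ := h; ⟨fun h => ha (hX h), fun h => hb (hX h), e, hA he, hab⟩

theorem adj (h : D.AdjAvoiding A X a b) : D.Adj a b :=
  let ⟨_, _, e, _, hab⟩ := h; ⟨e, hab⟩

theorem left_mem_vertsOf (h : D.AdjAvoiding A X a b) : a ∈ D.vertsOf A :=
  let ⟨_, _, _, he, hab⟩ := h; hab.left_mem_vertsOf he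

theorem right_mem_vertsOf (h : D.AdjAvoiding A X a b) : b ∈ D.vertsOf A :=
  h.symm.left_mem_vertsOf

end AdjAvoiding

theorem reflTransGen_adjAvoiding_mono {A A' : Set E} {X X' : Set V} (hA : A ⊆ A') (hX : X' ⊆ X)
    {a b : V} (h : ReflTransGen (D.AdjAvoiding A X) a b) :
    ReflTransGen (D.AdjAvoiding A' X') a b :=
  ReflTransGen.mono (fun _ _ hab => hab.mono hA hX) _ _ h

theorem reflTransGen_adjAvoiding_of_disjoint {A : Set E} {X : Set V}
    (hX : Disjoint X (D.vertsOf A)) {a b : V} (h : ReflTransGen (D.AdjAvoiding A ∅) a b) :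
    ReflTransGen (D.AdjAvoiding A X) a b :=
  ReflTransGen.mono (fun _ _ hab => ⟨disjoint_right.1 hX hab.left_mem_vertsOf,
    disjoint_right.1 hX hab.right_mem_vertsOf, hab.2.2⟩) _ _ h

theorem not_mem_of_reflTransGen_adjAvoiding {A : Set E} {X : Set V} {a b : V}
    (h : ReflTransGen (D.AdjAvoiding A X) a b) (ha : a ∉ X) : b ∉ X := by
  induction h with
  | refl => exact ha
  | tail _ hbc _ => exact hbc.2.1

theorem DicutWith.exists_mem_of_reflTransGen {X : Set V} {B : Set E} (hX : D.DicutWith X B)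
    {A : Set E} {Y : Set V} {a b : V} (h : ReflTransGen (D.AdjAvoiding A Y) a b)
    (hab : ¬(a ∈ X ↔ b ∈ X)) : ∃ e ∈ A, e ∈ B := by
  induction h with
  | refl => exact absurd Iff.rfl hab
  | @tail b c _ hbc ih =>
    by_cases hb : a ∈ X ↔ b ∈ X
    · obtain ⟨-, -, e, he, hjoin⟩ := hbc
      exact ⟨e, he, hX.mem_of_joins hjoin fun h => hab (hb.trans h)⟩
    · exact ih hb

end Nonseparable

section Blocks

theorem Nonseparable.of_forall_exists_reflTransGen {A Q : Set E} (hA : D.Nonseparable A)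
    (hAQ : A ⊆ Q) (h : ∀ X : Set V, X.Subsingleton → ∀ y ∈ D.vertsOf Q, y ∉ X →
      ∃ z ∈ D.vertsOf A, z ∉ X ∧ ReflTransGen (D.AdjAvoiding Q X) y z) :
    D.Nonseparable Q := by
  intro X hX u hu v hv huX hvX
  obtain ⟨z, hz, hzX, huz⟩ := h X hX u hu huX
  obtain ⟨z', hz', hz'X, hvz'⟩ := h X hX v hv hvX
  exact (huz.trans (reflTransGen_adjAvoiding_mono hAQ subset_rfl
    (hA X hX z hz z' hz' hzX hz'X))).trans (symm hvz')

theorem nonseparable_singleton (e : E) : D.Nonseparable {e} := by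
  intro X _ u hu v hv huX hvX
  rw [(joins_tail_head e).vertsOf_singleton] at hu hv
  rcases hu with rfl | rfl <;> rcases hv with rfl | rfl
  · rfl
  · exact .single ⟨huX, hvX, e, rfl, joins_tail_head e⟩
  · exact .single ⟨huX, hvX, e, rfl, (joins_tail_head e).symm⟩
  · rfl

theorem Nonseparable.union {A₁ A₂ : Set E} (h₁ : D.Nonseparable A₁) (h₂ : D.Nonseparable A₂)
    {s t : V} (hst : s ≠ t) (hs : s ∈ D.vertsOf A₁ ∩ D.vertsOf A₂)
    (ht : t ∈ D.vertsOf A₁ ∩ D.vertsOf A₂) : D.Nonseparable (A₁ ∪ A₂) := by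
  refine h₁.of_forall_exists_reflTransGen subset_union_left fun X hX y hy hyX => ?_
  obtain ⟨c, hc, hcX⟩ : ∃ c ∈ D.vertsOf A₁ ∩ D.vertsOf A₂, c ∉ X := by
    by_contra! h
    exact hst (hX (h s hs) (h t ht))
  obtain ⟨e, he | he, hye⟩ := hy
  · exact ⟨y, ⟨e, he, hye⟩, hyX, .refl⟩
  · exact ⟨c, hc.1, hcX, reflTransGen_adjAvoiding_mono subset_union_right subset_rfl
      (h₂ X hX y ⟨e, he, hye⟩ c hc.2 hyX hcX)⟩

theorem nonseparable_sUnion {c : Set (Set E)} (hc : IsChain (· ⊆ ·) c)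
    (h : ∀ A ∈ c, D.Nonseparable A) : D.Nonseparable (⋃₀ c) := by
  rintro X hX u ⟨e, ⟨A₁, hA₁, he⟩, hu⟩ v ⟨f, ⟨A₂, hA₂, hf⟩, hv⟩ huX hvX
  obtain ⟨A, hA, h₁, h₂⟩ := hc.directedOn A₁ hA₁ A₂ hA₂
  exact reflTransGen_adjAvoiding_mono (subset_sUnion_of_mem hA) subset_rfl
    (h A hA X hX u ⟨e, h₁ he, hu⟩ v ⟨f, h₂ hf, hv⟩ huX hvX)

theorem exists_isBlock_mem (e : E) : ∃ A, D.IsBlock A ∧ e ∈ A := by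
  obtain ⟨A, heA, hA⟩ := zorn_subset_nonempty {A | D.Nonseparable A}
    (fun c hcS hc _ => ⟨⋃₀ c, nonseparable_sUnion hc hcS, fun _ => subset_sUnion_of_mem⟩)
    {e} (nonseparable_singleton e)
  exact ⟨A, ⟨⟨e, heA rfl⟩, hA⟩, heA rfl⟩

theorem IsBlock.subset_of_nonseparable {A A' : Set E} (hA : D.IsBlock A)
    (hA' : D.Nonseparable A') {s t : V} (hst : s ≠ t) (hs : s ∈ D.vertsOf A ∩ D.vertsOf A')
    (ht : t ∈ D.vertsOf A ∩ D.vertsOf A') : A' ⊆ A := by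
  rw [hA.2.eq_of_subset (hA.2.1.union hA' hst hs ht) subset_union_left]
  exact subset_union_right

theorem IsBlock.mem_of_tail_mem_of_head_mem {A : Set E} (hA : D.IsBlock A) {e : E}
    (he : D.tail e ≠ D.head e) (ht : D.tail e ∈ D.vertsOf A) (hh : D.head e ∈ D.vertsOf A) :
    e ∈ A :=
  hA.subset_of_nonseparable (nonseparable_singleton e) he ⟨ht, tail_mem_vertsOf rfl⟩
    ⟨hh, head_mem_vertsOf rfl⟩ rfl

theorem IsBlock.vertsOf_inter_subsingleton {A₁ A₂ : Set E} (h₁ : D.IsBlock A₁)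
    (h₂ : D.IsBlock A₂) (hne : A₁ ≠ A₂) : (D.vertsOf A₁ ∩ D.vertsOf A₂).Subsingleton := by
  intro s hs t ht
  by_contra hst
  exact hne ((h₂.subset_of_nonseparable h₁.2.1 hst hs.symm ht.symm).antisymm
    (h₁.subset_of_nonseparable h₂.2.1 hst hs ht))

theorem IsBlock.disjoint (hl : ∀ e : E, D.tail e ≠ D.head e) {A₁ A₂ : Set E} (h₁ : D.IsBlock A₁)
    (h₂ : D.IsBlock A₂) (hne : A₁ ≠ A₂) : Disjoint A₁ A₂ :=
  disjoint_left.2 fun e he₁ he₂ => hl e (h₁.vertsOf_inter_subsingleton h₂ hne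
    ⟨tail_mem_vertsOf he₁, tail_mem_vertsOf he₂⟩ ⟨head_mem_vertsOf he₁, head_mem_vertsOf he₂⟩)

theorem reflTransGen_restrictEdges {A : Set E} {X : Set V} {u v : V}
    (h : ReflTransGen (D.AdjAvoiding A X) u v) (hu : u ∈ D.vertsOf A) (hv : v ∈ D.vertsOf A) :
    ReflTransGen (fun a b : D.vertsOf A => a.1 ∉ X ∧ b.1 ∉ X ∧ (D.restrictEdges A).Adj a b)
      ⟨u, hu⟩ ⟨v, hv⟩ := by
  induction h with
  | refl => rfl
  | tail _ hbc ih =>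
    obtain ⟨hb, hc, e, he, hjoin⟩ := hbc
    refine (ih (hjoin.left_mem_vertsOf he)).tail ⟨hb, hc, ⟨e, he⟩, ?_⟩
    rcases hjoin with ⟨rfl, rfl⟩ | ⟨rfl, rfl⟩
    exacts [Or.inl ⟨rfl, rfl⟩, Or.inr ⟨rfl, rfl⟩]

theorem Nonseparable.underlyingTwoConnected {A : Set E} (hA : D.Nonseparable A) :
    (D.restrictEdges A).UnderlyingTwoConnected := by
  refine ⟨fun u v => ?_, fun x u v hux hvx => ?_⟩
  · exact ReflTransGen.mono (fun _ _ h => h.2.2) _ _ (reflTransGen_restrictEdges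
      (hA ∅ subsingleton_empty u u.2 v v.2 id id) u.2 v.2)
  · have hne {w : D.vertsOf A} (hw : w ≠ x) : w.1 ∉ ({x.1} : Set V) :=
      fun h => hw (Subtype.ext h)
    exact ReflTransGen.mono (fun a b h => ⟨fun hax => h.1 (hax ▸ rfl),
      fun hbx => h.2.1 (hbx ▸ rfl), h.2.2⟩) _ _ (reflTransGen_restrictEdges
      (hA {x.1} subsingleton_singleton u u.2 v v.2 (hne hux) (hne hvx)) u.2 v.2)

theorem DicutWith.restrictEdges {A : Set E} {X : Set V} {B : Set E} (h : D.DicutWith X B) :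
    (D.restrictEdges A).DicutWith (Subtype.val ⁻¹' X) (Subtype.val ⁻¹' B) :=
  ⟨fun e => h.1 e, by rw [h.2]; rfl⟩

theorem FinitelyDiseparable.restrictEdges (hd : D.FinitelyDiseparable) (A : Set E) :
    (D.restrictEdges A).FinitelyDiseparable := fun u v huv =>
  let ⟨_, _, hX, hB, hsep⟩ := hd u v fun h => huv (Subtype.ext h)
  ⟨_, _, hX.restrictEdges, hB.preimage Subtype.val_injective.injOn, hsep⟩

end Blocks

section Paths

/-- `D.PathAvoiding S s w P I`: `P` is the edge set of a path from `s` to `w ≠ s` whose vertices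
other than `s` form the set `I` and lie outside `S`. -/
inductive PathAvoiding (D : MultiDigraph V E) (S : Set V) (s : V) : V → Set E → Set V → Prop
  | single {w : V} {e : E} : w ∉ S → w ≠ s → D.Joins e s w → D.PathAvoiding S s w {e} {w}
  | cons {w w' : V} {P : Set E} {I : Set V} {e : E} : D.PathAvoiding S s w P I → w' ∉ S →
      w' ∉ I → w' ≠ s → D.Joins e w w' → D.PathAvoiding S s w' (insert e P) (insert w' I)

namespace PathAvoiding

variable {S : Set V} {s w : V} {P : Set E} {I : Set V}

theorem last_mem (h : D.PathAvoiding S s w P I) : w ∈ I := by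
  cases h
  exacts [rfl, mem_insert _ _]

theorem disjoint (h : D.PathAvoiding S s w P I) : Disjoint I S := by
  induction h with
  | single hw => exact disjoint_singleton_left.2 hw
  | cons _ hw' _ _ _ ih => exact disjoint_insert_left.2 ⟨hw', ih⟩

theorem finite (h : D.PathAvoiding S s w P I) : I.Finite := by
  induction h with
  | single => exact finite_singleton _
  | cons _ _ _ _ _ ih => exact ih.insert _

theorem vertsOf_eq (h : D.PathAvoiding S s w P I) : D.vertsOf P = insert s I := by
  induction h with
  | single _ _ he => exact he.vertsOf_singleton
  | @cons w w' _ _ _ hp _ _ _ he ih =>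
    rw [insert_eq, vertsOf_union, he.vertsOf_singleton, ih, insert_union, singleton_union,
      insert_comm w, insert_eq_of_mem (mem_insert_of_mem _ hp.last_mem), insert_comm]

theorem tail_eq_head_of_mem_of_mem {a b : V} {P₁ P₂ : Set E} {I₁ I₂ : Set V}
    (h₁ : D.PathAvoiding S s a P₁ I₁) (h₂ : D.PathAvoiding S s b P₂ I₂) (hI : Disjoint I₁ I₂)
    {e : E} (he₁ : e ∈ P₁) (he₂ : e ∈ P₂) : D.tail e = D.head e := by
  have hends {y : V} (hy₁ : y ∈ D.vertsOf P₁) (hy₂ : y ∈ D.vertsOf P₂) : y = s := by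
    rw [h₁.vertsOf_eq] at hy₁
    rw [h₂.vertsOf_eq] at hy₂
    rcases hy₁ with rfl | hy₁
    · rfl
    rcases hy₂ with rfl | hy₂
    · rfl
    exact absurd hI (not_disjoint_iff.2 ⟨y, hy₁, hy₂⟩)
  rw [hends (tail_mem_vertsOf he₁) (tail_mem_vertsOf he₂),
    hends (head_mem_vertsOf he₁) (head_mem_vertsOf he₂)]

theorem reflTransGen_start (h : D.PathAvoiding S s w P I) :
    ∀ y ∈ insert s I, ReflTransGen (D.AdjAvoiding P ∅) y s := by
  induction h with
  | single _ _ he =>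
    rintro y (rfl | rfl)
    exacts [.refl, .single ⟨id, id, _, rfl, he.symm⟩]
  | @cons w w' P I e hp _ _ _ he ih =>
    have hmono {a b : V} : ReflTransGen (D.AdjAvoiding P ∅) a b →
        ReflTransGen (D.AdjAvoiding (insert e P) ∅) a b :=
      reflTransGen_adjAvoiding_mono (subset_insert _ _) subset_rfl
    rintro y (rfl | rfl | hy)
    · rfl
    · exact .head ⟨id, id, _, mem_insert _ _, he.symm⟩
        (hmono (ih _ (mem_insert_of_mem _ hp.last_mem)))
    · exact hmono (ih y (mem_insert_of_mem _ hy))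

theorem reflTransGen_start_or_last (h : D.PathAvoiding S s w P I) (x : V) :
    ∀ y ∈ insert s I, y ≠ x → ReflTransGen (D.AdjAvoiding P {x}) y s ∨
      ReflTransGen (D.AdjAvoiding P {x}) y w := by
  induction h with
  | single =>
    rintro y (rfl | rfl) -
    exacts [Or.inl .refl, Or.inr .refl]
  | @cons w w' P I e hp _ hw'I hw's he ih =>
    have hmono {a b : V} : ReflTransGen (D.AdjAvoiding P {x}) a b →
        ReflTransGen (D.AdjAvoiding (insert e P) {x}) a b :=
      reflTransGen_adjAvoiding_mono (subset_insert _ _) subset_rfl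
    rintro y (rfl | rfl | hy) hyx
    · exact Or.inl .refl
    · exact Or.inr .refl
    obtain rfl | hxw' := eq_or_ne x w'
    · -- the new vertex `x` does not lie on the old path
      refine Or.inl (hmono (reflTransGen_adjAvoiding_of_disjoint ?_
        (hp.reflTransGen_start y (mem_insert_of_mem _ hy))))
      rw [hp.vertsOf_eq, disjoint_singleton_left, mem_insert_iff, not_or]
      exact ⟨hw's, hw'I⟩
    rcases ih y (mem_insert_of_mem _ hy) hyx with hys | hyw
    · exact Or.inl (hmono hys)
    · refine Or.inr ((hmono hyw).tail ⟨not_mem_of_reflTransGen_adjAvoiding hyw hyx,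
        hxw'.symm, e, mem_insert _ _, he⟩)

theorem exists_prefix (h : D.PathAvoiding S s w P I) :
    ∀ v ∈ I, ∃ P' I', D.PathAvoiding S s v P' I' := by
  induction h with
  | single hw hws he =>
    rintro v rfl
    exact ⟨_, _, .single hw hws he⟩
  | cons hp hw' hw'I hw's he ih =>
    rintro v (rfl | hv)
    exacts [⟨_, _, .cons hp hw' hw'I hw's he⟩, ih v hv]

theorem exists_suffix (h : D.PathAvoiding S s w P I) {R : Set V} (hs : s ∈ R) :
    w ∉ R → ∃ z ∈ R, ∃ P' I', I' ⊆ I ∧ Disjoint I' R ∧ D.PathAvoiding S z w P' I' := by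
  induction h with
  | single hw hws he =>
    exact fun hwR => ⟨s, hs, _, _, subset_rfl, disjoint_singleton_left.2 hwR, .single hw hws he⟩
  | @cons w w' P I e hp hw' hw'I hw's he ih =>
    intro hw'R
    by_cases hwR : w ∈ R
    · exact ⟨w, hwR, _, _, singleton_subset_iff.2 (mem_insert _ _),
        disjoint_singleton_left.2 hw'R,
        .single hw' (fun h => hw'I (h ▸ hp.last_mem)) he⟩
    · obtain ⟨z, hz, P', I', hI', hdisj, hp'⟩ := ih hwR
      exact ⟨z, hz, _, _, insert_subset_insert hI', disjoint_insert_left.2 ⟨hw'R, hdisj⟩,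
        .cons hp' hw' (fun h => hw'I (hI' h)) (fun h => hw'R (h ▸ hz)) he⟩

end PathAvoiding

theorem exists_pathAvoiding_of_reflTransGen {S : Set V} {s u w : V}
    (h : ReflTransGen (D.AdjAvoiding univ S) u w) (hu : u = s ∨ ∃ P I, D.PathAvoiding S s u P I) :
    w = s ∨ ∃ P I, D.PathAvoiding S s w P I := by
  induction h with
  | refl => exact hu
  | @tail _ c _ hbc ih =>
    obtain ⟨-, hc, e, -, he⟩ := hbc
    obtain rfl | hcs := eq_or_ne c s
    · exact Or.inl rfl
    refine Or.inr ?_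
    rcases ih with rfl | ⟨P, I, hp⟩
    · exact ⟨_, _, .single hc hcs he⟩
    · by_cases hcI : c ∈ I
      exacts [hp.exists_prefix c hcI, ⟨_, _, .cons hp hc hcI hcs he⟩]

end Paths

section Countability

theorem FinitelyDiseparable.finite_setOf_joins (hd : D.FinitelyDiseparable)
    (hl : ∀ e : E, D.tail e ≠ D.head e) (u v : V) : {e | D.Joins e u v}.Finite := by
  obtain rfl | huv := eq_or_ne u v
  · exact finite_empty.subset fun e he => he.ne hl rfl
  obtain ⟨X, B, hX, hB, hsep⟩ := hd u v huv
  exact hB.subset fun e he => hX.mem_of_joins he (by tauto)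

/-- A finite dicut separating `z` from `v₀` contains, for every target `a`, the edge `v₀a` or an
edge of the path to `a`, and these edges are distinct. -/
theorem FinitelyDiseparable.finite_of_pairwiseDisjoint_paths (hd : D.FinitelyDiseparable)
    {z v₀ : V} (hz : z ≠ v₀) {N : Set V} (hadj : ∀ a ∈ N, D.Adj v₀ a) {I : V → Set V}
    (hpath : ∀ a ∈ N, ∃ P, D.PathAvoiding {v₀} z a P (I a)) (hdisj : N.PairwiseDisjoint I) :
    N.Finite := by
  classical
  obtain ⟨X, B, hX, hB, hsep⟩ := hd z v₀ hz
  choose! P hP using hpath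
  have hsame : {a ∈ N | a ∈ X ↔ z ∈ X}.Finite := by
    refine (hB.image fun f => if D.tail f = v₀ then D.head f else D.tail f).subset ?_
    rintro a ⟨ha, haz⟩
    have hav : a ≠ v₀ := disjoint_left.1 (hP a ha).disjoint (hP a ha).last_mem
    obtain ⟨f, hf⟩ := hadj a ha
    refine ⟨f, hX.mem_of_joins hf (by tauto), ?_⟩
    rcases hf with ⟨h₁, h₂⟩ | ⟨h₁, h₂⟩ <;> simp [h₁, h₂, hav]
  have hother : {a ∈ N | ¬(a ∈ X ↔ z ∈ X)}.Finite := by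
    refine (hB.biUnion fun f hf => (?_ : {a ∈ N | f ∈ P a}.Subsingleton).finite).subset ?_
    · rintro a ⟨ha, haf⟩ b ⟨hb, hbf⟩
      by_contra hne
      exact hX.tail_ne_head hf ((hP a ha).tail_eq_head_of_mem_of_mem (hP b hb) (hdisj ha hb hne)
        haf hbf)
    · rintro a ⟨ha, haz⟩
      obtain ⟨f, hfP, hfB⟩ := hX.exists_mem_of_reflTransGen
        ((hP a ha).reflTransGen_start a (mem_insert_of_mem _ (hP a ha).last_mem)) (by tauto)
      exact mem_biUnion hfB ⟨ha, hfP⟩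
  refine (hsame.union hother).subset fun a ha => ?_
  by_cases h : a ∈ X ↔ z ∈ X
  exacts [Or.inl ⟨ha, h⟩, Or.inr ⟨ha, h⟩]

/-- Apply the Δ-system lemma to the vertex sets of the paths, then cut each path after its last
vertex in the kernel. -/
theorem exists_uncountable_pairwiseDisjoint_paths {S : Set V} {r : V} (hr : r ∉ S) {N : Set V}
    (hN : ¬ N.Countable) (hpath : ∀ a ∈ N, ∃ P I, D.PathAvoiding S r a P I) :
    ∃ z ∉ S, ∃ N' ⊆ N, ¬ N'.Countable ∧ ∃ I : V → Set V,
      (∀ a ∈ N', ∃ P, D.PathAvoiding S z a P (I a)) ∧ N'.PairwiseDisjoint I := by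
  choose! P I hP using hpath
  obtain ⟨R, T, hTN, hT, hR⟩ := exists_uncountable_deltaSystem (fun a => insert r (I a))
    (fun a ha => (hP a ha).finite.insert r) hN
  obtain ⟨a₁, ha₁, a₂, ha₂, ha₁₂⟩ : T.Nontrivial :=
    not_subsingleton_iff.1 fun h => hT h.countable
  have hR₁ : R ⊆ insert r (I a₁) := hR ha₁ ha₂ ha₁₂ ▸ inter_subset_left
  have hRfin : R.Finite := ((hP a₁ (hTN ha₁)).finite.insert r).subset hR₁
  have hrR : r ∈ R := hR ha₁ ha₂ ha₁₂ ▸ ⟨mem_insert _ _, mem_insert _ _⟩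
  have hsuffix (a : V) (ha : a ∈ T \ R) :
      ∃ z ∈ R, ∃ P' I', I' ⊆ I a ∧ Disjoint I' R ∧ D.PathAvoiding S z a P' I' :=
    (hP a (hTN ha.1)).exists_suffix hrR ha.2
  choose! z hzR P' I' hI' hI'R hP' using hsuffix
  have hTR : ¬ (T \ R).Countable := fun h =>
    hT ((h.union hRfin.countable).mono fun a ha => by by_cases a ∈ R <;> simp_all)
  obtain ⟨z₀, hz₀, hN'⟩ := exists_not_countable_fiber hTR hRfin.countable hzR
  refine ⟨z₀, ?_, _, fun a ha => hTN ha.1.1, hN', I', fun a ha => ⟨_, ha.2 ▸ hP' a ha.1⟩, ?_⟩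
  · rcases hR₁ hz₀ with rfl | hz₀
    exacts [hr, disjoint_left.1 (hP a₁ (hTN ha₁)).disjoint hz₀]
  · intro a ha b hb hab
    refine disjoint_left.2 fun y hya hyb => disjoint_left.1 (hI'R a ha.1) hya ?_
    rw [← hR ha.1.1 hb.1.1 hab]
    exact ⟨mem_insert_of_mem _ (hI' a ha.1 hya), mem_insert_of_mem _ (hI' b hb.1 hyb)⟩

theorem IsBlock.countable_setOf_adjAvoiding (hl : ∀ e : E, D.tail e ≠ D.head e)
    (hd : D.FinitelyDiseparable) {A : Set E} (hA : D.IsBlock A) (v₀ : V) :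
    {a | D.AdjAvoiding A ∅ v₀ a}.Countable := by
  by_contra hN
  obtain ⟨r, hr⟩ := Set.Infinite.nonempty fun h => hN h.countable
  have hne {a : V} (ha : D.AdjAvoiding A ∅ v₀ a) : a ≠ v₀ :=
    let ⟨_, _, _, _, he⟩ := ha; (he.ne hl).symm
  have hpath : ∀ a ∈ {a | D.AdjAvoiding A ∅ v₀ a} \ {r}, ∃ P I, D.PathAvoiding {v₀} r a P I := by
    rintro a ⟨ha, har⟩
    have hra := hA.2.1 {v₀} subsingleton_singleton r hr.right_mem_vertsOf a ha.right_mem_vertsOf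
      (hne hr) (hne ha)
    exact (exists_pathAvoiding_of_reflTransGen
      (reflTransGen_adjAvoiding_mono (subset_univ A) subset_rfl hra) (Or.inl rfl)).resolve_left har
  have hN' : ¬ ({a | D.AdjAvoiding A ∅ v₀ a} \ {r}).Countable := fun h =>
    hN ((h.insert r).mono (by rw [insert_sdiff_singleton]; exact subset_insert _ _))
  obtain ⟨z, hz, N, hNsub, hNc, I, hI, hdisj⟩ :=
    exists_uncountable_pairwiseDisjoint_paths (S := {v₀}) (hne hr) hN' hpath
  exact hNc (hd.finite_of_pairwiseDisjoint_paths hz (fun a ha => (hNsub ha).1.adj) hI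
    hdisj).countable

theorem IsBlock.countable_vertsOf (hl : ∀ e : E, D.tail e ≠ D.head e)
    (hd : D.FinitelyDiseparable) {A : Set E} (hA : D.IsBlock A) : (D.vertsOf A).Countable := by
  obtain ⟨e, he⟩ := hA.1
  exact (countable_setOf_reflTransGen (hA.countable_setOf_adjAvoiding hl hd) (D.tail e)).mono
    fun v hv => hA.2.1 ∅ subsingleton_empty _ (tail_mem_vertsOf he) v hv id id

theorem IsBlock.countable (hl : ∀ e : E, D.tail e ≠ D.head e) (hd : D.FinitelyDiseparable)
    {A : Set E} (hA : D.IsBlock A) : A.Countable := by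
  have hV := hA.countable_vertsOf hl hd
  refine (hV.biUnion fun u _ => hV.biUnion fun v _ =>
    (hd.finite_setOf_joins hl u v).countable).mono fun e he => ?_
  exact mem_biUnion (tail_mem_vertsOf he) (mem_biUnion (head_mem_vertsOf he) (joins_tail_head e))

theorem IsBlock.restrictEdges_countable_diseparable_twoConnected
    (hl : ∀ e : E, D.tail e ≠ D.head e) (hd : D.FinitelyDiseparable) {A : Set E}
    (hA : D.IsBlock A) :
    Countable (D.vertsOf A) ∧ Countable A ∧ (D.restrictEdges A).FinitelyDiseparable ∧
      (D.restrictEdges A).UnderlyingTwoConnected :=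
  ⟨(hA.countable_vertsOf hl hd).to_subtype, (hA.countable hl hd).to_subtype,
    hd.restrictEdges A, hA.2.1.underlyingTwoConnected⟩

end Countability

section Projection

variable (D)

def attach (S : Set V) (u : V) : Set V :=
  {s ∈ S | ∃ w, ReflTransGen (D.AdjAvoiding univ S) u w ∧ D.Adj w s}

def AttachesUniquely (S : Set V) : Prop :=
  ∀ u ∉ S, ∃ s, D.attach S u = {s}

open Classical in
noncomputable def proj (S : Set V) (u : V) : V :=
  if u ∈ S then u else if h : (D.attach S u).Nonempty then h.some else u

variable {D} {S : Set V} {u w s : V}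

theorem mem_attach_of_adj (hs : s ∈ S) (h : D.Adj u s) : s ∈ D.attach S u :=
  ⟨hs, u, .refl, h⟩

theorem attach_eq_of_reflTransGen (h : ReflTransGen (D.AdjAvoiding univ S) u w) :
    D.attach S u = D.attach S w :=
  ext fun _ => ⟨fun ⟨hs, v, hv, hadj⟩ => ⟨hs, v, (symm h).trans hv, hadj⟩,
    fun ⟨hs, v, hv, hadj⟩ => ⟨hs, v, h.trans hv, hadj⟩⟩

theorem attach_nonempty (hc : D.WeaklyConnected) (hS : S.Nonempty) (hu : u ∉ S) :
    (D.attach S u).Nonempty := by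
  obtain ⟨s, hs⟩ := hS
  suffices ∀ v, ReflTransGen D.Adj u v →
      (D.attach S u).Nonempty ∨ (v ∉ S ∧ ReflTransGen (D.AdjAvoiding univ S) u v) from
    (this s (hc u s)).resolve_right fun h => h.1 hs
  intro v h
  induction h with
  | refl => exact Or.inr ⟨hu, .refl⟩
  | @tail b c _ hbc ih =>
    rcases ih with h | ⟨hb, hub⟩
    · exact Or.inl h
    by_cases hcS : c ∈ S
    · exact Or.inl ⟨c, hcS, b, hub, hbc⟩
    · obtain ⟨e, he⟩ := hbc
      exact Or.inr ⟨hcS, hub.tail ⟨hb, hcS, e, mem_univ _, he⟩⟩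

theorem proj_of_mem (hu : u ∈ S) : D.proj S u = u :=
  if_pos hu

theorem proj_mem_attach (hS : D.AttachesUniquely S) (hu : u ∉ S) :
    D.proj S u ∈ D.attach S u := by
  obtain ⟨s, hs⟩ := hS u hu
  have hne : (D.attach S u).Nonempty := hs ▸ singleton_nonempty s
  rw [proj, if_neg hu, dif_pos hne]
  exact hne.some_mem

theorem proj_eq_of_mem_attach (hS : D.AttachesUniquely S) (hu : u ∉ S)
    (hs : s ∈ D.attach S u) : D.proj S u = s := by
  obtain ⟨s', hs'⟩ := hS u hu
  have hproj := proj_mem_attach hS hu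
  rw [hs'] at hproj hs
  exact hproj.trans hs.symm

theorem proj_mem (hS : D.AttachesUniquely S) (u : V) : D.proj S u ∈ S := by
  by_cases hu : u ∈ S
  · rwa [proj_of_mem hu]
  · exact (proj_mem_attach hS hu).1

theorem proj_eq_of_reflTransGen (hS : D.AttachesUniquely S) (hu : u ∉ S)
    (h : ReflTransGen (D.AdjAvoiding univ S) u w) : D.proj S u = D.proj S w := by
  refine proj_eq_of_mem_attach hS hu ?_
  rw [attach_eq_of_reflTransGen h]
  exact proj_mem_attach hS (not_mem_of_reflTransGen_adjAvoiding h hu)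

theorem proj_tail_eq_proj_head (hS : D.AttachesUniquely S) {e : E}
    (he : ¬(D.tail e ∈ S ∧ D.head e ∈ S)) : D.proj S (D.tail e) = D.proj S (D.head e) := by
  by_cases ht : D.tail e ∈ S
  · have hh : D.head e ∉ S := fun hh => he ⟨ht, hh⟩
    rw [proj_of_mem ht,
      proj_eq_of_mem_attach hS hh (mem_attach_of_adj ht ⟨e, (joins_tail_head e).symm⟩)]
  by_cases hh : D.head e ∈ S
  · rw [proj_of_mem hh, proj_eq_of_mem_attach hS ht (mem_attach_of_adj hh ⟨e, joins_tail_head e⟩)]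
  exact proj_eq_of_reflTransGen hS ht (.single ⟨ht, hh, e, mem_univ _, joins_tail_head e⟩)

theorem SidesNested.preimage_proj (hS : D.AttachesUniquely S) {Y₁ Y₂ : Set S}
    (h : SidesNested Y₁ Y₂) :
    SidesNested (D.proj S ⁻¹' (Subtype.val '' Y₁)) (D.proj S ⁻¹' (Subtype.val '' Y₂)) := by
  have hcod (Y : Set S) :
      D.proj S ⁻¹' (Subtype.val '' Y) = codRestrict (D.proj S) S (proj_mem hS) ⁻¹' Y :=
    ext fun u => Subtype.val_injective.mem_set_image (a := ⟨_, proj_mem hS u⟩)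
  rw [hcod, hcod]
  exact h.preimage _

/-- Edges of `A` keep their ends under the projection, all other edges are contracted by it. -/
theorem DicutWith.preimage_proj {A : Set E} (hS : D.AttachesUniquely (D.vertsOf A))
    (hind : ∀ e, D.tail e ∈ D.vertsOf A → D.head e ∈ D.vertsOf A → e ∈ A)
    {Y : Set (D.vertsOf A)} {B : Set A} (h : (D.restrictEdges A).DicutWith Y B) :
    D.DicutWith (D.proj (D.vertsOf A) ⁻¹' (Subtype.val '' Y)) (Subtype.val '' B) := by
  have htail {e : E} (he : e ∈ A) : D.proj (D.vertsOf A) (D.tail e) ∈ Subtype.val '' Y ↔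
      (D.restrictEdges A).tail ⟨e, he⟩ ∈ Y := by
    rw [proj_of_mem (tail_mem_vertsOf he)]
    exact Subtype.val_injective.mem_set_image (a := (D.restrictEdges A).tail ⟨e, he⟩)
  have hhead {e : E} (he : e ∈ A) : D.proj (D.vertsOf A) (D.head e) ∈ Subtype.val '' Y ↔
      (D.restrictEdges A).head ⟨e, he⟩ ∈ Y := by
    rw [proj_of_mem (head_mem_vertsOf he)]
    exact Subtype.val_injective.mem_set_image (a := (D.restrictEdges A).head ⟨e, he⟩)
  have hcontract {e : E} (he : e ∉ A) :
      D.proj (D.vertsOf A) (D.tail e) = D.proj (D.vertsOf A) (D.head e) :=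
    proj_tail_eq_proj_head hS fun h => he (hind e h.1 h.2)
  refine ⟨fun e he => ?_, ext fun e => ?_⟩
  · by_cases heA : e ∈ A
    · exact (hhead heA).2 (h.1 ⟨e, heA⟩ ((htail heA).1 he))
    · rwa [mem_preimage, ← hcontract heA]
  · by_cases heA : e ∈ A
    · rw [← Subtype.coe_mk e heA, Subtype.val_injective.mem_set_image, h.2]
      exact and_congr (not_congr (htail heA)).symm (hhead heA).symm
    · refine iff_of_false (fun ⟨f, _, hf⟩ => heA (hf ▸ f.2)) fun h => h.1 ?_
      rw [mem_preimage, hcontract heA]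
      exact h.2

end Projection

section BlockStructure

theorem Nonseparable.union_insert_path {A : Set E} (hA : D.Nonseparable A) {s t w : V}
    {P : Set E} {I : Set V} {e : E} (hp : D.PathAvoiding (D.vertsOf A) s w P I)
    (hs : s ∈ D.vertsOf A) (ht : t ∈ D.vertsOf A) (hst : s ≠ t) (he : D.Joins e w t) :
    D.Nonseparable (A ∪ insert e P) := by
  have hpQ {X : Set V} {a b : V} : ReflTransGen (D.AdjAvoiding P X) a b →
      ReflTransGen (D.AdjAvoiding (A ∪ insert e P) X) a b :=
    reflTransGen_adjAvoiding_mono ((subset_insert _ _).trans subset_union_right) subset_rfl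
  refine hA.of_forall_exists_reflTransGen subset_union_left fun X hX y hy hyX => ?_
  have hyP : y ∈ D.vertsOf A ∨ y ∈ insert s I := by
    rw [vertsOf_union, insert_eq, vertsOf_union, he.vertsOf_singleton, hp.vertsOf_eq] at hy
    rcases hy with hy | (rfl | rfl) | hy
    exacts [Or.inl hy, Or.inr (mem_insert_of_mem _ hp.last_mem), Or.inl ht, Or.inr hy]
  rcases hyP with hyA | hyP
  · exact ⟨y, hyA, hyX, .refl⟩
  obtain rfl | ⟨x, rfl⟩ := hX.eq_empty_or_singleton
  · exact ⟨s, hs, id, hpQ (hp.reflTransGen_start y hyP)⟩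
  obtain rfl | hxt := eq_or_ne x t
  · refine ⟨s, hs, hst, hpQ (reflTransGen_adjAvoiding_of_disjoint ?_ (hp.reflTransGen_start y hyP))⟩
    rw [hp.vertsOf_eq, disjoint_singleton_left, mem_insert_iff, not_or]
    exact ⟨hst.symm, fun h => disjoint_left.1 hp.disjoint h ht⟩
  rcases hp.reflTransGen_start_or_last x y hyP hyX with hys | hyw
  · exact ⟨s, hs, not_mem_of_reflTransGen_adjAvoiding hys hyX, hpQ hys⟩
  · exact ⟨t, ht, hxt.symm, (hpQ hyw).tail ⟨not_mem_of_reflTransGen_adjAvoiding hyw hyX,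
      hxt.symm, e, Or.inr (mem_insert _ _), he⟩⟩

/-- Two attachment vertices would close an ear, contradicting the maximality of the block. -/
theorem IsBlock.attach_subsingleton {A : Set E} (hA : D.IsBlock A) {u : V}
    (hu : u ∉ D.vertsOf A) : (D.attach (D.vertsOf A) u).Subsingleton := by
  rintro s ⟨hs, w₁, huw₁, e₁, he₁⟩ t ⟨ht, w₂, huw₂, e₂, he₂⟩
  by_contra hst
  have hw₁ := not_mem_of_reflTransGen_adjAvoiding huw₁ hu
  have hw₂ := not_mem_of_reflTransGen_adjAvoiding huw₂ hu
  obtain rfl | ⟨P, I, hp⟩ := exists_pathAvoiding_of_reflTransGen ((symm huw₁).trans huw₂)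
    (Or.inr ⟨_, _, .single hw₁ (fun h => hw₁ (h ▸ hs)) (Or.symm he₁)⟩)
  · exact hw₂ hs
  have hQ := hA.2.eq_of_subset (hA.2.1.union_insert_path hp hs ht hst he₂) subset_union_left
  refine disjoint_left.1 hp.disjoint hp.last_mem ?_
  rw [hQ, vertsOf_union]
  exact Or.inr (vertsOf_mono (subset_insert _ _) (hp.vertsOf_eq ▸ mem_insert_of_mem _ hp.last_mem))

theorem IsBlock.attachesUniquely (hc : D.WeaklyConnected) {A : Set E} (hA : D.IsBlock A) :
    D.AttachesUniquely (D.vertsOf A) := fun _ hu =>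
  let ⟨_, he⟩ := hA.1
  let ⟨s, hs⟩ := attach_nonempty hc ⟨_, tail_mem_vertsOf he⟩ hu
  ⟨s, (hA.attach_subsingleton hu).eq_singleton_of_mem hs⟩

theorem reflTransGen_adjAvoiding_exists_mem_or {A : Set E} {X Y : Set V} {u w : V}
    (h : ReflTransGen (D.AdjAvoiding A X) u w) (hu : u ∉ Y) :
    (∃ q ∈ Y, ReflTransGen (D.AdjAvoiding A X) u q) ∨
      (w ∉ Y ∧ ReflTransGen (D.AdjAvoiding A Y) u w) := by
  induction h with
  | refl => exact Or.inr ⟨hu, .refl⟩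
  | @tail b c hub hbc ih =>
    rcases ih with hq | ⟨hb, hub'⟩
    · exact Or.inl hq
    by_cases hc : c ∈ Y
    · exact Or.inl ⟨c, hc, hub.tail hbc⟩
    · exact Or.inr ⟨hc, hub'.tail ⟨hb, hc, hbc.2.2⟩⟩

theorem IsBlock.exists_forall_proj_eq (hl : ∀ e : E, D.tail e ≠ D.head e)
    (hc : D.WeaklyConnected) {A₁ A₂ : Set E} (h₁ : D.IsBlock A₁) (h₂ : D.IsBlock A₂)
    (hne : A₁ ≠ A₂) : ∃ a, ∀ u ∈ D.vertsOf A₂, D.proj (D.vertsOf A₁) u = a := by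
  have hS := h₁.attachesUniquely hc
  have hsub := h₁.vertsOf_inter_subsingleton h₂ hne
  obtain ⟨p, hp₂, hp₁⟩ : ∃ p ∈ D.vertsOf A₂, p ∉ D.vertsOf A₁ := by
    obtain ⟨e, he⟩ := h₂.1
    by_contra! h
    exact hl e (hsub ⟨h _ (tail_mem_vertsOf he), tail_mem_vertsOf he⟩
      ⟨h _ (head_mem_vertsOf he), head_mem_vertsOf he⟩)
  -- `A₂` minus its vertex in `A₁` (if any) stays connected
  have houter (q : V) (hq₂ : q ∈ D.vertsOf A₂) (hq₁ : q ∉ D.vertsOf A₁) :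
      D.proj (D.vertsOf A₁) q = D.proj (D.vertsOf A₁) p := by
    refine (proj_eq_of_reflTransGen hS hp₁ (ReflTransGen.mono (fun a b hab => ?_) _ _
      (h₂.2.1 _ hsub p hp₂ q hq₂ (fun h => hp₁ h.1) fun h => hq₁ h.1))).symm
    exact ⟨fun ha => hab.1 ⟨ha, hab.left_mem_vertsOf⟩,
      fun hb => hab.2.1 ⟨hb, hab.right_mem_vertsOf⟩, hab.2.2.imp fun _ h => ⟨mem_univ _, h.2⟩⟩
  refine ⟨D.proj (D.vertsOf A₁) p, fun c hc₂ => ?_⟩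
  by_cases hc₁ : c ∈ D.vertsOf A₁
  · obtain ⟨f, hf, hcf⟩ := hc₂
    obtain ⟨d, hjoin⟩ : ∃ d, D.Joins f d c := by
      rcases hcf with rfl | rfl
      exacts [⟨_, (joins_tail_head f).symm⟩, ⟨_, joins_tail_head f⟩]
    have hd₁ : d ∉ D.vertsOf A₁ := fun hd₁ =>
      hjoin.ne hl (hsub ⟨hd₁, hjoin.left_mem_vertsOf hf⟩ ⟨hc₁, hjoin.right_mem_vertsOf hf⟩)
    rw [proj_of_mem hc₁, ← houter d (hjoin.left_mem_vertsOf hf) hd₁,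
      proj_eq_of_mem_attach hS hd₁ (mem_attach_of_adj hc₁ ⟨f, hjoin⟩)]
  · exact houter c hc₂ hc₁

theorem IsBlock.exists_forall_proj_eq_or_proj_eq (hl : ∀ e : E, D.tail e ≠ D.head e)
    (hc : D.WeaklyConnected) {A₁ A₂ : Set E} (h₁ : D.IsBlock A₁) (h₂ : D.IsBlock A₂)
    (hne : A₁ ≠ A₂) :
    ∃ a b, ∀ u, D.proj (D.vertsOf A₁) u = a ∨ D.proj (D.vertsOf A₂) u = b := by
  have hS₁ := h₁.attachesUniquely hc
  have hS₂ := h₂.attachesUniquely hc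
  obtain ⟨a, ha⟩ := h₁.exists_forall_proj_eq hl hc h₂ hne
  obtain ⟨b, hb⟩ := h₂.exists_forall_proj_eq hl hc h₁ hne.symm
  refine ⟨a, b, fun u => ?_⟩
  by_cases hu₂ : u ∈ D.vertsOf A₂
  · exact Or.inl (ha u hu₂)
  by_cases hu₁ : u ∈ D.vertsOf A₁
  · exact Or.inr (hb u hu₁)
  -- follow the walk from `u` to its attachment vertex in `A₁` until it meets `A₂`
  obtain ⟨hs₁, w, huw, e, hws⟩ := proj_mem_attach hS₁ hu₁
  rcases reflTransGen_adjAvoiding_exists_mem_or huw hu₂ with ⟨q, hq₂, huq⟩ | ⟨hw₂, huw₂⟩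
  · exact Or.inl ((proj_eq_of_reflTransGen hS₁ hu₁ huq).trans (ha q hq₂))
  by_cases hs₂ : D.proj (D.vertsOf A₁) u ∈ D.vertsOf A₂
  · exact Or.inl ((proj_of_mem hs₁).symm.trans (ha _ hs₂))
  · exact Or.inr ((proj_eq_of_reflTransGen hS₂ hu₂
      (huw₂.tail ⟨hw₂, hs₂, e, mem_univ _, hws⟩)).trans (hb _ hs₁))

theorem isGluing_blocks (hl : ∀ e : E, D.tail e ≠ D.head e) (hc : D.WeaklyConnected) :
    D.IsGluing (fun A : {A // D.IsBlock A} => D.restrictEdges A) (fun _ => Subtype.val)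
      fun A Y => D.proj (D.vertsOf A) ⁻¹' (Subtype.val '' Y) where
  injective _ := Subtype.val_injective
  disjoint A₁ A₂ hne := by
    simpa only [Subtype.range_coe] using A₁.2.disjoint hl A₂.2 (Subtype.coe_ne_coe.2 hne)
  dicutWith A _ _ h := h.preimage_proj (A.2.attachesUniquely hc) fun e =>
    A.2.mem_of_tail_mem_of_head_mem (hl e)
  exists_restrict _ := fun ⟨_, hX⟩ _ ⟨e, he⟩ =>
    let ⟨A, hA, heA⟩ := exists_isBlock_mem e
    ⟨⟨A, hA⟩, ⟨_, hX.restrictEdges⟩, ⟨e, heA⟩, he⟩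

theorem exists_optimalPair_of_isBlock (hl : ∀ e : E, D.tail e ≠ D.head e)
    (hc : D.WeaklyConnected)
    (h : ∀ A, D.IsBlock A → ∃ F ℬ, (D.restrictEdges A).OptimalPair F ℬ) :
    ∃ F ℬ, D.OptimalPair F ℬ :=
  (isGluing_blocks hl hc).exists_optimalPair fun A => h A A.2

theorem exists_nestedOptimalPair_of_isBlock (hl : ∀ e : E, D.tail e ≠ D.head e)
    (hc : D.WeaklyConnected)
    (h : ∀ A, D.IsBlock A → ∃ F ℬ, (D.restrictEdges A).NestedOptimalPair F ℬ) :
    ∃ F ℬ, D.NestedOptimalPair F ℬ := by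
  refine (isGluing_blocks hl hc).exists_nestedOptimalPair
    (fun A _ _ hY => hY.preimage_proj (A.2.attachesUniquely hc)) (fun A₁ A₂ hne _ _ => ?_)
    fun A => h A A.2
  obtain ⟨a, b, hab⟩ := A₁.2.exists_forall_proj_eq_or_proj_eq hl hc A₂.2 (Subtype.coe_ne_coe.2 hne)
  exact sidesNested_preimage_of_forall_or hab _ _

end BlockStructure

end MultiDigraph

universe u v

/-- **Reduction theorem.** If every countable, finitely diseparable digraph
whose underlying multigraph is 2-connected admits an optimal pair, then every
weakly connected digraph admits an optimal pair; likewise for nested optimal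
pairs. -/
theorem reduction_to_countable_diseparable_twoConnected :
    ((∀ (V : Type u) (E : Type v) (D : MultiDigraph V E), Countable V → Countable E →
        D.FinitelyDiseparable → D.UnderlyingTwoConnected →
        ∃ (F : Set E) (ℬ : Set (Set E)), D.OptimalPair F ℬ) →
      ∀ (V : Type u) (E : Type v) (D : MultiDigraph V E), D.WeaklyConnected →
        ∃ (F : Set E) (ℬ : Set (Set E)), D.OptimalPair F ℬ) ∧
    ((∀ (V : Type u) (E : Type v) (D : MultiDigraph V E), Countable V → Countable E →
        D.FinitelyDiseparable → D.UnderlyingTwoConnected →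
        ∃ (F : Set E) (ℬ : Set (Set E)), D.NestedOptimalPair F ℬ) →
      ∀ (V : Type u) (E : Type v) (D : MultiDigraph V E), D.WeaklyConnected →
        ∃ (F : Set E) (ℬ : Set (Set E)), D.NestedOptimalPair F ℬ) := by
  open MultiDigraph in
  refine ⟨fun H V E D hc => ?_, fun H V E D hc => ?_⟩
  · refine exists_optimalPair_of_simQuotient (exists_optimalPair_of_removeLoops ?_)
    refine exists_optimalPair_of_isBlock removeLoops_tail_ne_head hc.simQuotient.removeLoops
      fun A hA => ?_
    obtain ⟨hV, hE, hd, h2⟩ := hA.restrictEdges_countable_diseparable_twoConnected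
      removeLoops_tail_ne_head (finitelyDiseparable_simQuotient (D := D)).removeLoops
    exact H _ _ _ hV hE hd h2
  · refine exists_nestedOptimalPair_of_simQuotient (exists_nestedOptimalPair_of_removeLoops ?_)
    refine exists_nestedOptimalPair_of_isBlock removeLoops_tail_ne_head
      hc.simQuotient.removeLoops fun A hA => ?_
    obtain ⟨hV, hE, hd, h2⟩ := hA.restrictEdges_countable_diseparable_twoConnected
      removeLoops_tail_ne_head (finitelyDiseparable_simQuotient (D := D)).removeLoops
    exact H _ _ _ hV hE hd h2
end

section
/- Let D be a weakly connected digraph and let 𝔅 be a class of finite dibonds of D. Then the following are equivalent: (i) there is a finite edge set F ⊆ E(D) meeting every dibond in 𝔅; (ii) the maximal number of pairwise disjoint dibonds in 𝔅 is finite. Moreover, if 𝔅 is finitely corner-closed, then (i) and (ii) are also equivalent to: (iii) the maximal number of pairwise disjoint and pairwise nested dibonds in 𝔅 is finite. -/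
namespace MultiDigraph

variable {V : Type*} {E : Type*} (D : MultiDigraph V E)

/-- `B` admits a decomposition into pairwise disjoint members of `𝔅`. -/
def DicutDecomposable (𝔅 : Set (Set E)) (B : Set E) : Prop :=
  ∃ 𝒞 : Set (Set E), 𝒞 ⊆ 𝔅 ∧ 𝒞.Pairwise Disjoint ∧ ⋃₀ 𝒞 = B

/-- The meet of two dicuts with in-shores `X₁`, `X₂`: all edges with head in
`X₁ ∩ X₂` and tail outside `X₁ ∩ X₂`. -/
def meetDicut (X₁ X₂ : Set V) : Set E :=
  {e : E | D.tail e ∉ X₁ ∩ X₂ ∧ D.head e ∈ X₁ ∩ X₂}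

/-- The join of two dicuts with in-shores `X₁`, `X₂`: all edges with head in
`X₁ ∪ X₂` and tail outside `X₁ ∪ X₂`. -/
def joinDicut (X₁ X₂ : Set V) : Set E :=
  {e : E | D.tail e ∉ X₁ ∪ X₂ ∧ D.head e ∈ X₁ ∪ X₂}

/-- `𝔅` is finitely corner-closed: for any two members both their meet and
their join admit a decomposition into members of `𝔅`. -/
def FinitelyCornerClosed (𝔅 : Set (Set E)) : Prop :=
  ∀ B₁ ∈ 𝔅, ∀ B₂ ∈ 𝔅, ∀ X₁ X₂ : Set V,
    D.DicutWith X₁ B₁ → D.DicutWith X₂ B₂ →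
      DicutDecomposable 𝔅 (D.meetDicut X₁ X₂) ∧
      DicutDecomposable 𝔅 (D.joinDicut X₁ X₂)

end MultiDigraph

/-!
A finite set `F` meeting every member of `𝔅` bounds the number of pairwise disjoint members by
`|F|`; conversely the union of a largest pairwise disjoint subfamily meets every member of `𝔅`.

For the nested version, take among the pairwise disjoint subfamilies of `𝔅` supported on the
finite edge set `U` of a given one, a family maximising first its size and then
`∑ |X_B ∩ T|²`, where `X_B` is the in-shore of `B` and `T` the set of ends of edges in `U`.
If two of its members with in-shores `X₁`, `X₂` cross, replace them by decompositions of the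
corners `B₁ ∧ B₂` and `B₁ ∨ B₂`, which partition `B₁ ∪ B₂`. Either there are at least three parts,
or the corners themselves are the parts and `|X₁ ∩ T|² + |X₂ ∩ T|²` increases strictly to
`|X₁ ∩ X₂ ∩ T|² + |(X₁ ∪ X₂) ∩ T|²`: crossing shores have incomparable traces on `T`, since in a
weakly connected digraph the in-shore of a non-empty dicut is determined by its trace on the ends
of the edges involved.
-/

open Set

namespace Set

variable {α : Type*}

lemma Pairwise.finite_and_ncard_le_of_inter_nonempty {𝒞 : Set (Set α)} {F : Set α}
    (hd : 𝒞.Pairwise Disjoint) (hF : F.Finite) (h : ∀ C ∈ 𝒞, (F ∩ C).Nonempty) :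
    𝒞.Finite ∧ 𝒞.ncard ≤ F.ncard := by
  rcases 𝒞.eq_empty_or_nonempty with rfl | ⟨C₀, hC₀⟩
  · simp
  have : Nonempty α := ⟨(h C₀ hC₀).some⟩
  choose! f hfF hfC using h
  have hinj : InjOn f 𝒞 := fun C hC C' hC' hCC' => by
    by_contra hne
    exact disjoint_left.1 (hd hC hC' hne) (hfC C hC) (hCC' ▸ hfC C' hC')
  exact ⟨Finite.of_injOn hfF hinj hF, ncard_le_ncard_of_injOn f hfF hinj hF⟩

lemma exists_finite_inter_nonempty_of_bounded {𝔅 : Set (Set α)}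
    (h𝔅 : ∀ B ∈ 𝔅, B.Nonempty ∧ B.Finite) {n : ℕ}
    (hn : ∀ ℬ ⊆ 𝔅, ℬ.Pairwise Disjoint → ℬ.Finite ∧ ℬ.ncard ≤ n) :
    ∃ F : Set α, F.Finite ∧ ∀ B ∈ 𝔅, (F ∩ B).Nonempty := by
  set 𝒦 := {ℬ | ℬ ⊆ 𝔅 ∧ ℬ.Pairwise Disjoint}
  have hbdd : BddAbove (ncard '' 𝒦) := ⟨n, by rintro _ ⟨ℬ, hℬ, rfl⟩; exact (hn ℬ hℬ.1 hℬ.2).2⟩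
  obtain ⟨ℬ, ⟨hℬ𝔅, hℬd⟩, hℬsup⟩ :=
    Nat.sSup_mem (s := ncard '' 𝒦) ⟨0, ∅, ⟨empty_subset _, pairwise_empty _⟩, ncard_empty _⟩ hbdd
  have hℬfin := (hn ℬ hℬ𝔅 hℬd).1
  refine ⟨⋃₀ ℬ, hℬfin.sUnion fun B hB => (h𝔅 B (hℬ𝔅 hB)).2, fun B hB => ?_⟩
  by_contra hdisj
  rw [not_nonempty_iff_eq_empty, ← disjoint_iff_inter_eq_empty, disjoint_sUnion_left] at hdisj
  have hBnot : B ∉ ℬ := fun h => (h𝔅 B hB).1.ne_empty (disjoint_self.1 (hdisj B h))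
  have hins : insert B ℬ ∈ 𝒦 :=
    ⟨insert_subset hB hℬ𝔅, hℬd.insert_of_symm fun C hC _ => (hdisj C hC).symm⟩
  have := le_csSup hbdd (mem_image_of_mem ncard hins)
  rw [ncard_insert_of_notMem hBnot hℬfin, hℬsup] at this
  omega

lemma finite_and_ncard_le_of_forall_finite_subset {s : Set α} {n : ℕ}
    (h : ∀ t ⊆ s, t.Finite → t.ncard ≤ n) : s.Finite ∧ s.ncard ≤ n := by
  have hs : s.Finite := by
    by_contra hinf
    obtain ⟨t, hts, htfin, htcard⟩ := Infinite.exists_subset_ncard_eq hinf (n + 1)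
    have := h t hts htfin
    omega
  exact ⟨hs, h s subset_rfl hs⟩

lemma eq_singleton_sUnion_or_two_le_ncard {𝒞 : Set (Set α)} (h𝒞 : 𝒞.Finite)
    (hne : (⋃₀ 𝒞).Nonempty) : 𝒞 = {⋃₀ 𝒞} ∨ 2 ≤ 𝒞.ncard := by
  rcases Nat.lt_or_ge 𝒞.ncard 2 with h | h
  · have : 0 < 𝒞.ncard := (ncard_pos h𝒞).2 (Nonempty.of_sUnion hne)
    obtain ⟨C, rfl⟩ := ncard_eq_one.1 (by omega : 𝒞.ncard = 1)
    simp
  · exact Or.inr h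

lemma Pairwise.union_of_disjoint_sUnion {𝒞₁ 𝒞₂ : Set (Set α)} (h₁ : 𝒞₁.Pairwise Disjoint)
    (h₂ : 𝒞₂.Pairwise Disjoint) (h : Disjoint (⋃₀ 𝒞₁) (⋃₀ 𝒞₂)) :
    (𝒞₁ ∪ 𝒞₂).Pairwise Disjoint :=
  pairwise_union_of_symm.2 ⟨h₁, h₂, fun _ hC₁ _ hC₂ _ =>
    h.mono (subset_sUnion_of_mem hC₁) (subset_sUnion_of_mem hC₂)⟩

lemma disjoint_of_disjoint_sUnion {𝒞₁ 𝒞₂ : Set (Set α)} (hne : ∀ C ∈ 𝒞₁, C.Nonempty)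
    (h : Disjoint (⋃₀ 𝒞₁) (⋃₀ 𝒞₂)) : Disjoint 𝒞₁ 𝒞₂ :=
  disjoint_left.2 fun C hC₁ hC₂ => (hne C hC₁).ne_empty
    (disjoint_self.1 (h.mono (subset_sUnion_of_mem hC₁) (subset_sUnion_of_mem hC₂)))

lemma Pairwise.disjoint_sUnion_of_mem_diff {ℬ 𝒜 : Set (Set α)} (hℬ : ℬ.Pairwise Disjoint)
    (h𝒜 : 𝒜 ⊆ ℬ) {C : Set α} (hC : C ∈ ℬ \ 𝒜) : Disjoint C (⋃₀ 𝒜) :=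
  disjoint_sUnion_right.2 fun _ hA => hℬ hC.1 (h𝒜 hA) fun h => hC.2 (h ▸ hA)

lemma Pairwise.diff_union_of_sUnion_subset {ℬ 𝒜 𝒟 : Set (Set α)} (hℬ : ℬ.Pairwise Disjoint)
    (h𝒜 : 𝒜 ⊆ ℬ) (h𝒟 : 𝒟.Pairwise Disjoint) (hsub : ⋃₀ 𝒟 ⊆ ⋃₀ 𝒜) :
    (ℬ \ 𝒜 ∪ 𝒟).Pairwise Disjoint :=
  pairwise_union_of_symm.2 ⟨hℬ.mono sdiff_subset, h𝒟, fun _ hC _ hC' _ =>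
    (hℬ.disjoint_sUnion_of_mem_diff h𝒜 hC).mono_right ((subset_sUnion_of_mem hC').trans hsub)⟩

lemma Pairwise.disjoint_diff_of_sUnion_subset {ℬ 𝒜 𝒟 : Set (Set α)}
    (hℬ : ℬ.Pairwise Disjoint) (h𝒜 : 𝒜 ⊆ ℬ) (hne : ∀ C ∈ 𝒟, C.Nonempty)
    (hsub : ⋃₀ 𝒟 ⊆ ⋃₀ 𝒜) : Disjoint (ℬ \ 𝒜) 𝒟 :=
  disjoint_right.2 fun C hC hC' => (hne C hC).ne_empty (disjoint_self.1
    ((hℬ.disjoint_sUnion_of_mem_diff h𝒜 hC').mono_right ((subset_sUnion_of_mem hC).trans hsub)))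

lemma sq_ncard_add_sq_ncard_lt {a b : Set α} (ha : a.Finite) (hb : b.Finite) (hab : ¬a ⊆ b)
    (hba : ¬b ⊆ a) : a.ncard ^ 2 + b.ncard ^ 2 < (a ∩ b).ncard ^ 2 + (a ∪ b).ncard ^ 2 := by
  have hsum := ncard_union_add_ncard_inter a b ha hb
  have hlta : a.ncard < (a ∪ b).ncard := ncard_lt_ncard (ssubset_union_left_iff.2 hba) (ha.union hb)
  have hltb : b.ncard < (a ∪ b).ncard := by
    rw [union_comm] at hlta hsum ⊢
    exact ncard_lt_ncard (ssubset_union_left_iff.2 hab) (hb.union ha)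
  -- `x² + y² - p² - q² = 2 (y - p) (y - q)` when `x + y = p + q`
  nlinarith [mul_pos (Nat.sub_pos_of_lt hlta) (Nat.sub_pos_of_lt hltb)]

noncomputable def cardLexSum (f : α → ℕ) (s : Set α) : ℕ ×ₗ ℕ :=
  toLex (s.ncard, ∑ᶠ a ∈ s, f a)

lemma cardLexSum_union_lt_union {f : α → ℕ} {s t u : Set α} (hs : s.Finite) (ht : t.Finite)
    (hu : u.Finite) (hst : Disjoint s t) (hsu : Disjoint s u)
    (h : cardLexSum f t < cardLexSum f u) : cardLexSum f (s ∪ t) < cardLexSum f (s ∪ u) := by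
  simp only [cardLexSum, Prod.Lex.toLex_lt_toLex] at h ⊢
  rw [ncard_union_eq hst hs ht, ncard_union_eq hsu hs hu, finsum_mem_union hst hs ht,
    finsum_mem_union hsu hs hu]
  omega

lemma cardLexSum_pair_lt_union {f : Set α → ℕ} {a b M J : Set α} (hab : a ≠ b)
    {𝒞₁ 𝒞₂ : Set (Set α)} (h₁ : 𝒞₁.Finite) (h₂ : 𝒞₂.Finite) (hM : ⋃₀ 𝒞₁ = M) (hJ : ⋃₀ 𝒞₂ = J)
    (hMne : M.Nonempty) (hJne : J.Nonempty) (hd : Disjoint 𝒞₁ 𝒞₂)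
    (hf : f a + f b < f M + f J) : cardLexSum f {a, b} < cardLexSum f (𝒞₁ ∪ 𝒞₂) := by
  subst hM hJ
  have hpos₁ : 0 < 𝒞₁.ncard := (ncard_pos h₁).2 (Nonempty.of_sUnion hMne)
  have hpos₂ : 0 < 𝒞₂.ncard := (ncard_pos h₂).2 (Nonempty.of_sUnion hJne)
  simp only [cardLexSum, Prod.Lex.toLex_lt_toLex, ncard_pair hab, finsum_mem_pair hab,
    ncard_union_eq hd h₁ h₂]
  rcases eq_singleton_sUnion_or_two_le_ncard h₁ hMne with e₁ | h₁' <;>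
    rcases eq_singleton_sUnion_or_two_le_ncard h₂ hJne with e₂ | h₂'
  · have hMJ : ⋃₀ 𝒞₁ ≠ ⋃₀ 𝒞₂ := by
      rw [e₁, e₂] at hd
      exact disjoint_singleton.1 hd
    rw [e₁, e₂, singleton_union, finsum_mem_pair hMJ, ← e₁, ← e₂]
    omega
  all_goals omega

end Set

namespace MultiDigraph

variable {V E : Type*} {D : MultiDigraph V E}

lemma _root_.Relation.ReflTransGen.exists_mem_rel_notMem {α : Type*} {r : α → α → Prop}
    {a b : α} {S : Set α} (h : Relation.ReflTransGen r a b) (ha : a ∈ S) (hb : b ∉ S) :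
    ∃ x ∈ S, ∃ y ∉ S, r x y := by
  induction h using Relation.ReflTransGen.head_induction_on with
  | refl => exact absurd ha hb
  | @head a c hac _ ih =>
    by_cases hc : c ∈ S
    · exact ih hc
    · exact ⟨a, ha, c, hc, hac⟩

lemma WeaklyConnected.cutEdges_nonempty (hD : D.WeaklyConnected) {S : Set V} {v w : V}
    (hv : v ∈ S) (hw : w ∉ S) : (D.cutEdges S).Nonempty := by
  obtain ⟨x, hx, y, hy, e, he | he⟩ := (hD v w).exists_mem_rel_notMem hv hw
  · exact ⟨e, Or.inl ⟨he.1 ▸ hx, he.2 ▸ hy⟩⟩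
  · exact ⟨e, Or.inr ⟨he.1 ▸ hy, he.2 ▸ hx⟩⟩

variable {X X₁ X₂ : Set V} {B B₁ B₂ : Set E}

lemma DicutWith.mem_iff (h : D.DicutWith X B) {e : E} : e ∈ B ↔ D.tail e ∉ X ∧ D.head e ∈ X := by
  rw [h.2]
  rfl

lemma DicutWith.nonempty_iff (hD : D.WeaklyConnected) (h : D.DicutWith X B) :
    B.Nonempty ↔ X.Nonempty ∧ Xᶜ.Nonempty := by
  constructor
  · rintro ⟨e, he⟩
    exact ⟨⟨_, (h.mem_iff.1 he).2⟩, ⟨_, (h.mem_iff.1 he).1⟩⟩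
  · rintro ⟨⟨v, hv⟩, ⟨w, hw⟩⟩
    obtain ⟨e, ⟨ht, hh⟩ | ⟨ht, hh⟩⟩ := hD.cutEdges_nonempty hv hw
    · exact absurd (h.1 e ht) hh
    · exact ⟨e, h.mem_iff.2 ⟨ht, hh⟩⟩

lemma DicutWith.subset_of_inter_subset (hD : D.WeaklyConnected) (h₁ : D.DicutWith X₁ B₁)
    (h₂ : D.DicutWith X₂ B₂) (hX₂ : X₂.Nonempty) {T : Set V} (hT₁ : ∀ e ∈ B₁, D.head e ∈ T)
    (hT₂ : ∀ e ∈ B₂, D.tail e ∈ T) (hsub : X₁ ∩ T ⊆ X₂) : X₁ ⊆ X₂ := by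
  intro v hv
  by_contra hv₂
  obtain ⟨w, hw⟩ := hX₂
  obtain ⟨e, ⟨ht, hh⟩ | ⟨ht, hh⟩⟩ :=
    hD.cutEdges_nonempty (S := X₁ \ X₂) ⟨hv, hv₂⟩ fun h => h.2 hw
  · have hh₂ : D.head e ∈ X₂ := by
      by_contra h
      exact hh ⟨h₁.1 e ht.1, h⟩
    exact ht.2 (hsub ⟨ht.1, hT₂ e (h₂.mem_iff.2 ⟨ht.2, hh₂⟩)⟩)
  · have ht₂ : D.tail e ∉ X₂ := fun h => hh.2 (h₂.1 e h)
    have ht₁ : D.tail e ∉ X₁ := fun h => ht ⟨h, ht₂⟩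
    exact hh.2 (hsub ⟨hh.1, hT₁ e (h₁.mem_iff.2 ⟨ht₁, hh.1⟩)⟩)

lemma DicutWith.eq_of_nonempty (hD : D.WeaklyConnected) {Y : Set V} (hX : D.DicutWith X B)
    (hY : D.DicutWith Y B) (hB : B.Nonempty) : X = Y := by
  have key : ∀ {X Y : Set V}, D.DicutWith X B → D.DicutWith Y B → X ⊆ Y := by
    intro X Y hX hY
    refine hX.subset_of_inter_subset (T := D.head '' B ∪ D.tail '' B) hD hY
      ((hY.nonempty_iff hD).1 hB).1 (fun e he => Or.inl ⟨e, he, rfl⟩)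
      (fun e he => Or.inr ⟨e, he, rfl⟩) ?_
    rintro v ⟨hv, ⟨e, he, rfl⟩ | ⟨e, he, rfl⟩⟩
    · exact (hY.mem_iff.1 he).2
    · exact absurd hv (hX.mem_iff.1 he).1
  exact (key hX hY).antisymm (key hY hX)

/-- For a non-dicut `B` this is an arbitrary set. -/
noncomputable def inShore (D : MultiDigraph V E) (B : Set E) : Set V :=
  Classical.epsilon (D.DicutWith · B)

lemma DicutWith.inShore_eq (hD : D.WeaklyConnected) (h : D.DicutWith X B) (hB : B.Nonempty) :
    D.inShore B = X :=
  (Classical.epsilon_spec (p := (D.DicutWith · B)) ⟨X, h⟩).eq_of_nonempty hD h hB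

lemma DicutWith.meet (h₁ : D.DicutWith X₁ B₁) (h₂ : D.DicutWith X₂ B₂) :
    D.DicutWith (X₁ ∩ X₂) (D.meetDicut X₁ X₂) :=
  ⟨fun e he => ⟨h₁.1 e he.1, h₂.1 e he.2⟩, rfl⟩

lemma DicutWith.join (h₁ : D.DicutWith X₁ B₁) (h₂ : D.DicutWith X₂ B₂) :
    D.DicutWith (X₁ ∪ X₂) (D.joinDicut X₁ X₂) :=
  ⟨fun e he => he.imp (h₁.1 e) (h₂.1 e), rfl⟩

lemma DicutWith.meetDicut_union_joinDicut (h₁ : D.DicutWith X₁ B₁) (h₂ : D.DicutWith X₂ B₂) :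
    D.meetDicut X₁ X₂ ∪ D.joinDicut X₁ X₂ = B₁ ∪ B₂ := by
  ext e
  have := h₁.1 e
  have := h₂.1 e
  simp only [meetDicut, joinDicut, mem_union, mem_inter_iff, mem_ofPred_eq, h₁.mem_iff, h₂.mem_iff]
  tauto

lemma DicutWith.disjoint_meetDicut_joinDicut (h₁ : D.DicutWith X₁ B₁) (h₂ : D.DicutWith X₂ B₂)
    (hd : Disjoint B₁ B₂) : Disjoint (D.meetDicut X₁ X₂) (D.joinDicut X₁ X₂) :=
  disjoint_left.2 fun _ ⟨_, hh⟩ ⟨ht, _⟩ => disjoint_left.1 hd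
    (h₁.mem_iff.2 ⟨fun h => ht (Or.inl h), hh.1⟩) (h₂.mem_iff.2 ⟨fun h => ht (Or.inr h), hh.2⟩)

lemma DicutWith.meetDicut_nonempty (hD : D.WeaklyConnected) (h₁ : D.DicutWith X₁ B₁)
    (h₂ : D.DicutWith X₂ B₂) (hB₁ : B₁.Nonempty) (hX : ¬X₁ ⊆ X₂ᶜ) :
    (D.meetDicut X₁ X₂).Nonempty := by
  obtain ⟨v, hv₁, hv₂⟩ := not_subset.1 hX
  exact ((h₁.meet h₂).nonempty_iff hD).2 ⟨⟨v, hv₁, not_not.1 hv₂⟩,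
    ((h₁.nonempty_iff hD).1 hB₁).2.mono (compl_subset_compl.2 inter_subset_left)⟩

lemma DicutWith.joinDicut_nonempty (hD : D.WeaklyConnected) (h₁ : D.DicutWith X₁ B₁)
    (h₂ : D.DicutWith X₂ B₂) (hB₁ : B₁.Nonempty) (hX : ¬X₂ᶜ ⊆ X₁) :
    (D.joinDicut X₁ X₂).Nonempty := by
  obtain ⟨v, hv₂, hv₁⟩ := not_subset.1 hX
  exact ((h₁.join h₂).nonempty_iff hD).2
    ⟨((h₁.nonempty_iff hD).1 hB₁).1.mono subset_union_left, ⟨v, fun h => h.elim hv₁ hv₂⟩⟩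

lemma DicutWith.sq_ncard_inter_add_lt (hD : D.WeaklyConnected) (h₁ : D.DicutWith X₁ B₁)
    (h₂ : D.DicutWith X₂ B₂) (hB₁ : B₁.Nonempty) (hB₂ : B₂.Nonempty) {T : Set V}
    (hT : T.Finite) (hBT : ∀ e ∈ B₁ ∪ B₂, D.tail e ∈ T ∧ D.head e ∈ T) (h₁₂ : ¬X₁ ⊆ X₂)
    (h₂₁ : ¬X₂ ⊆ X₁) :
    (X₁ ∩ T).ncard ^ 2 + (X₂ ∩ T).ncard ^ 2 <
      (X₁ ∩ X₂ ∩ T).ncard ^ 2 + ((X₁ ∪ X₂) ∩ T).ncard ^ 2 := by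
  rw [inter_inter_distrib_right, union_inter_distrib_right]
  refine sq_ncard_add_sq_ncard_lt (hT.inter_of_right _) (hT.inter_of_right _)
    (fun h => h₁₂ ?_) (fun h => h₂₁ ?_)
  · exact h₁.subset_of_inter_subset hD h₂ ((h₂.nonempty_iff hD).1 hB₂).1
      (fun e he => (hBT e (Or.inl he)).2) (fun e he => (hBT e (Or.inr he)).1)
      (h.trans inter_subset_left)
  · exact h₂.subset_of_inter_subset hD h₁ ((h₁.nonempty_iff hD).1 hB₁).1
      (fun e he => (hBT e (Or.inr he)).2) (fun e he => (hBT e (Or.inl he)).1)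
      (h.trans inter_subset_left)

noncomputable def traceWeight (D : MultiDigraph V E) (T : Set V) (B : Set E) : ℕ :=
  (D.inShore B ∩ T).ncard ^ 2

variable {𝔅 : Set (Set E)}

lemma exists_decomposition_cardLexSum_lt (hD : D.WeaklyConnected)
    (h𝔅 : ∀ B ∈ 𝔅, D.IsDicut B ∧ B.Nonempty) (hCC : D.FinitelyCornerClosed 𝔅) {T : Set V}
    (hT : T.Finite) (hB₁ : B₁ ∈ 𝔅) (hB₂ : B₂ ∈ 𝔅) (hfin : (B₁ ∪ B₂).Finite)
    (hBT : ∀ e ∈ B₁ ∪ B₂, D.tail e ∈ T ∧ D.head e ∈ T) (hd : Disjoint B₁ B₂)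
    (hn : ¬D.NestedDicuts B₁ B₂) :
    ∃ 𝒟 ⊆ 𝔅, 𝒟.Finite ∧ 𝒟.Pairwise Disjoint ∧ ⋃₀ 𝒟 = B₁ ∪ B₂ ∧
      cardLexSum (D.traceWeight T) {B₁, B₂} < cardLexSum (D.traceWeight T) 𝒟 := by
  obtain ⟨⟨X₁, h₁⟩, hne₁⟩ := h𝔅 B₁ hB₁
  obtain ⟨⟨X₂, h₂⟩, hne₂⟩ := h𝔅 B₂ hB₂
  have hcross : ¬(X₁ ⊆ X₂ ∨ X₂ ⊆ X₁ ∨ X₁ ⊆ X₂ᶜ ∨ X₂ᶜ ⊆ X₁) := fun h => hn ⟨X₁, X₂, h₁, h₂, h⟩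
  push Not at hcross
  obtain ⟨h₁₂, h₂₁, hmeet, hjoin⟩ := hcross
  obtain ⟨⟨𝒟₁, h𝒟₁, hd₁, hU₁⟩, ⟨𝒟₂, h𝒟₂, hd₂, hU₂⟩⟩ := hCC B₁ hB₁ B₂ hB₂ X₁ X₂ h₁ h₂
  have hMne := h₁.meetDicut_nonempty hD h₂ hne₁ hmeet
  have hJne := h₁.joinDicut_nonempty hD h₂ hne₁ hjoin
  have hMJ : Disjoint (⋃₀ 𝒟₁) (⋃₀ 𝒟₂) := hU₁ ▸ hU₂ ▸ h₁.disjoint_meetDicut_joinDicut h₂ hd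
  have hU : ⋃₀ (𝒟₁ ∪ 𝒟₂) = B₁ ∪ B₂ := by
    rw [sUnion_union, hU₁, hU₂, h₁.meetDicut_union_joinDicut h₂]
  have hfin𝒟 : (𝒟₁ ∪ 𝒟₂).Finite :=
    hfin.finite_subsets.subset fun C hC => hU ▸ subset_sUnion_of_mem hC
  have hB₁₂ : B₁ ≠ B₂ := by
    rintro rfl
    exact hne₁.ne_empty (disjoint_self.1 hd)
  have hweight : D.traceWeight T B₁ + D.traceWeight T B₂ <
      D.traceWeight T (D.meetDicut X₁ X₂) + D.traceWeight T (D.joinDicut X₁ X₂) := by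
    simp only [traceWeight, h₁.inShore_eq hD hne₁, h₂.inShore_eq hD hne₂,
      (h₁.meet h₂).inShore_eq hD hMne, (h₁.join h₂).inShore_eq hD hJne]
    exact h₁.sq_ncard_inter_add_lt hD h₂ hne₁ hne₂ hT hBT h₁₂ h₂₁
  refine ⟨𝒟₁ ∪ 𝒟₂, union_subset h𝒟₁ h𝒟₂, hfin𝒟, hd₁.union_of_disjoint_sUnion hd₂ hMJ, hU, ?_⟩
  exact cardLexSum_pair_lt_union hB₁₂ (hfin𝒟.subset subset_union_left)
    (hfin𝒟.subset subset_union_right) hU₁ hU₂ hMne hJne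
    (disjoint_of_disjoint_sUnion (fun C hC => (h𝔅 C (h𝒟₁ hC)).2) hMJ) hweight

lemma exists_cardLexSum_lt_of_not_pairwise_nested (hD : D.WeaklyConnected)
    (h𝔅 : ∀ B ∈ 𝔅, D.IsDicut B ∧ B.Nonempty) (hCC : D.FinitelyCornerClosed 𝔅) {U : Set E}
    (hU : U.Finite) {T : Set V} (hT : T.Finite) (hUT : ∀ e ∈ U, D.tail e ∈ T ∧ D.head e ∈ T)
    {ℬ : Set (Set E)} (hℬ : ℬ ⊆ 𝔅 ∩ 𝒫 U) (hd : ℬ.Pairwise Disjoint)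
    (hn : ¬ℬ.Pairwise D.NestedDicuts) :
    ∃ ℬ' ⊆ 𝔅 ∩ 𝒫 U, ℬ'.Pairwise Disjoint ∧
      cardLexSum (D.traceWeight T) ℬ < cardLexSum (D.traceWeight T) ℬ' := by
  obtain ⟨B₁, hB₁, B₂, hB₂, hB₁₂, hn⟩ :
      ∃ B₁ ∈ ℬ, ∃ B₂ ∈ ℬ, B₁ ≠ B₂ ∧ ¬D.NestedDicuts B₁ B₂ := by
    simpa [Set.Pairwise] using hn
  have hB₁₂U : B₁ ∪ B₂ ⊆ U := union_subset (hℬ hB₁).2 (hℬ hB₂).2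
  obtain ⟨𝒟, h𝒟𝔅, h𝒟fin, h𝒟d, h𝒟U, hlt⟩ := exists_decomposition_cardLexSum_lt hD h𝔅 hCC hT
    (hℬ hB₁).1 (hℬ hB₂).1 (hU.subset hB₁₂U) (fun e he => hUT e (hB₁₂U he)) (hd hB₁ hB₂ hB₁₂) hn
  have h𝒜 : {B₁, B₂} ⊆ ℬ := insert_subset hB₁ (singleton_subset_iff.2 hB₂)
  have hsub : ⋃₀ 𝒟 ⊆ ⋃₀ {B₁, B₂} := by rw [h𝒟U, sUnion_pair]
  have hne : ∀ C ∈ 𝒟, C.Nonempty := fun C hC => (h𝔅 C (h𝒟𝔅 hC)).2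
  have hℬfin : ℬ.Finite := hU.powerset.subset fun C hC => (hℬ hC).2
  refine ⟨ℬ \ {B₁, B₂} ∪ 𝒟, union_subset (sdiff_subset.trans hℬ) fun C hC =>
      ⟨h𝒟𝔅 hC, (subset_sUnion_of_mem hC).trans (h𝒟U ▸ hB₁₂U)⟩,
    hd.diff_union_of_sUnion_subset h𝒜 h𝒟d hsub, ?_⟩
  conv_lhs => rw [← sdiff_union_of_subset h𝒜]
  exact cardLexSum_union_lt_union hℬfin.sdiff (toFinite _) h𝒟fin disjoint_sdiff_left
    (hd.disjoint_diff_of_sUnion_subset h𝒜 hne hsub) hlt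

theorem exists_pairwise_nested_ncard_le (hD : D.WeaklyConnected)
    (h𝔅 : ∀ B ∈ 𝔅, D.IsDicut B ∧ B.Nonempty) (hCC : D.FinitelyCornerClosed 𝔅)
    {ℬ₀ : Set (Set E)} (h₀ : ℬ₀ ⊆ 𝔅) (hd₀ : ℬ₀.Pairwise Disjoint) (hU : (⋃₀ ℬ₀).Finite) :
    ∃ ℬ ⊆ 𝔅, ℬ.Pairwise Disjoint ∧ ℬ.Pairwise D.NestedDicuts ∧ ℬ₀.ncard ≤ ℬ.ncard := by
  set U := ⋃₀ ℬ₀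
  set T := D.tail '' U ∪ D.head '' U
  have hUT : ∀ e ∈ U, D.tail e ∈ T ∧ D.head e ∈ T := fun e he =>
    ⟨Or.inl (mem_image_of_mem _ he), Or.inr (mem_image_of_mem _ he)⟩
  set 𝒦 := {ℬ | ℬ ⊆ 𝔅 ∩ 𝒫 U ∧ ℬ.Pairwise Disjoint}
  have h𝒦 : 𝒦.Finite :=
    hU.powerset.finite_subsets.subset fun ℬ hℬ => hℬ.1.trans inter_subset_right
  have hℬ₀ : ℬ₀ ∈ 𝒦 := ⟨fun B hB => ⟨h₀ hB, subset_sUnion_of_mem hB⟩, hd₀⟩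
  obtain ⟨ℬ, ⟨hℬ, hd⟩, hmax⟩ := exists_max_image 𝒦 (cardLexSum (D.traceWeight T)) h𝒦 ⟨ℬ₀, hℬ₀⟩
  have hnest : ℬ.Pairwise D.NestedDicuts := by
    by_contra hn
    obtain ⟨ℬ', hℬ', hd', hlt⟩ := exists_cardLexSum_lt_of_not_pairwise_nested hD h𝔅 hCC hU
      ((hU.image _).union (hU.image _)) hUT hℬ hd hn
    exact (hmax ℬ' ⟨hℬ', hd'⟩).not_gt hlt
  refine ⟨ℬ, hℬ.trans inter_subset_left, hd, hnest, ?_⟩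
  have := hmax ℬ₀ hℬ₀
  simp only [cardLexSum, Prod.Lex.toLex_le_toLex] at this
  omega

end MultiDigraph

/-- Let `D` be a weakly connected digraph and `𝔅` a class of finite dibonds of
`D`. Then (i) the existence of a finite edge set meeting every dibond in `𝔅` is
equivalent to (ii) the maximal number of pairwise disjoint dibonds in `𝔅` being
finite; and if `𝔅` is finitely corner-closed, these are also equivalent to
(iii) the maximal number of pairwise disjoint and pairwise nested dibonds in
`𝔅` being finite. -/
theorem finite_Bdijoin_iff_bounded_disjoint_dibonds {V E : Type*}
    (D : MultiDigraph V E) (hD : D.WeaklyConnected)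
    (𝔅 : Set (Set E)) (h𝔅 : ∀ B ∈ 𝔅, D.IsDibond B ∧ B.Finite) :
    ((∃ F : Set E, F.Finite ∧ ∀ B ∈ 𝔅, (F ∩ B).Nonempty) ↔
      (∃ n : ℕ, ∀ ℬ : Set (Set E), ℬ ⊆ 𝔅 → ℬ.Pairwise Disjoint →
        ℬ.Finite ∧ ℬ.ncard ≤ n)) ∧
    (D.FinitelyCornerClosed 𝔅 →
      ((∃ F : Set E, F.Finite ∧ ∀ B ∈ 𝔅, (F ∩ B).Nonempty) ↔
        (∃ n : ℕ, ∀ ℬ : Set (Set E), ℬ ⊆ 𝔅 → ℬ.Pairwise Disjoint →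
          ℬ.Pairwise D.NestedDicuts → ℬ.Finite ∧ ℬ.ncard ≤ n))) := by
  have hi_ii : (∃ F : Set E, F.Finite ∧ ∀ B ∈ 𝔅, (F ∩ B).Nonempty) →
      ∃ n : ℕ, ∀ ℬ ⊆ 𝔅, ℬ.Pairwise Disjoint → ℬ.Finite ∧ ℬ.ncard ≤ n := by
    rintro ⟨F, hF, hFB⟩
    exact ⟨F.ncard, fun ℬ hℬ hd =>
      hd.finite_and_ncard_le_of_inter_nonempty hF fun B hB => hFB B (hℬ hB)⟩
  have hii_i : (∃ n : ℕ, ∀ ℬ ⊆ 𝔅, ℬ.Pairwise Disjoint → ℬ.Finite ∧ ℬ.ncard ≤ n) →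
      ∃ F : Set E, F.Finite ∧ ∀ B ∈ 𝔅, (F ∩ B).Nonempty := fun ⟨_, hn⟩ =>
    exists_finite_inter_nonempty_of_bounded (fun B hB => ⟨(h𝔅 B hB).1.2.1, (h𝔅 B hB).2⟩) hn
  refine ⟨⟨hi_ii, hii_i⟩, fun hCC => ⟨fun h => ?_, fun ⟨n, hn⟩ => hii_i ⟨n, fun ℬ hℬ hd => ?_⟩⟩⟩
  · obtain ⟨n, hn⟩ := hi_ii h
    exact ⟨n, fun ℬ hℬ hd _ => hn ℬ hℬ hd⟩
  · refine finite_and_ncard_le_of_forall_finite_subset fun ℬ₀ hℬ₀ hfin => ?_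
    obtain ⟨ℬ₁, hℬ₁, hd₁, hnest₁, hle⟩ := MultiDigraph.exists_pairwise_nested_ncard_le hD
      (fun B hB => ⟨(h𝔅 B hB).1.1, (h𝔅 B hB).1.2.1⟩) hCC (hℬ₀.trans hℬ) (hd.mono hℬ₀)
      (hfin.sUnion fun B hB => (h𝔅 B (hℬ (hℬ₀ hB))).2)
    exact hle.trans (hn ℬ₁ hℬ₁ hd₁ hnest₁).2
end

section
/- Let D be a weakly connected digraph, let 𝔅 be a class of finite dibonds of D, and let n ∈ ℕ. Suppose that for every finite edge set N ⊆ E(D) there exist an edge set F_N ⊆ N with |F_N| ≤ n meeting every dibond B ∈ 𝔅 with B ⊆ N, and a set ℬ_N of pairwise disjoint (respectively, pairwise disjoint and pairwise nested) dibonds of 𝔅 all contained in N, such that F_N ⊆ ⋃ℬ_N and |F_N ∩ B| = 1 for every B ∈ ℬ_N. Then there exist an edge set F ⊆ E(D) meeting every dibond in 𝔅 and a set ℬ ⊆ 𝔅 of pairwise disjoint (respectively, pairwise disjoint and pairwise nested) dibonds with F ⊆ ⋃ℬ and |F ∩ B| = 1 for every B ∈ ℬ. -/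
open Filter in
/-- Abstract compactness core, parametrised by a subset-monotone property `P`
of families of edge sets. -/
theorem optimalPair_compactness_aux {E : Type*}
    (𝔅 : Set (Set E)) (hfin : ∀ B ∈ 𝔅, B.Finite) (n : ℕ)
    (P : Set (Set E) → Prop) (hP : ∀ s t : Set (Set E), t ⊆ s → P s → P t)
    (h : ∀ N : Set E, N.Finite →
        ∃ (FN : Set E) (ℬN : Set (Set E)),
          FN ⊆ N ∧ FN.ncard ≤ n ∧
          (∀ B ∈ 𝔅, B ⊆ N → (FN ∩ B).Nonempty) ∧
          ℬN ⊆ 𝔅 ∧ (∀ B ∈ ℬN, B ⊆ N) ∧ P ℬN ∧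
          FN ⊆ ⋃₀ ℬN ∧ ∀ B ∈ ℬN, (FN ∩ B).ncard = 1) :
    ∃ (F : Set E) (ℬ : Set (Set E)),
      (∀ B ∈ 𝔅, (F ∩ B).Nonempty) ∧
      ℬ ⊆ 𝔅 ∧ P ℬ ∧
      F ⊆ ⋃₀ ℬ ∧ ∀ B ∈ ℬ, (F ∩ B).ncard = 1 := by
  classical
  choose FN ℬN hFNsub hFNcard hFNmeet hℬN𝔅 hℬNsub hℬNP hFNcov hFNone using
    fun N : Finset E => h (↑N) N.finite_toSet
  haveI : (atTop : Filter (Finset E)).NeBot := atTop_neBot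
  set U : Ultrafilter (Finset E) := Ultrafilter.of atTop with hU
  have hUle : (U : Filter (Finset E)) ≤ atTop := Ultrafilter.of_le atTop
  set F : Set E := {e | {N : Finset E | e ∈ FN N} ∈ U} with hFdef
  -- any finite subset of `F` is realised inside a single `FN N`
  have hrealise : ∀ t : Finset E, ↑t ⊆ F → ∃ N : Finset E, (↑t : Set E) ⊆ FN N := by
    intro t ht
    have hmem : (⋂ e ∈ t, {N : Finset E | e ∈ FN N}) ∈ U :=
      (Filter.biInter_mem t.finite_toSet).mpr fun e he => ht he
    obtain ⟨N, hN⟩ := U.nonempty_of_mem hmem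
    exact ⟨N, fun e he => Set.mem_iInter₂.mp hN e he⟩
  -- `F` is finite
  have hFfin : F.Finite := by
    by_contra hinf
    obtain ⟨t, hts, htc⟩ := Set.Infinite.exists_subset_card_eq hinf (n + 1)
    obtain ⟨N, hN⟩ := hrealise t hts
    have hfinN : (FN N).Finite := N.finite_toSet.subset (hFNsub N)
    have hle := Set.ncard_le_ncard hN hfinN
    rw [Set.ncard_coe_finset, htc] at hle
    have := hFNcard N
    omega
  -- `F` meets every member of `𝔅`
  have hFmeet : ∀ B ∈ 𝔅, (F ∩ B).Nonempty := by
    intro B hB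
    have hBfin : B.Finite := hfin B hB
    have hbig : {N : Finset E | B ⊆ ↑N} ∈ U := by
      refine hUle (mem_atTop_sets.mpr ⟨hBfin.toFinset, fun N hN => ?_⟩)
      intro e he
      exact hN (hBfin.mem_toFinset.mpr he)
    have hun : (⋃ e ∈ B, {N : Finset E | e ∈ FN N}) ∈ U := by
      refine Filter.mem_of_superset hbig ?_
      intro N hN
      obtain ⟨e, heF, heB⟩ := hFNmeet N B hB hN
      exact Set.mem_biUnion heB heF
    obtain ⟨e, heB, heU⟩ := (Ultrafilter.finite_biUnion_mem_iff hBfin).mp hun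
    exact ⟨e, heU, heB⟩
  -- pick one `N` realising all of `F`; restrict `ℬN N` to members meeting `F`
  obtain ⟨N, hN⟩ := hrealise hFfin.toFinset (by simp)
  rw [hFfin.coe_toFinset] at hN
  refine ⟨F, {B ∈ ℬN N | (F ∩ B).Nonempty}, hFmeet, ?_, ?_, ?_, ?_⟩
  · exact fun B hB => hℬN𝔅 N hB.1
  · exact hP (ℬN N) _ (Set.sep_subset _ _) (hℬNP N)
  · intro e he
    obtain ⟨B, hBmem, heB⟩ := hFNcov N (hN he)
    exact ⟨B, ⟨hBmem, ⟨e, he, heB⟩⟩, heB⟩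
  · rintro B ⟨hBmem, hBne⟩
    obtain ⟨a, ha⟩ := Set.ncard_eq_one.mp (hFNone N B hBmem)
    have hsub : F ∩ B ⊆ {a} := by
      rw [← ha]
      exact Set.inter_subset_inter_left B hN
    rw [(Set.Nonempty.subset_singleton_iff hBne).mp hsub]
    exact Set.ncard_singleton a

/-- **Compactness lemma.** Let `D` be a weakly connected digraph, `𝔅` a class
of finite dibonds of `D` and `n ∈ ℕ`. If for every finite edge set `N` there
are `F_N ⊆ N` with `|F_N| ≤ n` meeting every dibond of `𝔅` contained in `N`,
and a set `ℬ_N` of pairwise disjoint (respectively, additionally pairwise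
nested) dibonds of `𝔅` contained in `N` with `F_N ⊆ ⋃ ℬ_N` and `|F_N ∩ B| = 1`
for all `B ∈ ℬ_N`, then `D` admits a corresponding pair `(F, ℬ)` globally. -/
theorem optimalPair_of_bounded_local_pairs {V E : Type*}
    (D : MultiDigraph V E) (hD : D.WeaklyConnected)
    (𝔅 : Set (Set E)) (h𝔅 : ∀ B ∈ 𝔅, D.IsDibond B ∧ B.Finite) (n : ℕ) :
    ((∀ N : Set E, N.Finite →
        ∃ (FN : Set E) (ℬN : Set (Set E)),
          FN ⊆ N ∧ FN.ncard ≤ n ∧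
          (∀ B ∈ 𝔅, B ⊆ N → (FN ∩ B).Nonempty) ∧
          ℬN ⊆ 𝔅 ∧ (∀ B ∈ ℬN, B ⊆ N) ∧ ℬN.Pairwise Disjoint ∧
          FN ⊆ ⋃₀ ℬN ∧ ∀ B ∈ ℬN, (FN ∩ B).ncard = 1) →
      ∃ (F : Set E) (ℬ : Set (Set E)),
        (∀ B ∈ 𝔅, (F ∩ B).Nonempty) ∧
        ℬ ⊆ 𝔅 ∧ ℬ.Pairwise Disjoint ∧
        F ⊆ ⋃₀ ℬ ∧ ∀ B ∈ ℬ, (F ∩ B).ncard = 1) ∧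
    ((∀ N : Set E, N.Finite →
        ∃ (FN : Set E) (ℬN : Set (Set E)),
          FN ⊆ N ∧ FN.ncard ≤ n ∧
          (∀ B ∈ 𝔅, B ⊆ N → (FN ∩ B).Nonempty) ∧
          ℬN ⊆ 𝔅 ∧ (∀ B ∈ ℬN, B ⊆ N) ∧ ℬN.Pairwise Disjoint ∧
          ℬN.Pairwise D.NestedDicuts ∧
          FN ⊆ ⋃₀ ℬN ∧ ∀ B ∈ ℬN, (FN ∩ B).ncard = 1) →
      ∃ (F : Set E) (ℬ : Set (Set E)),
        (∀ B ∈ 𝔅, (F ∩ B).Nonempty) ∧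
        ℬ ⊆ 𝔅 ∧ ℬ.Pairwise Disjoint ∧ ℬ.Pairwise D.NestedDicuts ∧
        F ⊆ ⋃₀ ℬ ∧ ∀ B ∈ ℬ, (F ∩ B).ncard = 1) := by
  have hfin : ∀ B ∈ 𝔅, B.Finite := fun B hB => (h𝔅 B hB).2
  constructor
  · intro hyp
    obtain ⟨F, ℬ, h1, h2, h3, h4, h5⟩ :=
      optimalPair_compactness_aux 𝔅 hfin n (fun s => s.Pairwise Disjoint)
        (fun s t hts hs => hs.mono hts) hyp
    exact ⟨F, ℬ, h1, h2, h3, h4, h5⟩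
  · intro hyp
    have hyp' : ∀ N : Set E, N.Finite →
        ∃ (FN : Set E) (ℬN : Set (Set E)),
          FN ⊆ N ∧ FN.ncard ≤ n ∧
          (∀ B ∈ 𝔅, B ⊆ N → (FN ∩ B).Nonempty) ∧
          ℬN ⊆ 𝔅 ∧ (∀ B ∈ ℬN, B ⊆ N) ∧
          (ℬN.Pairwise Disjoint ∧ ℬN.Pairwise D.NestedDicuts) ∧
          FN ⊆ ⋃₀ ℬN ∧ ∀ B ∈ ℬN, (FN ∩ B).ncard = 1 := by
      intro N hNf
      obtain ⟨FN, ℬN, a1, a2, a3, a4, a5, a6, a7, a8, a9⟩ := hyp N hNf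
      exact ⟨FN, ℬN, a1, a2, a3, a4, a5, ⟨a6, a7⟩, a8, a9⟩
    obtain ⟨F, ℬ, h1, h2, h3, h4, h5⟩ :=
      optimalPair_compactness_aux 𝔅 hfin n
        (fun s => s.Pairwise Disjoint ∧ s.Pairwise D.NestedDicuts)
        (fun s t hts hs => ⟨hs.1.mono hts, hs.2.mono hts⟩) hyp'
    exact ⟨F, ℬ, h1, h2, h3.1, h3.2, h4, h5⟩
end

section
/- Let D be a weakly connected digraph and let e be an edge of D that lies in infinitely many finite dibonds of D. Then there is an infinite dibond of D containing e. -/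
/-!
Fix a non-principal ultrafilter `𝒰` on the infinitely many finite dibonds containing `e`,
with chosen in-shores `X_B`. The `𝒰`-limit of the in-shores is again the in-shore of a dicut,
namely the `𝒰`-limit of the dibonds, and this dicut contains `e`. Inside it sits a dibond
`B₀ ∋ e`: let `Y` be the component of `tail e` outside the limit shore and take as new in-shore
the component of `head e` outside `Y`; both sides of the resulting dicut are connected.
If `B₀` were finite, `𝒰`-almost every dibond `B` would contain `B₀` and so equal it by
minimality, which a non-principal ultrafilter forbids.
-/

namespace MultiDigraph

variable {V E : Type*} (D : MultiDigraph V E)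

/-- The subgraph induced on `S` is connected or empty. -/
def PreconnectedOn (S : Set V) : Prop :=
  ∀ p : V → Prop,
    (∀ f, D.tail f ∈ S → D.head f ∈ S → (p (D.tail f) ↔ p (D.head f))) →
      ∀ u ∈ S, ∀ v ∈ S, p u ↔ p v

/-- The component of `v` in the subgraph induced on `S`; it is `{v}` when `v ∉ S`. -/
def componentIn (S : Set V) (v : V) : Set V :=
  {w | Relation.ReflTransGen (fun a b => a ∈ S ∧ b ∈ S ∧ D.Adj a b) v w}

lemma adj_tail_head (f : E) : D.Adj (D.tail f) (D.head f) :=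
  ⟨f, .inl ⟨rfl, rfl⟩⟩

variable {D}

lemma Adj.symm {u v : V} (h : D.Adj u v) : D.Adj v u :=
  let ⟨f, hf⟩ := h
  ⟨f, hf.symm⟩

lemma iff_of_adj {S : Set V} {p : V → Prop}
    (hp : ∀ f, D.tail f ∈ S → D.head f ∈ S → (p (D.tail f) ↔ p (D.head f)))
    {a b : V} (ha : a ∈ S) (hb : b ∈ S) (hab : D.Adj a b) : p a ↔ p b := by
  obtain ⟨f, ⟨rfl, rfl⟩ | ⟨rfl, rfl⟩⟩ := hab
  · exact hp f ha hb
  · exact (hp f hb ha).symm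

lemma WeaklyConnected.preconnectedOn_univ (hD : D.WeaklyConnected) :
    D.PreconnectedOn Set.univ := by
  rintro p hp u - v -
  induction hD u v with
  | refl => rfl
  | tail _ hab ih => exact ih.trans (iff_of_adj hp trivial trivial hab)

section componentIn

variable {S : Set V} {v : V}

lemma mem_componentIn_self : v ∈ D.componentIn S v :=
  .refl

lemma componentIn_subset (hv : v ∈ S) : D.componentIn S v ⊆ S := fun w hw => by
  rcases hw.cases_tail with rfl | ⟨_, -, -, hw, -⟩
  exacts [hv, hw]

lemma mem_componentIn_of_adj (hv : v ∈ S) {a b : V} (ha : a ∈ D.componentIn S v) (hb : b ∈ S)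
    (hab : D.Adj a b) : b ∈ D.componentIn S v :=
  Relation.ReflTransGen.tail ha ⟨componentIn_subset hv ha, hb, hab⟩

lemma preconnectedOn_componentIn (hv : v ∈ S) : D.PreconnectedOn (D.componentIn S v) := by
  intro p hp
  suffices h : ∀ w ∈ D.componentIn S v, p v ↔ p w from
    fun a ha b hb => (h a ha).symm.trans (h b hb)
  intro w hw
  induction hw with
  | refl => rfl
  | tail ha hab ih =>
    exact ih.trans (iff_of_adj hp ha (mem_componentIn_of_adj hv ha hab.2.1 hab.2.2) hab.2.2)

lemma preconnectedOn_compl_componentIn (hD : D.WeaklyConnected) {Y : Set V}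
    (hY : D.PreconnectedOn Y) {y : V} (hy : y ∈ Y) (hv : v ∉ Y) :
    D.PreconnectedOn (D.componentIn Yᶜ v)ᶜ := by
  set C := D.componentIn Yᶜ v
  intro p hp
  have hYC : Y ⊆ Cᶜ := fun w hw hwC => componentIn_subset hv hwC hw
  have hpY : ∀ u ∈ Y, p u ↔ p y :=
    fun u hu => hY p (fun f ht hh => hp f (hYC ht) (hYC hh)) u hu y hy
  have hCY : ∀ a b, a ∈ C → b ∉ C → D.Adj a b → b ∈ Y :=
    fun a b ha hb hab => by_contra fun h => hb (mem_componentIn_of_adj hv ha h hab)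
  suffices h : ∀ u ∉ C, p u ↔ p y from fun a ha b hb => (h a ha).trans (h b hb).symm
  -- an edge from `C` to `Cᶜ` ends in `Y`, where `p` agrees with `p y`
  have hq : ∀ f : E,
      (D.tail f ∉ C → (p (D.tail f) ↔ p y)) ↔ (D.head f ∉ C → (p (D.head f) ↔ p y)) := by
    intro f
    by_cases ht : D.tail f ∈ C <;> by_cases hh : D.head f ∈ C
    · simp [ht, hh]
    · simp [ht, hh, hpY _ (hCY _ _ ht hh (D.adj_tail_head f))]
    · simp [ht, hh, hpY _ (hCY _ _ hh ht (D.adj_tail_head f).symm)]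
    · simp [ht, hh, hp f ht hh]
  intro u hu
  exact (hD.preconnectedOn_univ (fun x => x ∉ C → (p x ↔ p y)) (fun f _ _ => hq f) y trivial u
    trivial).mp (fun _ => Iff.rfl) hu

end componentIn

lemma DicutWith.notMem_of_iff {X : Set V} {B : Set E} (hXB : D.DicutWith X B) {f : E}
    (hf : D.tail f ∈ X ↔ D.head f ∈ X) : f ∉ B := by
  rw [hXB.2]
  exact fun h => h.1 (hf.mpr h.2)

lemma isDibond_of_preconnectedOn {X : Set V} {B : Set E} (hXB : D.DicutWith X B)
    (hB : B.Nonempty) (hX : D.PreconnectedOn X) (hXc : D.PreconnectedOn Xᶜ) : D.IsDibond B := by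
  refine ⟨⟨X, hXB⟩, hB, ?_⟩
  rintro B' ⟨X', hX'B'⟩ ⟨f, hf⟩ hB'B
  have hinv : ∀ g ∉ B, D.tail g ∈ X' ↔ D.head g ∈ X' := fun g hg =>
    ⟨hX'B'.1 g, fun hh => by_contra fun ht => hg (hB'B (hX'B'.2 ▸ ⟨ht, hh⟩))⟩
  have hfB := hB'B hf
  rw [hXB.2] at hfB
  rw [hX'B'.2] at hf
  -- membership in `X'` is constant on `X` and on `Xᶜ`, since no edge outside `B` crosses `X'`
  have hX'X : X' = X := by
    ext w
    by_cases hw : w ∈ X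
    · refine iff_of_true ?_ hw
      exact (hX (· ∈ X') (fun g ht hh => hinv g (hXB.notMem_of_iff (iff_of_true ht hh)))
        _ hfB.2 w hw).mp hf.2
    · refine iff_of_false ?_ hw
      exact (hXc (· ∈ X') (fun g ht hh => hinv g (hXB.notMem_of_iff (iff_of_false ht hh)))
        _ hfB.1 w hw).not.mp hf.1
  rw [hX'B'.2, hXB.2, hX'X]

lemma exists_isDibond_subset_of_dicutWith (hD : D.WeaklyConnected) {X : Set V} {B : Set E}
    (hXB : D.DicutWith X B) {e : E} (he : e ∈ B) :
    ∃ B₀ ⊆ B, D.IsDibond B₀ ∧ e ∈ B₀ := by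
  obtain ⟨hX, rfl⟩ := hXB
  obtain ⟨het, heh⟩ := he
  set Y := D.componentIn Xᶜ (D.tail e)
  set X₀ := D.componentIn Yᶜ (D.head e)
  have hYX : Y ⊆ Xᶜ := componentIn_subset het
  have hhY : D.head e ∉ Y := fun h => hYX h heh
  have hX₀Y : X₀ ⊆ Yᶜ := componentIn_subset hhY
  have hX₀ : ∀ f, D.tail f ∈ X₀ → D.head f ∈ X₀ := fun f hf =>
    mem_componentIn_of_adj hhY hf (fun hY => hX₀Y hf
      (mem_componentIn_of_adj het hY (fun h => hYX hY (hX f h)) (D.adj_tail_head f).symm))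
      (D.adj_tail_head f)
  refine ⟨{f | D.tail f ∉ X₀ ∧ D.head f ∈ X₀}, ?_, ?_, ?_⟩
  · rintro f ⟨ht, hh⟩
    have htY : D.tail f ∈ Y :=
      by_contra fun h => ht (mem_componentIn_of_adj hhY hh h (D.adj_tail_head f).symm)
    exact ⟨hYX htY, by_contra fun h => hX₀Y hh (mem_componentIn_of_adj het htY h
      (D.adj_tail_head f))⟩
  · exact isDibond_of_preconnectedOn ⟨hX₀, rfl⟩
      ⟨e, fun h => hX₀Y h mem_componentIn_self, mem_componentIn_self⟩
      (preconnectedOn_componentIn hhY)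
      (preconnectedOn_compl_componentIn hD (preconnectedOn_componentIn het)
        mem_componentIn_self hhY)
  · exact ⟨fun h => hX₀Y h mem_componentIn_self, mem_componentIn_self⟩

lemma dicutWith_ultrafilterLimit {ι : Type*} {X : ι → Set V} {B : ι → Set E}
    (h : ∀ i, D.DicutWith (X i) (B i)) (𝒰 : Ultrafilter ι) :
    D.DicutWith {v | ∀ᶠ i in 𝒰, v ∈ X i} {f | ∀ᶠ i in 𝒰, f ∈ B i} := by
  refine ⟨fun f hf => hf.mono fun i hi => (h i).1 f hi, ?_⟩
  have hB : ∀ f i, f ∈ B i ↔ D.tail f ∉ X i ∧ D.head f ∈ X i := fun f i => by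
    rw [(h i).2]
    rfl
  ext f
  simp only [Set.mem_ofPred_eq, hB, Filter.eventually_and, Ultrafilter.eventually_not]

end MultiDigraph

/-- If an edge `e` of a weakly connected digraph lies in infinitely many finite
dibonds, then `e` lies in an infinite dibond. -/
theorem infinite_dibond_of_infinitely_many_finite_dibonds {V E : Type*}
    (D : MultiDigraph V E) (hD : D.WeaklyConnected) (e : E)
    (h : {B : Set E | D.IsDibond B ∧ B.Finite ∧ e ∈ B}.Infinite) :
    ∃ B : Set E, D.IsDibond B ∧ B.Infinite ∧ e ∈ B := by
  set T := {B : Set E | D.IsDibond B ∧ B.Finite ∧ e ∈ B}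
  have : Infinite T := h.to_subtype
  let 𝒰 : Ultrafilter T := Filter.hyperfilter T
  choose X hX using fun B : T => B.2.1.1
  obtain ⟨B₀, hB₀, hdib, he⟩ := MultiDigraph.exists_isDibond_subset_of_dicutWith hD
    (MultiDigraph.dicutWith_ultrafilterLimit hX 𝒰) (.of_forall fun B => B.2.2.2)
  refine ⟨B₀, hdib, fun hfin => ?_, he⟩
  have hsub : ∀ᶠ B : T in 𝒰, B₀ ⊆ B :=
    (Filter.eventually_all_finite hfin).mpr fun f hf => hB₀ hf
  have heq : ∀ᶠ B : T in 𝒰, (B : Set E) = B₀ :=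
    hsub.mono fun B hB => (B.2.1.2.2 B₀ hdib.1 hdib.2.1 hB).symm
  exact Filter.notMem_hyperfilter_of_finite
    (Set.Subsingleton.finite fun B hB B' hB' => Subtype.ext (hB.trans hB'.symm)) heq
end

section
/- Every 2-block of a finitely separable graph has countably many vertices. -/
namespace SimpleGraph

variable {V : Type*} (G : SimpleGraph V)

/-- The cut of `G` with side `X`: all edges with one end in `X` and the other
outside `X`. -/
def cutEdgeSet (X : Set V) : Set (Sym2 V) :=
  {e : Sym2 V | ∃ a b : V, G.Adj a b ∧ e = s(a, b) ∧ a ∈ X ∧ b ∉ X}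

/-- `G` is finitely separable: any two distinct vertices are separated by a
finite cut. -/
def FinitelySeparable : Prop :=
  ∀ v w : V, v ≠ w → ∃ X : Set V, v ∈ X ∧ w ∉ X ∧ (G.cutEdgeSet X).Finite

/-- The subgraph of `G` induced on `S` is connected. -/
def ConnectedOn (S : Set V) : Prop :=
  ∀ u ∈ S, ∀ v ∈ S,
    Relation.ReflTransGen (fun a b => a ∈ S ∧ b ∈ S ∧ G.Adj a b) u v

/-- `S` induces a 2-block of `G`: a maximal connected subgraph without a
cutvertex. -/
def IsTwoBlock (S : Set V) : Prop :=
  G.ConnectedOn S ∧ (∀ x ∈ S, G.ConnectedOn (S \ {x})) ∧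
    ∀ T : Set V, S ⊆ T → G.ConnectedOn T →
      (∀ x ∈ T, G.ConnectedOn (T \ {x})) → T = S

/-- `G` contains no ray (one-way infinite path). -/
def Rayless : Prop :=
  ¬ ∃ f : ℕ → V, Function.Injective f ∧ ∀ n : ℕ, G.Adj (f n) (f (n + 1))

end SimpleGraph

open Classical


section deg

variable {V : Type*}

/-- If every vertex has countably many `R`-successors, the set of vertices
reachable from a fixed vertex is countable. -/
lemma countable_reachable_aux (R : V → V → Prop)
    (h : ∀ a : V, {b | R a b}.Countable) (v₀ : V) :
    {u | Relation.ReflTransGen R v₀ u}.Countable := by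
  let T : ℕ → Set V := fun n => Nat.rec {v₀} (fun _ Tn => Tn ∪ ⋃ a ∈ Tn, {b | R a b}) n
  have hTc : ∀ n, (T n).Countable := by
    intro n
    induction n with
    | zero => exact Set.countable_singleton _
    | succ n ih => exact ih.union (Set.Countable.biUnion ih (fun a _ => h a))
  have hsub : {u | Relation.ReflTransGen R v₀ u} ⊆ ⋃ n, T n := by
    intro u hu
    induction hu with
    | refl => exact Set.mem_iUnion.2 ⟨0, rfl⟩
    | @tail b c hab hbc ih =>
      obtain ⟨n, hn⟩ := Set.mem_iUnion.1 ih
      refine Set.mem_iUnion.2 ⟨n + 1, ?_⟩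
      exact Or.inr (Set.mem_biUnion hn hbc)
  exact (Set.countable_iUnion hTc).mono hsub

/-- Along a finite walk from inside `X` to outside `X` there is a crossing step. -/
lemma crossing_aux (X : Set V) (f : ℕ → V) :
    ∀ n, f 0 ∈ X → f n ∉ X → ∃ j, j < n ∧ f j ∈ X ∧ f (j+1) ∉ X := by
  intro n
  induction n with
  | zero => intro h0 hn; exact absurd h0 hn
  | succ n ih =>
    intro h0 hn
    by_cases hfn : f n ∈ X
    · exact ⟨n, Nat.lt_succ_self n, hfn, hn⟩
    · obtain ⟨j, hj, h1, h2⟩ := ih h0 hfn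
      exact ⟨j, hj.trans (Nat.lt_succ_self n), h1, h2⟩


lemma nbhd_countable (G : SimpleGraph V) (hG : G.FinitelySeparable)
    (S : Set V) (h2 : ∀ x ∈ S, G.ConnectedOn (S \ {x})) (v : V) (hv : v ∈ S) :
    {a | a ∈ S ∧ G.Adj v a}.Countable := by
  by_contra hA
  set S' : Set V := S \ {v} with hS'def
  set A : Set V := {a | a ∈ S ∧ G.Adj v a} with hAdef
  have hAS' : A ⊆ S' := by
    intro a ha
    exact ⟨ha.1, by simpa using (G.ne_of_adj ha.2).symm⟩
  have hane : A.Nonempty := by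
    rcases Set.eq_empty_or_nonempty A with h | h
    · exact absurd (h ▸ Set.countable_empty) hA
    · exact h
  obtain ⟨a₀, ha₀⟩ := hane
  have ha₀S' : a₀ ∈ S' := hAS' ha₀
  have hconn : G.ConnectedOn S' := h2 v hv
  set R : V → V → Prop := fun a b => a ∈ S' ∧ b ∈ S' ∧ G.Adj a b with hRdef
  set Reach : ℕ → V → Prop :=
    fun n w => ∃ f : ℕ → V, f 0 = a₀ ∧ f n = w ∧ ∀ i < n, R (f i) (f (i+1)) with hReachdef
  have hreach : ∀ w ∈ S', ∃ n, Reach n w := by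
    intro w hw
    have hrt := hconn a₀ ha₀S' w hw
    clear hw
    induction hrt with
    | refl => exact ⟨0, fun _ => a₀, rfl, rfl, fun i h => absurd h (Nat.not_lt_zero i)⟩
    | @tail b c hab hbc ih =>
      obtain ⟨n, f, h0, hn, hsteps⟩ := ih
      refine ⟨n + 1, fun i => if i = n + 1 then c else f i, ?_, ?_, ?_⟩
      · simp [h0]
      · simp
      · intro i hi
        show R (if i = n + 1 then c else f i) (if i + 1 = n + 1 then c else f (i + 1))
        rcases Nat.lt_or_ge i n with h | h
        · have e1 : (if i = n + 1 then c else f i) = f i := by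
            rw [if_neg (by omega)]
          have e2 : (if i + 1 = n + 1 then c else f (i + 1)) = f (i + 1) := by
            rw [if_neg (by omega)]
          rw [e1, e2]; exact hsteps i h
        · have hieq : i = n := by omega
          subst hieq
          have e1 : (if i = i + 1 then c else f i) = f i := by rw [if_neg (by omega)]
          have e2 : (if i + 1 = i + 1 then c else f (i + 1)) = c := by rw [if_pos rfl]
          rw [e1, e2, hn]; exact hbc
  set d : V → ℕ := fun w => sInf {n | Reach n w} with hddef
  have hdspec : ∀ w ∈ S', Reach (d w) w := fun w hw => Nat.sInf_mem (hreach w hw)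
  have hdle : ∀ w n, Reach n w → d w ≤ n := fun w n h => Nat.sInf_le h
  have hd0 : ∀ w, Reach 0 w → w = a₀ := by
    rintro w ⟨f, h0, hn, -⟩
    rw [← hn, h0]
  have hparex : ∀ w, w ∈ S' → w ≠ a₀ → ∃ u, u ∈ S' ∧ G.Adj u w ∧ d u < d w := by
    intro w hw hne
    obtain ⟨f, h0, hn, hsteps⟩ := hdspec w hw
    have hdpos : d w ≠ 0 := by
      intro h
      exact hne (hd0 w (by rw [← h]; exact hdspec w hw))
    obtain ⟨m, hm⟩ : ∃ m, d w = m + 1 := ⟨d w - 1, by omega⟩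
    have hstep := hsteps m (by omega)
    have hfw : f (m + 1) = w := by rw [← hm]; exact hn
    refine ⟨f m, hstep.1, by rw [← hfw]; exact hstep.2.2, ?_⟩
    have hrm : Reach m (f m) := ⟨f, h0, rfl, fun i hi => hsteps i (by omega)⟩
    exact lt_of_le_of_lt (hdle _ _ hrm) (by omega)
  set par : V → V :=
    fun w => if h : w ∈ S' ∧ w ≠ a₀ then (hparex w h.1 h.2).choose else a₀ with hpardef
  have hpar : ∀ w, w ∈ S' → w ≠ a₀ →
      par w ∈ S' ∧ G.Adj (par w) w ∧ d (par w) < d w := by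
    intro w hw hne
    have h : w ∈ S' ∧ w ≠ a₀ := ⟨hw, hne⟩
    simp only [hpardef, dif_pos h]
    exact (hparex w hw hne).choose_spec
  have hpara₀ : par a₀ = a₀ := by
    simp only [hpardef]
    rw [dif_neg]
    rintro ⟨-, h⟩; exact h rfl
  have hparS' : ∀ w ∈ S', par w ∈ S' := by
    intro w hw
    by_cases hne : w = a₀
    · rw [hne, hpara₀]; exact ha₀S'
    · exact (hpar w hw hne).1
  have hchainS' : ∀ w ∈ S', ∀ k, par^[k] w ∈ S' := by
    intro w hw k
    induction k with
    | zero => exact hw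
    | succ k ih => rw [Function.iterate_succ_apply']; exact hparS' _ ih
  have hfix : ∀ k, par^[k] a₀ = a₀ := by
    intro k
    induction k with
    | zero => rfl
    | succ k ih => rw [Function.iterate_succ_apply', ih, hpara₀]
  have hterm : ∀ n, ∀ w ∈ S', d w = n → par^[n] w = a₀ := by
    intro n
    induction n using Nat.strong_induction_on with
    | _ n ih =>
      intro w hw hdw
      by_cases hne : w = a₀
      · rw [hne, hfix]
      · have hp := hpar w hw hne
        have hn1 : 1 ≤ n := by
          by_contra hcon
          have hn0 : n = 0 := by omega
          exact hne (hd0 w (by rw [hn0] at hdw; rw [← hdw]; exact hdspec w hw))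
        have hdp : d (par w) < n := by rw [← hdw]; exact hp.2.2
        have h2' := ih (d (par w)) hdp (par w) hp.1 rfl
        have hstab : ∀ m, d (par w) ≤ m → par^[m] (par w) = a₀ := by
          intro m hm
          have he : par^[m] (par w) = par^[m - d (par w)] (par^[d (par w)] (par w)) := by
            rw [← Function.iterate_add_apply]
            congr 1
            omega
          rw [he, h2', hfix]
        have heq : par^[n] w = par^[n-1] (par w) := by
          conv_lhs => rw [show n = (n-1) + 1 by omega]
          rw [Function.iterate_succ_apply]
        rw [heq, hstab _ (by omega)]
  set K : V → ℕ := fun w => sInf {k | par^[k] w = a₀} with hKdef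
  have hKspec : ∀ w ∈ S', par^[K w] w = a₀ := by
    intro w hw
    have hh : sInf {k | par^[k] w = a₀} ∈ {k | par^[k] w = a₀} :=
      Nat.sInf_mem ⟨d w, hterm (d w) w hw rfl⟩
    exact hh
  have hKle : ∀ w k, par^[k] w = a₀ → K w ≤ k := fun w k h => Nat.sInf_le h
  have hKlt : ∀ w, ∀ j < K w, par^[j] w ≠ a₀ := by
    intro w j hj h
    exact absurd (hKle w j h) (by omega)
  have hKge : ∀ w ∈ S', ∀ j, K w ≤ j → par^[j] w = a₀ := by
    intro w hw j hj
    have he : par^[j] w = par^[j - K w] (par^[K w] w) := by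
      rw [← Function.iterate_add_apply]
      congr 1
      omega
    rw [he, hKspec w hw, hfix]
  have hdchain : ∀ w ∈ S', ∀ j, j < K w → d (par^[j+1] w) < d (par^[j] w) := by
    intro w hw j hj
    have h1 : par^[j] w ∈ S' := hchainS' w hw j
    have h2' : par^[j] w ≠ a₀ := hKlt w j hj
    have hh := (hpar _ h1 h2').2.2
    rw [Function.iterate_succ_apply']
    exact hh
  have hmono : ∀ w ∈ S', ∀ i n, i + n + 1 ≤ K w → d (par^[i + n + 1] w) < d (par^[i] w) := by
    intro w hw i n
    induction n with
    | zero => intro h; exact hdchain w hw i (by omega)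
    | succ n ih =>
      intro h
      have h1 := hdchain w hw (i + n + 1) (by omega)
      have h2' := ih (by omega)
      have he : i + (n + 1) + 1 = (i + n + 1) + 1 := by omega
      rw [he]
      exact h1.trans h2'
  have hinj : ∀ w ∈ S', ∀ i j, i ≤ K w → j ≤ K w → par^[i] w = par^[j] w → i = j := by
    intro w hw i j hi hj heq
    rcases Nat.lt_trichotomy i j with h | h | h
    · exfalso
      have hm := hmono w hw i (j - i - 1) (by omega)
      rw [show i + (j - i - 1) + 1 = j by omega] at hm
      rw [heq] at hm
      omega
    · exact h
    · exfalso
      have hm := hmono w hw j (i - j - 1) (by omega)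
      rw [show j + (i - j - 1) + 1 = i by omega] at hm
      rw [heq] at hm
      omega
  set TA : Set V := {w | ∃ a ∈ A, ∃ j, j ≤ K a ∧ par^[j] a = w} with hTAdef
  have hTAS' : TA ⊆ S' := by
    rintro w ⟨a, ha, j, hj, rfl⟩
    exact hchainS' a (hAS' ha) j
  have hATA : A ⊆ TA := fun a ha => ⟨a, ha, 0, Nat.zero_le _, rfl⟩
  set Ch : V → Set V := fun z => {x | x ∈ TA ∧ x ≠ a₀ ∧ par x = z} with hChdef
  have hzstar : ∃ z, ¬ (Ch z).Countable := by
    by_contra hall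
    push_neg at hall
    have key : ∀ a ∈ A, ∀ i, i ≤ K a →
        Relation.ReflTransGen (fun z x => x ∈ Ch z) a₀ (par^[K a - i] a) := by
      intro a ha i
      induction i with
      | zero =>
        intro _
        rw [Nat.sub_zero, hKspec a (hAS' ha)]
      | succ i ih =>
        intro hi
        have hstep : (par^[K a - (i+1)] a) ∈ Ch (par^[K a - i] a) := by
          refine ⟨⟨a, ha, K a - (i+1), by omega, rfl⟩, hKlt a _ (by omega), ?_⟩
          rw [show K a - i = (K a - (i+1)) + 1 by omega, Function.iterate_succ_apply']
        exact (ih (by omega)).tail hstep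
    have hsub2 : TA ⊆ {u | Relation.ReflTransGen (fun z x => x ∈ Ch z) a₀ u} := by
      rintro w ⟨a, ha, j, hj, rfl⟩
      have hk := key a ha (K a - j) (by omega)
      rw [show K a - (K a - j) = j by omega] at hk
      exact hk
    have hTAc : TA.Countable :=
      (countable_reachable_aux (fun z x => x ∈ Ch z) (fun z => hall z) a₀).mono hsub2
    exact hA (hTAc.mono hATA)
  obtain ⟨zs, hzs⟩ := hzstar
  have hChne : (Ch zs).Nonempty := by
    rcases Set.eq_empty_or_nonempty (Ch zs) with h | h
    · exact absurd (h ▸ Set.countable_empty) hzs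
    · exact h
  obtain ⟨x₀, hx₀⟩ := hChne
  have hzsS' : zs ∈ S' := by
    have hh := hpar x₀ (hTAS' hx₀.1) hx₀.2.1
    rw [hx₀.2.2] at hh
    exact hh.1
  have hvzs : v ≠ zs := fun h => hzsS'.2 (by rw [← h]; rfl)
  obtain ⟨X, hvX, hzsX, hXfin⟩ := hG v zs hvzs
  have hxdata : ∀ x ∈ Ch zs, ∃ a, a ∈ A ∧ ∃ i, i < K a ∧ par^[i] a = x := by
    rintro x ⟨⟨a, ha, j, hj, rfl⟩, hne, hpx⟩
    refine ⟨a, ha, j, ?_, rfl⟩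
    rcases Nat.lt_or_ge j (K a) with h | h
    · exact h
    · exfalso
      apply hne
      have hje : j = K a := by omega
      rw [hje]
      exact hKspec a (hAS' ha)
  choose ach hachA ich hilt hich using hxdata
  have hzseq : ∀ x (hx : x ∈ Ch zs), par^[ich x hx + 1] (ach x hx) = zs := by
    intro x hx
    rw [Function.iterate_succ_apply', hich x hx]
    exact hx.2.2
  have hzsnotseg : ∀ x (hx : x ∈ Ch zs), ∀ j ≤ ich x hx, par^[j] (ach x hx) ≠ zs := by
    intro x hx j hj heq
    have haS' : ach x hx ∈ S' := hAS' (hachA x hx)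
    have hi := hilt x hx
    have := hinj (ach x hx) haS' j (ich x hx + 1) (by omega) (by omega)
      (heq.trans (hzseq x hx).symm)
    omega
  have hsegdisj : ∀ x (hx : x ∈ Ch zs), ∀ x' (hx' : x' ∈ Ch zs), x ≠ x' →
      ∀ j ≤ ich x hx, ∀ j' ≤ ich x' hx',
        par^[j] (ach x hx) ≠ par^[j'] (ach x' hx') := by
    intro x hx x' hx' hne j hj j' hj' heq
    set w := par^[j] (ach x hx) with hwdef
    have hwS' : w ∈ S' := hchainS' _ (hAS' (hachA x hx)) j
    set m := ich x hx + 1 - j with hmdef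
    set m' := ich x' hx' + 1 - j' with hm'def
    have hm1 : par^[m] w = zs := by
      rw [hwdef, ← Function.iterate_add_apply, show m + j = ich x hx + 1 by omega]
      exact hzseq x hx
    have hm2 : par^[m - 1] w = x := by
      rw [hwdef, ← Function.iterate_add_apply, show m - 1 + j = ich x hx by omega]
      exact hich x hx
    have heq2 : par^[j] (ach x hx) = par^[j'] (ach x' hx') := hwdef.symm.trans heq
    have hm1' : par^[m'] w = zs := by
      rw [hwdef, heq2, ← Function.iterate_add_apply,
        show m' + j' = ich x' hx' + 1 by omega]
      exact hzseq x' hx'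
    have hm2' : par^[m' - 1] w = x' := by
      rw [hwdef, heq2, ← Function.iterate_add_apply,
        show m' - 1 + j' = ich x' hx' by omega]
      exact hich x' hx'
    by_cases hza : zs = a₀
    · have hmK : m = K w := by
        have h1 : ¬ (m < K w) := fun h => hKlt w m h (by rw [hm1, hza])
        have h2' : m - 1 < K w := by
          by_contra h
          push_neg at h
          have := hKge w hwS' (m - 1) h
          rw [hm2] at this
          exact hx.2.1 this
        omega
      have hmK' : m' = K w := by
        have h1 : ¬ (m' < K w) := fun h => hKlt w m' h (by rw [hm1', hza])
        have h2' : m' - 1 < K w := by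
          by_contra h
          push_neg at h
          have := hKge w hwS' (m' - 1) h
          rw [hm2'] at this
          exact hx'.2.1 this
        omega
      apply hne
      rw [← hm2, ← hm2', hmK, hmK']
    · have hmlt : m < K w := by
        by_contra h
        push_neg at h
        have := hKge w hwS' m h
        rw [hm1] at this
        exact hza this
      have hmlt' : m' < K w := by
        by_contra h
        push_neg at h
        have := hKge w hwS' m' h
        rw [hm1'] at this
        exact hza this
      have hmm := hinj w hwS' m m' (by omega) (by omega) (hm1.trans hm1'.symm)
      apply hne
      rw [← hm2, ← hm2', hmm]
  have hkey : ∀ x (hx : x ∈ Ch zs), ∃ e ∈ G.cutEdgeSet X,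
      (∃ s, (∃ jj, jj ≤ ich x hx ∧ par^[jj] (ach x hx) = s) ∧ s ∈ e) ∧
      (∀ y ∈ e, y = v ∨ y = zs ∨ ∃ jj, jj ≤ ich x hx ∧ par^[jj] (ach x hx) = y) := by
    intro x hx
    set a := ach x hx with hadef
    set i := ich x hx with hidef
    have haA : a ∈ A := hachA x hx
    have haS' : a ∈ S' := hAS' haA
    set f : ℕ → V := fun j => if j = 0 then v else if j ≤ i + 1 then par^[j-1] a else zs
      with hfdef
    have hf0 : f 0 = v := by simp [hfdef]
    have hfval : ∀ j, 1 ≤ j → j ≤ i + 1 → f j = par^[j-1] a := by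
      intro j h1 h2'
      simp only [hfdef]
      rw [if_neg (by omega), if_pos h2']
    have hfend : f (i + 2) = zs := by
      simp only [hfdef]
      rw [if_neg (by omega), if_neg (by omega)]
    have hchar : ∀ j, f j = v ∨ f j = zs ∨ ∃ jj, jj ≤ i ∧ par^[jj] a = f j := by
      intro j
      rcases Nat.eq_zero_or_pos j with rfl | hpos
      · exact Or.inl hf0
      · rcases Nat.lt_or_ge j (i + 2) with hle | hge
        · refine Or.inr (Or.inr ⟨j - 1, by omega, ?_⟩)
          rw [hfval j (by omega) (by omega)]
        · refine Or.inr (Or.inl ?_)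
          simp only [hfdef]
          rw [if_neg (by omega), if_neg (by omega)]
    have hadj : ∀ j < i + 2, G.Adj (f j) (f (j+1)) := by
      intro j hj
      rcases Nat.eq_zero_or_pos j with rfl | hpos
      · have h1 : f 1 = a := by
          rw [hfval 1 le_rfl (by omega)]
          simp
        rw [hf0, h1]
        exact haA.2
      · rcases Nat.lt_or_ge j (i + 1) with hle | hge
        · have h1 : f j = par^[j-1] a := hfval j (by omega) (by omega)
          have h2' : f (j+1) = par^[j] a := by
            have hh := hfval (j+1) (by omega) (by omega)
            simpa using hh
          have hKa : i < K a := by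
            have hKa' := hilt x hx
            rw [← hadef, ← hidef] at hKa'
            exact hKa'
          have hneq : par^[j-1] a ≠ a₀ := hKlt a (j-1) (by omega)
          have hS'' : par^[j-1] a ∈ S' := hchainS' a haS' (j-1)
          have hadj2 := (hpar _ hS'' hneq).2.1
          have hpe : par (par^[j-1] a) = par^[j] a := by
            conv_rhs => rw [show j = (j-1) + 1 by omega]
            rw [Function.iterate_succ_apply']
          rw [h1, h2']
          rw [hpe] at hadj2
          exact hadj2.symm
        · have hje : j = i + 1 := by omega
          subst hje
          have h1 : f (i+1) = x := by
            rw [hfval (i+1) (by omega) le_rfl]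
            simp only [Nat.add_sub_cancel]
            exact hich x hx
          have h2' : f (i+2) = zs := hfend
          have hadj2 := (hpar x (hTAS' hx.1) hx.2.1).2.1
          rw [hx.2.2] at hadj2
          rw [h1, h2']
          exact hadj2.symm
    obtain ⟨j, hjlt, hjX, hjX'⟩ := crossing_aux X f (i + 2)
      (by rw [hf0]; exact hvX) (by rw [hfend]; exact hzsX)
    refine ⟨s(f j, f (j+1)), ⟨f j, f (j+1), hadj j hjlt, rfl, hjX, hjX'⟩, ?_, ?_⟩
    · rcases Nat.eq_zero_or_pos j with rfl | hpos
      · refine ⟨f 1, ⟨0, Nat.zero_le _, ?_⟩, by simp⟩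
        rw [hfval 1 le_rfl (by omega)]
      · refine ⟨f j, ⟨j - 1, by omega, ?_⟩, by simp⟩
        rw [hfval j (by omega) (by omega)]
    · intro y hy
      rw [Sym2.mem_iff] at hy
      rcases hy with rfl | rfl
      · exact hchar j
      · exact hchar (j+1)
  choose ed hedspec using hkey
  have hedcut : ∀ x (hx : x ∈ Ch zs), ed x hx ∈ G.cutEdgeSet X :=
    fun x hx => (hedspec x hx).1
  have hedseg : ∀ x (hx : x ∈ Ch zs),
      ∃ s, (∃ jj, jj ≤ ich x hx ∧ par^[jj] (ach x hx) = s) ∧ s ∈ ed x hx :=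
    fun x hx => (hedspec x hx).2.1
  have hedsub : ∀ x (hx : x ∈ Ch zs), ∀ y ∈ ed x hx,
      y = v ∨ y = zs ∨ ∃ jj, jj ≤ ich x hx ∧ par^[jj] (ach x hx) = y :=
    fun x hx => (hedspec x hx).2.2
  set F : V → Sym2 V := fun x => if hx : x ∈ Ch zs then ed x hx else s(v, v) with hFdef
  have hinjF : Set.InjOn F (Ch zs) := by
    intro x hx x' hx' heq
    by_contra hne
    rw [hFdef] at heq
    simp only [dif_pos hx, dif_pos hx'] at heq
    obtain ⟨s, hsseg, hsmem⟩ := hedseg x hx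
    have hsmem' : s ∈ ed x' hx' := heq ▸ hsmem
    rcases hedsub x' hx' s hsmem' with h | h | h
    · obtain ⟨jj, hjj, hpj⟩ := hsseg
      have hsS' : s ∈ S' := by
        rw [← hpj]
        exact hchainS' _ (hAS' (hachA x hx)) jj
      rw [h] at hsS'
      exact hsS'.2 rfl
    · obtain ⟨jj, hjj, hpj⟩ := hsseg
      exact hzsnotseg x hx jj hjj (by rw [hpj, h])
    · obtain ⟨jj, hjj, hpj⟩ := hsseg
      obtain ⟨jj', hjj', hpj'⟩ := h
      exact hsegdisj x hx x' hx' hne jj hjj jj' hjj' (by rw [hpj, hpj'])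
  have himg : F '' (Ch zs) ⊆ G.cutEdgeSet X := by
    rintro e ⟨x, hx, rfl⟩
    simp only [hFdef, dif_pos hx]
    exact hedcut x hx
  have hfin : (Ch zs).Finite := Set.Finite.of_finite_image (hXfin.subset himg) hinjF
  exact hzs hfin.countable

end deg

/-- Every 2-block of a finitely separable graph has countably many vertices. -/
theorem twoBlock_countable_of_finitelySeparable {V : Type*} (G : SimpleGraph V)
    (hG : G.FinitelySeparable) (S : Set V) (hS : G.IsTwoBlock S) :
    S.Countable := by
  obtain ⟨hc, h2, -⟩ := hS
  rcases Set.eq_empty_or_nonempty S with rfl | ⟨v₀, hv₀⟩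
  · exact Set.countable_empty
  · have hdeg : ∀ a : V, {b | a ∈ S ∧ b ∈ S ∧ G.Adj a b}.Countable := by
      intro a
      by_cases ha : a ∈ S
      · have hcnt := nbhd_countable G hG S h2 a ha
        have hEq : {b | a ∈ S ∧ b ∈ S ∧ G.Adj a b} = {b | b ∈ S ∧ G.Adj a b} := by
          ext b
          simp [ha]
        rw [hEq]
        exact hcnt
      · have hEq : {b | a ∈ S ∧ b ∈ S ∧ G.Adj a b} = ∅ := by
          ext b
          simp [ha]
        rw [hEq]
        exact Set.countable_empty
    have hre := countable_reachable_aux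
      (fun a b => a ∈ S ∧ b ∈ S ∧ G.Adj a b) hdeg v₀
    exact hre.mono (fun u hu => hc v₀ hv₀ u hu)
end

section
/- Every 2-block of a finitely separable rayless graph is finite. -/
/-!
A rayless graph satisfies the star half of the star–comb lemma: if infinitely many vertices of `M`
are reachable inside `A`, greedily walking towards infinitely many of them either runs into a vertex
`d` from which infinitely many disjoint connected pieces of `A - d` lead to `M`, or produces a ray.

If a 2-block `S` were infinite, this gives a vertex `c ∈ S` with infinitely many neighbours in `S`.
As `S - c` is still connected, applying the lemma there with `M` the neighbours of `c` gives a
vertex `d ≠ c` joined to `c` by infinitely many paths that are disjoint apart from their ends.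
Every cut separating `d` from `c` meets each of these paths in a distinct edge, contradicting
finite separability.
-/

open Relation

theorem Relation.ReflTransGen.exists_mem_not_mem {α : Type*} {r : α → α → Prop} {X : Set α}
    {a b : α} (h : ReflTransGen r a b) (ha : a ∈ X) (hb : b ∉ X) :
    ∃ p q, r p q ∧ p ∈ X ∧ q ∉ X := by
  induction h with
  | refl => exact absurd ha hb
  | @tail y z _ hyz ih =>
    by_cases hy : y ∈ X
    · exact ⟨y, z, hyz, hy, hb⟩
    · exact ih hy

theorem Set.PairwiseDisjoint.infinite_of_forall_inter_nonempty {α : Type*} {𝓟 : Set (Set α)}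
    {T : Set α} (hdisj : 𝓟.PairwiseDisjoint id) (h𝓟 : 𝓟.Infinite)
    (hT : ∀ P ∈ 𝓟, (T ∩ P).Nonempty) : T.Infinite := by
  intro hfin
  refine h𝓟 (Set.Finite.of_finite_image (f := (T ∩ ·)) (hfin.finite_subsets.subset ?_) ?_)
  · rintro _ ⟨P, -, rfl⟩
    exact Set.inter_subset_left
  · intro P hP Q hQ hPQ
    obtain ⟨x, hxT, hxP⟩ := hT P hP
    have hxQ : x ∈ T ∩ Q := (show T ∩ P = T ∩ Q from hPQ) ▸ ⟨hxT, hxP⟩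
    exact hdisj.elim_set hP hQ x hxP hxQ.2

namespace SimpleGraph

variable {V : Type*} (G : SimpleGraph V)

def AdjIn (B : Set V) (a b : V) : Prop := a ∈ B ∧ b ∈ B ∧ G.Adj a b

def reachIn (B : Set V) (u : V) : Set V := {x | ReflTransGen (G.AdjIn B) u x}

/-- `𝓟` is the set of branches, minus the centre `d`, of a subdivided infinite star in `A` whose
leaves lie in `M`. -/
structure IsFan (A M : Set V) (d : V) (𝓟 : Set (Set V)) : Prop where
  infinite : 𝓟.Infinite
  pairwiseDisjoint : 𝓟.PairwiseDisjoint id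
  subset : ∀ P ∈ 𝓟, P ⊆ A \ {d}
  connectedOn : ∀ P ∈ 𝓟, G.ConnectedOn P
  exists_adj : ∀ P ∈ 𝓟, ∃ w ∈ P, G.Adj d w
  inter_nonempty : ∀ P ∈ 𝓟, (M ∩ P).Nonempty

variable {G} {A B M X : Set V} {c d h u x y z : V} {𝓟 : Set (Set V)}

instance (B : Set V) : Std.Symm (G.AdjIn B) :=
  ⟨fun _ _ h => ⟨h.2.1, h.1, h.2.2.symm⟩⟩

theorem mem_reachIn_self (B : Set V) (u : V) : u ∈ G.reachIn B u := ReflTransGen.refl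

theorem reachIn_subset (hu : u ∈ B) : G.reachIn B u ⊆ B := fun x hx => by
  induction hx with
  | refl => exact hu
  | tail _ h _ => exact h.2.1

theorem reachIn_eq_of_mem (hx : x ∈ G.reachIn B u) : G.reachIn B x = G.reachIn B u := by
  ext y
  exact ⟨hx.trans, (Std.Symm.symm _ _ hx).trans⟩

theorem reachIn_eq_of_mem_of_mem (hx : z ∈ G.reachIn B x) (hy : z ∈ G.reachIn B y) :
    G.reachIn B x = G.reachIn B y :=
  (reachIn_eq_of_mem hx).symm.trans (reachIn_eq_of_mem hy)

theorem connectedOn_reachIn (B : Set V) (u : V) : G.ConnectedOn (G.reachIn B u) := by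
  have hpath : ∀ {x}, x ∈ G.reachIn B u → ReflTransGen (G.AdjIn (G.reachIn B u)) u x := by
    intro x hx
    induction hx with
    | refl => exact .refl
    | tail h₁ h₂ ih => exact ih.tail ⟨h₁, h₁.tail h₂, h₂.2.2⟩
  intro x hx y hy
  exact (Std.Symm.symm _ _ (hpath hx)).trans (hpath hy)

theorem ConnectedOn.reachIn_eq (hA : G.ConnectedOn A) (hu : u ∈ A) : G.reachIn A u = A :=
  (reachIn_subset hu).antisymm fun x hx => hA u hu x hx

theorem exists_adjIn_of_mem_reachIn (hx : x ∈ G.reachIn B h) (hxh : x ≠ h) :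
    ∃ w, G.AdjIn B h w ∧ x ∈ G.reachIn (B \ {h}) w := by
  induction hx with
  | refl => exact absurd rfl hxh
  | @tail y x _ hyx ih =>
    by_cases hyh : y = h
    · subst hyh
      exact ⟨x, hyx, .refl⟩
    · obtain ⟨w, hw, hwy⟩ := ih hyh
      exact ⟨w, hw, hwy.tail ⟨⟨hyx.1, hyh⟩, ⟨hyx.2.1, hxh⟩, hyx.2.2⟩⟩

theorem IsFan.mono (hfan : G.IsFan A M d 𝓟) (hAB : A ⊆ B) : G.IsFan B M d 𝓟 :=
  { hfan with subset := fun P hP => (hfan.subset P hP).trans (Set.sdiff_subset_sdiff_left hAB) }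

theorem IsFan.infinite_inter_neighborSet (hfan : G.IsFan A M d 𝓟) :
    (A ∩ G.neighborSet d).Infinite :=
  hfan.pairwiseDisjoint.infinite_of_forall_inter_nonempty hfan.infinite fun P hP => by
    obtain ⟨w, hwP, hdw⟩ := hfan.exists_adj P hP
    exact ⟨w, ⟨(hfan.subset P hP hwP).1, hdw⟩, hwP⟩

/-- Apart from `h`, the components of `B - h` next to `h` cover `M ∩ reachIn B h`; if each of them
meets `M` only finitely often, infinitely many of them meet it. -/
theorem exists_isFan_or_exists_adjIn (hinf : (M ∩ G.reachIn B h).Infinite) :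
    (∃ 𝓟, G.IsFan B M h 𝓟) ∨ ∃ w, G.AdjIn B h w ∧ (M ∩ G.reachIn (B \ {h}) w).Infinite := by
  refine or_iff_not_imp_right.2 fun hfin => ?_
  simp only [not_exists, not_and, Set.not_infinite] at hfin
  set Y := (M ∩ G.reachIn B h) \ {h}
  have hcomp : ∀ x ∈ Y, ∃ w, G.AdjIn B h w ∧ G.reachIn (B \ {h}) x = G.reachIn (B \ {h}) w :=
    fun x hx => (exists_adjIn_of_mem_reachIn hx.1.2 hx.2).imp fun w hw =>
      ⟨hw.1, reachIn_eq_of_mem hw.2⟩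
  refine ⟨G.reachIn (B \ {h}) '' Y, ⟨fun hfinite => ?_, ?_, ?_, ?_, ?_, ?_⟩⟩
  · refine hinf.sdiff (Set.finite_singleton h)
      ((hfinite.biUnion (t := fun R => M ∩ R) fun R hR => ?_).subset ?_)
    · obtain ⟨x, hx, rfl⟩ := hR
      obtain ⟨w, hw, hxw⟩ := hcomp x hx
      exact hxw ▸ hfin w hw
    · exact fun x hx =>
        Set.mem_biUnion (Set.mem_image_of_mem _ hx) ⟨hx.1.1, mem_reachIn_self _ _⟩
  · rintro _ ⟨x, -, rfl⟩ _ ⟨y, -, rfl⟩ hne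
    exact Set.disjoint_left.2 fun z hzx hzy => hne (reachIn_eq_of_mem_of_mem hzx hzy)
  all_goals rintro _ ⟨x, hx, rfl⟩
  · obtain ⟨w, hw, hxw⟩ := hcomp x hx
    exact hxw ▸ reachIn_subset ⟨hw.2.1, (G.ne_of_adj hw.2.2).symm⟩
  · exact connectedOn_reachIn _ _
  · obtain ⟨w, hw, hxw⟩ := hcomp x hx
    exact ⟨w, hxw ▸ mem_reachIn_self _ _, hw.2.2⟩
  · exact ⟨x, hx.1.1, mem_reachIn_self _ _⟩

theorem exists_isFan_of_rayless (hray : G.Rayless) (hu : u ∈ A)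
    (hinf : (M ∩ G.reachIn A u).Infinite) : ∃ d ∈ A, ∃ 𝓟, G.IsFan A M d 𝓟 := by
  by_contra! hno
  have : Nonempty V := ⟨u⟩
  let Good : Set V × V → Prop := fun p =>
    p.1 ⊆ A ∧ p.2 ∈ p.1 ∧ (M ∩ G.reachIn p.1 p.2).Infinite
  have hstep : ∀ p, Good p → ∃ w, G.Adj p.2 w ∧ Good (p.1 \ {p.2}, w) := by
    rintro ⟨B, h⟩ ⟨hBA, hh, hinf⟩
    rcases exists_isFan_or_exists_adjIn hinf with ⟨𝓟, hfan⟩ | ⟨w, hw, hwinf⟩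
    · exact absurd (hfan.mono hBA) (hno h (hBA hh) 𝓟)
    · exact ⟨w, hw.2.2, Set.sdiff_subset.trans hBA, ⟨hw.2.1, (G.ne_of_adj hw.2.2).symm⟩, hwinf⟩
  choose! next hadj hgood using hstep
  let s : ℕ → Set V × V := fun n => (fun p => (p.1 \ {p.2}, next p))^[n] (A, u)
  have hsucc : ∀ n, s (n + 1) = ((s n).1 \ {(s n).2}, next (s n)) :=
    fun n => Function.iterate_succ_apply' _ n _
  have hs : ∀ n, Good (s n) := fun n => by
    induction n with
    | zero => exact ⟨subset_rfl, hu, hinf⟩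
    | succ n ih => exact hsucc n ▸ hgood _ ih
  have hanti : Antitone fun n => (s n).1 :=
    antitone_nat_of_succ_le fun n => hsucc n ▸ Set.sdiff_subset
  have hne : ∀ m n, m < n → (s m).2 ≠ (s n).2 := fun m n hmn heq => by
    have hmem : (s n).2 ∈ (s (m + 1)).1 := hanti hmn (hs n).2.1
    rw [hsucc, ← heq] at hmem
    exact hmem.2 rfl
  refine hray ⟨fun n => (s n).2, fun m n hmn => ?_,
    fun n => by simpa only [hsucc] using hadj _ (hs n)⟩
  rcases lt_trichotomy m n with hlt | heq | hgt
  · exact absurd hmn (hne m n hlt)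
  · exact heq
  · exact absurd hmn.symm (hne n m hgt)

theorem IsFan.cutEdgeSet_infinite (hfan : G.IsFan A (G.neighborSet c) d 𝓟) (hcA : c ∉ A)
    (hdX : d ∈ X) (hcX : c ∉ X) : (G.cutEdgeSet X).Infinite := by
  have hcross : ∀ P ∈ 𝓟, ∃ e : V × V, G.Adj e.1 e.2 ∧ e.1 ∈ X ∧ e.2 ∉ X ∧
      e.1 ∈ insert d P ∧ e.2 ∈ insert c P ∧ (e.1 ∈ P ∨ e.2 ∈ P) := by
    intro P hP
    obtain ⟨w, hwP, hdw⟩ := hfan.exists_adj P hP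
    obtain ⟨v, hcv, hvP⟩ := hfan.inter_nonempty P hP
    let r : V → V → Prop := fun a b =>
      G.Adj a b ∧ a ∈ insert d P ∧ b ∈ insert c P ∧ (a ∈ P ∨ b ∈ P)
    have hwalk : ReflTransGen r d c :=
      ((ReflTransGen.mono (fun a b hab => ⟨hab.2.2, .inr hab.1, .inr hab.2.1, .inl hab.1⟩) _ _
        (hfan.connectedOn P hP w hwP v hvP)).head
        ⟨hdw, .inl rfl, .inr hwP, .inr hwP⟩).tail ⟨hcv.symm, .inr hvP, .inl rfl, .inl hvP⟩
    obtain ⟨a, b, hab, haX, hbX⟩ := hwalk.exists_mem_not_mem hdX hcX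
    exact ⟨(a, b), hab.1, haX, hbX, hab.2⟩
  have : Nonempty V := ⟨d⟩
  choose! e hadj hX hnX hfst hsnd hmem using hcross
  refine Set.infinite_of_injOn_mapsTo (f := fun P => s((e P).1, (e P).2)) ?_
    (fun P hP => ⟨_, _, hadj P hP, rfl, hX P hP, hnX P hP⟩) hfan.infinite
  intro P hP Q hQ hPQ
  rcases Sym2.eq_iff.1 hPQ with ⟨h₁, h₂⟩ | ⟨h₁, -⟩
  · by_contra hne
    have hdisj := hfan.pairwiseDisjoint hP hQ hne
    rcases hmem P hP with h | h
    · have hd : (e P).1 ≠ d := fun hd => (hfan.subset P hP (hd ▸ h)).2 rfl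
      exact Set.disjoint_left.1 hdisj h ((h₁ ▸ hfst Q hQ).resolve_left hd)
    · have hc : (e P).2 ≠ c := fun hc => hcA (hfan.subset P hP (hc ▸ h)).1
      exact Set.disjoint_left.1 hdisj h ((h₂ ▸ hsnd Q hQ).resolve_left hc)
  · exact absurd (h₁ ▸ hX P hP) (hnX Q hQ)

end SimpleGraph

open SimpleGraph in
/-- Every 2-block of a finitely separable rayless graph is finite. -/
theorem twoBlock_finite_of_finitelySeparable_rayless {V : Type*}
    (G : SimpleGraph V) (hG : G.FinitelySeparable) (hray : G.Rayless)
    (S : Set V) (hS : G.IsTwoBlock S) :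
    S.Finite := by
  by_contra hSinf
  obtain ⟨hconn, hconn', -⟩ := hS
  obtain ⟨u, hu⟩ := Set.Infinite.nonempty hSinf
  obtain ⟨c, hcS, 𝓟, hfan⟩ :=
    exists_isFan_of_rayless hray hu (by rwa [hconn.reachIn_eq hu, Set.inter_self])
  have hN : (S ∩ G.neighborSet c).Infinite := hfan.infinite_inter_neighborSet
  obtain ⟨u', hu'S, hcu'⟩ := hN.nonempty
  have hu' : u' ∈ S \ {c} := ⟨hu'S, (G.ne_of_adj hcu').symm⟩
  obtain ⟨d, hd, 𝓠, hfan'⟩ := exists_isFan_of_rayless (M := G.neighborSet c) hray hu' <| by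
    rw [(hconn' c hcS).reachIn_eq hu']
    exact hN.mono fun x hx => ⟨hx.2, hx.1, (G.ne_of_adj hx.2).symm⟩
  obtain ⟨X, hdX, hcX, hfin⟩ := hG d c fun hdc => hd.2 hdc
  exact hfan'.cutEdgeSet_infinite (fun hc => hc.2 rfl) hdX hcX hfin
end

section
/- A finitely separable rayless graph has no infinite bond. -/
namespace SimpleGraph

variable {V : Type*} (G : SimpleGraph V)

/-- `B` is a cut of `G`. -/
def IsCut (B : Set (Sym2 V)) : Prop :=
  ∃ X : Set V, B = G.cutEdgeSet X

/-- `B` is a bond of `G`: a minimal non-empty cut. -/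
def IsBond (B : Set (Sym2 V)) : Prop :=
  G.IsCut B ∧ B.Nonempty ∧
    ∀ B' : Set (Sym2 V), G.IsCut B' → B'.Nonempty → B' ⊆ B → B' = B

end SimpleGraph

/-!
By minimality, an infinite bond joins a connected set `C` to a connected set `D` disjoint from it.
Call `z ∈ S` a centre for a sequence `a` if `z` is joined inside `S` by pairwise edge-disjoint
walks to infinitely many terms of `a`. If a connected set `S` containing infinitely many terms has
no centre, then for any `r ∈ S` the terms in `S - r` cannot spread over infinitely many components
of `S - r` (walks from `r` into them would make `r` a centre), so one component, adjacent to `r`,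
contains infinitely many of them; iterating yields a ray. So in a rayless graph there is a centre
in `C` for the `C`-ends of the edges of the bond, and one in `D` for the `D`-ends of infinitely
many of these edges. Joining the two fans through the bond edges gives infinitely many
edge-disjoint walks between two vertices, which no finite cut separates.
-/

namespace SimpleGraph

variable {V : Type*} {G : SimpleGraph V}

/-- Unlike `G.induce S`, a graph on all of `V`; its adjacency is the relation in `ConnectedOn`. -/
abbrev restrict (G : SimpleGraph V) (S : Set V) : SimpleGraph V where
  Adj a b := a ∈ S ∧ b ∈ S ∧ G.Adj a b
  symm := ⟨fun _ _ h => ⟨h.2.1, h.1, h.2.2.symm⟩⟩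
  loopless := ⟨fun _ h => h.2.2.ne rfl⟩

lemma restrict_le (S : Set V) : G.restrict S ≤ G := fun _ _ h => h.2.2

lemma mem_of_restrict_reachable {S : Set V} {u v : V} (h : (G.restrict S).Reachable u v)
    (hv : v ∈ S) : u ∈ S := by
  obtain ⟨p⟩ := h
  cases p with
  | nil => exact hv
  | cons h _ => exact h.1

lemma connectedOn_inter_supp {S : Set V} (K : (G.restrict S).ConnectedComponent) :
    G.ConnectedOn (S ∩ K.supp) := by
  rintro u hu v hv
  have huv : Relation.ReflTransGen (G.restrict S).Adj u v :=
    (reachable_iff_reflTransGen u v).mp (ConnectedComponent.exact (hu.2.trans hv.2.symm))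
  induction huv with
  | refl => rfl
  | @tail b c _ hbc ih =>
    have hb : b ∈ S ∩ K.supp :=
      ⟨hbc.1, (ConnectedComponent.sound (Adj.reachable hbc)).trans hv.2⟩
    exact (ih hb).tail ⟨hb, hv, hbc.2.2⟩

lemma ConnectedOn.exists_adj_reachable {T : Set V} (hT : G.ConnectedOn T) {r x : V}
    (hr : r ∈ T) (hx : x ∈ T \ {r}) :
    ∃ u, G.Adj r u ∧ (G.restrict (T \ {r})).Reachable u x := by
  induction hT r hr x hx.1 with
  | refl => exact absurd rfl hx.2
  | @tail b c _ hbc ih =>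
    by_cases hb : b = r
    · exact ⟨c, hb ▸ hbc.2.2, Reachable.refl _⟩
    · obtain ⟨u, hru, hub⟩ := ih ⟨hbc.1, hb⟩
      exact ⟨u, hru, hub.trans (Adj.reachable ⟨⟨hbc.1, hb⟩, hx, hbc.2.2⟩)⟩

lemma ConnectedOn.exists_walk_into_component {T : Set V} (hT : G.ConnectedOn T) {r x : V}
    (hr : r ∈ T) (hx : x ∈ T \ {r}) :
    ∃ p : G.Walk r x, ∀ y ∈ p.support,
      y = r ∨ y ∈ T \ {r} ∧ (G.restrict (T \ {r})).Reachable y x := by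
  classical
  obtain ⟨u, hru, ⟨q⟩⟩ := hT.exists_adj_reachable hr hx
  refine ⟨.cons hru (q.mapLe (restrict_le _)), fun y hy => ?_⟩
  rw [Walk.support_cons, Walk.support_mapLe_eq_support, List.mem_cons] at hy
  rcases hy with rfl | hy
  · exact .inl rfl
  · have hyx : (G.restrict _).Reachable y x := ⟨q.dropUntil y hy⟩
    exact .inr ⟨mem_of_restrict_reachable hyx hx, hyx⟩

def HasEdgeDisjointFan (G : SimpleGraph V) (S : Set V) (a : ℕ → V) : Prop :=
  ∃ z ∈ S, ∃ g : ℕ → ℕ, g.Injective ∧ ∃ P : ∀ n, G.Walk z (a (g n)),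
    (∀ n, ∀ x ∈ (P n).support, x ∈ S) ∧
      Pairwise fun m n => (P m).edges.Disjoint (P n).edges

section Fan

variable {a : ℕ → V}

lemma HasEdgeDisjointFan.mono {S T : Set V} (h : G.HasEdgeDisjointFan S a) (hST : S ⊆ T) :
    G.HasEdgeDisjointFan T a := by
  obtain ⟨z, hz, g, hg, P, hPS, hP⟩ := h
  exact ⟨z, hST hz, g, hg, P, fun n x hx => hST (hPS n x hx), hP⟩

lemma hasEdgeDisjointFan_of_infinite_fiber {S : Set V} {r : V} (hr : r ∈ S)
    (h : {n | a n = r}.Infinite) : G.HasEdgeDisjointFan S a := by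
  let g := h.natEmbedding
  refine ⟨r, hr, fun n => g n, fun m n hmn => g.injective (Subtype.ext hmn),
    fun n => Walk.nil.copy rfl (g n).2.symm, fun n x hx => ?_, fun m n _ e he => ?_⟩
  · simp only [Walk.support_copy, Walk.support_nil, List.mem_singleton] at hx
    exact hx ▸ hr
  · simp at he

lemma ConnectedOn.hasEdgeDisjointFan_of_infinite_components {T : Set V} (hT : G.ConnectedOn T)
    {r : V} (hr : r ∈ T)
    (h : ((G.restrict (T \ {r})).connectedComponentMk ∘ a '' {n | a n ∈ T \ {r}}).Infinite) :
    G.HasEdgeDisjointFan T a := by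
  set c := (G.restrict (T \ {r})).connectedComponentMk
  let K := h.natEmbedding
  choose g hg hgK using fun i => (K i).2
  choose P hP using fun i => hT.exists_walk_into_component hr (hg i)
  have hPK : ∀ i, ∀ y ∈ (P i).support, y ≠ r → c y = K i := fun i y hy hyr =>
    (ConnectedComponent.sound ((hP i y hy).resolve_left hyr).2).trans (hgK i)
  refine ⟨r, hr, g, fun i j hij => K.injective (Subtype.ext ?_), P, ?_, ?_⟩
  · rw [← hgK i, ← hgK j, hij]
  · intro i y hy
    rcases hP i y hy with rfl | hy
    exacts [hr, hy.1.1]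
  · intro i j hij e hei hej
    obtain ⟨y, hy, hyr⟩ : ∃ y ∈ e, y ≠ r := by
      induction e using Sym2.ind with
      | _ p q =>
        by_cases hp : p = r
        · exact ⟨q, Sym2.mem_mk_right p q, hp ▸ ((P i).adj_of_mem_edges hei).ne'⟩
        · exact ⟨p, Sym2.mem_mk_left p q, hp⟩
    exact hij (K.injective (Subtype.ext
      ((hPK i y (Walk.mem_support_of_mem_edges hei hy) hyr).symm.trans
        (hPK j y (Walk.mem_support_of_mem_edges hej hy) hyr))))

lemma ConnectedOn.exists_adj_of_not_hasEdgeDisjointFan {T : Set V} (hT : G.ConnectedOn T)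
    {r : V} (hr : r ∈ T) (hinf : {n | a n ∈ T}.Infinite) (hno : ¬ G.HasEdgeDisjointFan T a) :
    ∃ T' ⊆ T \ {r}, ∃ r' ∈ T', G.Adj r r' ∧ G.ConnectedOn T' ∧
      {n | a n ∈ T'}.Infinite := by
  set c := (G.restrict (T \ {r})).connectedComponentMk
  have hJ : {n | a n ∈ T \ {r}}.Infinite := by
    have hfin : {n | a n = r}.Finite :=
      Set.not_infinite.mp fun h => hno (hasEdgeDisjointFan_of_infinite_fiber hr h)
    exact (hinf.sdiff hfin).mono fun n hn => ⟨hn.1, hn.2⟩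
  obtain ⟨K, hK⟩ : ∃ K, {n | a n ∈ T \ {r} ∧ c (a n) = K}.Infinite := by
    by_contra! hfin
    refine hno (hT.hasEdgeDisjointFan_of_infinite_components hr fun himg => hJ ?_)
    exact (himg.biUnion fun K _ => hfin K).subset fun n hn =>
      Set.mem_biUnion ⟨n, hn, rfl⟩ ⟨hn, rfl⟩
  obtain ⟨n₀, hn₀, hn₀K⟩ := hK.nonempty
  obtain ⟨u, hru, hu⟩ := hT.exists_adj_reachable hr hn₀
  exact ⟨T \ {r} ∩ K.supp, Set.inter_subset_left, u,
    ⟨mem_of_restrict_reachable hu hn₀, (ConnectedComponent.sound hu).trans hn₀K⟩, hru,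
    connectedOn_inter_supp K, hK⟩

theorem Rayless.hasEdgeDisjointFan (hray : G.Rayless) {S : Set V} (hS : G.ConnectedOn S)
    (hinf : {n | a n ∈ S}.Infinite) : G.HasEdgeDisjointFan S a := by
  by_contra hno
  let Good : Set V × V → Prop := fun p =>
    G.ConnectedOn p.1 ∧ p.2 ∈ p.1 ∧ {n | a n ∈ p.1}.Infinite ∧
      ¬ G.HasEdgeDisjointFan p.1 a
  have step : ∀ p : Subtype Good,
      ∃ q : Subtype Good, q.1.1 ⊆ p.1.1 \ {p.1.2} ∧ G.Adj p.1.2 q.1.2 := by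
    rintro ⟨⟨T, r⟩, hT, hr, hinfT, hnoT⟩
    obtain ⟨T', hT'T, r', hr', hrr', hT', hinfT'⟩ :=
      hT.exists_adj_of_not_hasEdgeDisjointFan hr hinfT hnoT
    exact ⟨⟨(T', r'), hT', hr', hinfT', fun h => hnoT (h.mono (hT'T.trans Set.sdiff_subset))⟩,
      hT'T, hrr'⟩
  choose next hnext hadj using step
  obtain ⟨n₀, hn₀⟩ := hinf.nonempty
  let f : ℕ → Subtype Good := fun n => next^[n] ⟨(S, a n₀), hS, hn₀, hinf, hno⟩
  have hf : ∀ n, f (n + 1) = next (f n) := fun n => Function.iterate_succ_apply' next n _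
  have hstep : ∀ n, (f (n + 1)).1.1 ⊆ (f n).1.1 \ {(f n).1.2} ∧
      G.Adj (f n).1.2 (f (n + 1)).1.2 := fun n => by
    rw [hf]
    exact ⟨hnext _, hadj _⟩
  have hanti : Antitone fun n => (f n).1.1 :=
    antitone_nat_of_succ_le fun n => (hstep n).1.trans Set.sdiff_subset
  refine hray ⟨fun n => (f n).1.2, Function.Injective.of_lt_imp_ne fun m n hmn h => ?_,
    fun n => (hstep n).2⟩
  exact ((hstep m).1 (hanti hmn (f n).2.2.1)).2 h.symm

end Fan

lemma cutEdgeSet_compl (X : Set V) : G.cutEdgeSet Xᶜ = G.cutEdgeSet X := by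
  ext e
  constructor <;> rintro ⟨a, b, hab, rfl, ha, hb⟩ <;>
    exact ⟨b, a, hab.symm, Sym2.eq_swap, by simpa using hb, by simpa using ha⟩

lemma IsBond.exists_connectedOn_side {B : Set (Sym2 V)} (hB : G.IsBond B) {X : Set V}
    (hBX : B = G.cutEdgeSet X) : ∃ C ⊆ X, G.ConnectedOn C ∧ B = G.cutEdgeSet C := by
  obtain ⟨e₀, he₀⟩ := hB.2.1
  obtain ⟨x₀, y₀, hxy₀, rfl, hx₀, hy₀⟩ := hBX ▸ he₀
  let K := (G.restrict X).connectedComponentMk x₀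
  have hKX : K.supp ⊆ X := fun x hx =>
    mem_of_restrict_reachable (ConnectedComponent.exact hx) hx₀
  have hout : ∀ x y, G.Adj x y → x ∈ K.supp → y ∉ K.supp → y ∉ X := by
    intro x y hxy hx hy hyX
    have hxy' : (G.restrict X).Adj x y := ⟨hKX hx, hyX, hxy⟩
    exact hy ((ConnectedComponent.sound hxy'.reachable).symm.trans hx)
  have hsub : G.cutEdgeSet K.supp ⊆ B := by
    rintro _ ⟨x, y, hxy, rfl, hx, hy⟩
    exact hBX ▸ ⟨x, y, hxy, rfl, hKX hx, hout x y hxy hx hy⟩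
  have hne : (G.cutEdgeSet K.supp).Nonempty :=
    ⟨_, x₀, y₀, hxy₀, rfl, rfl, fun hy => hy₀ (hKX hy)⟩
  refine ⟨K.supp, hKX, ?_, (hB.2.2 _ ⟨_, rfl⟩ hne hsub).symm⟩
  simpa [Set.inter_eq_right.mpr hKX] using connectedOn_inter_supp K

lemma IsBond.exists_connectedOn_sides {B : Set (Sym2 V)} (hB : G.IsBond B) :
    ∃ C D : Set V, Disjoint C D ∧ G.ConnectedOn C ∧ G.ConnectedOn D ∧
      ∀ e ∈ B, ∃ x ∈ C, ∃ y ∈ D, G.Adj x y ∧ e = s(x, y) := by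
  obtain ⟨X, hBX⟩ := hB.1
  obtain ⟨C, -, hC, hBC⟩ := hB.exists_connectedOn_side hBX
  obtain ⟨D, hDC, hD, hBD⟩ :=
    hB.exists_connectedOn_side (hBC.trans (cutEdgeSet_compl C).symm)
  refine ⟨C, D, Set.subset_compl_iff_disjoint_left.mp hDC, hC, hD, fun e he => ?_⟩
  obtain ⟨x, y, hxy, rfl, hx, -⟩ := hBC ▸ he
  obtain ⟨x', y', -, he', hx', -⟩ := hBD ▸ he
  rcases Sym2.eq_iff.mp he' with ⟨rfl, -⟩ | ⟨-, rfl⟩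
  · exact absurd hx (hDC hx')
  · exact ⟨x, hx, y, hx', hxy, rfl⟩

lemma FinitelySeparable.not_pairwise_disjoint_edges (hG : G.FinitelySeparable) {u v : V}
    (huv : u ≠ v) {ι : Type*} [Infinite ι] (W : ι → G.Walk u v) :
    ¬ Pairwise fun i j => (W i).edges.Disjoint (W j).edges := by
  intro hW
  obtain ⟨Z, hu, hv, hfin⟩ := hG u v huv
  choose d hd hfst hsnd using fun i => (W i).exists_boundary_dart Z hu hv
  have hdW : ∀ i, (d i).edge ∈ (W i).edges := fun i => List.mem_map_of_mem (hd i)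
  have hdZ : ∀ i, (d i).edge ∈ G.cutEdgeSet Z := fun i =>
    ⟨_, _, (d i).adj, rfl, hfst i, hsnd i⟩
  refine Set.infinite_of_injective_forall_mem (fun i j hij => ?_) hdZ hfin
  by_contra hne
  exact hW hne (hdW i) ((show (d i).edge = (d j).edge from hij) ▸ hdW j)

lemma pairwise_disjoint_edges_append {ι : Type*} {u x v : ι → V}
    {p : ∀ i, G.Walk (u i) (x i)} {q : ∀ i, G.Walk (x i) (v i)}
    (hp : Pairwise fun i j => (p i).edges.Disjoint (p j).edges)
    (hq : Pairwise fun i j => (q i).edges.Disjoint (q j).edges)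
    (hpq : ∀ i j, (p i).edges.Disjoint (q j).edges) :
    Pairwise fun i j => ((p i).append (q i)).edges.Disjoint ((p j).append (q j)).edges := by
  intro i j hij
  simp only [Walk.edges_append, List.disjoint_append_left, List.disjoint_append_right]
  exact ⟨⟨hp hij, (hpq j i).symm⟩, hpq i j, hq hij⟩

lemma Walk.edges_disjoint_of_support_subset {C D : Set V} (hCD : Disjoint C D) {u v : V}
    {p : G.Walk u v} (hp : ∀ x ∈ p.support, x ∈ C) {l : List (Sym2 V)}
    (hl : ∀ e ∈ l, ∃ y ∈ e, y ∈ D) : p.edges.Disjoint l := fun e hep hel => by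
  obtain ⟨y, hy, hyD⟩ := hl e hel
  exact Set.disjoint_left.mp hCD (hp y (p.mem_support_of_mem_edges hep hy)) hyD

lemma pairwise_disjoint_edges_append_cons {ι : Type*} {C D : Set V} (hCD : Disjoint C D)
    {z₁ z₂ : V} {x y : ι → V} {P : ∀ i, G.Walk z₁ (x i)} {Q : ∀ i, G.Walk (y i) z₂}
    (hxy : ∀ i, G.Adj (x i) (y i))
    (hPC : ∀ i, ∀ w ∈ (P i).support, w ∈ C) (hQD : ∀ i, ∀ w ∈ (Q i).support, w ∈ D)
    (hP : Pairwise fun i j => (P i).edges.Disjoint (P j).edges)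
    (hQ : Pairwise fun i j => (Q i).edges.Disjoint (Q j).edges)
    (hinj : (fun i => s(x i, y i)).Injective) :
    Pairwise fun i j => ((P i).append (.cons (hxy i) (Q i))).edges.Disjoint
      ((P j).append (.cons (hxy j) (Q j))).edges := by
  have hx : ∀ i, x i ∈ C := fun i => hPC i _ (P i).end_mem_support
  have hy : ∀ i, y i ∈ D := fun i => hQD i _ (Q i).start_mem_support
  refine pairwise_disjoint_edges_append hP
    (pairwise_disjoint_edges_append (p := fun i => .cons (hxy i) .nil) ?_ hQ ?_) ?_
  · intro i j hij
    simpa using hinj.ne hij.symm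
  · intro i j
    refine (Walk.edges_disjoint_of_support_subset hCD.symm (hQD j) fun e he => ?_).symm
    exact ⟨x i, by simp_all, hx i⟩
  · intro i j
    refine Walk.edges_disjoint_of_support_subset hCD (hPC i) fun e he => ?_
    simp only [Walk.edges_cons, List.mem_cons] at he
    rcases he with rfl | he
    · exact ⟨y j, Sym2.mem_mk_right _ _, hy j⟩
    · have hw := Sym2.out_fst_mem e
      exact ⟨_, hw, hQD j _ (Walk.mem_support_of_mem_edges he hw)⟩

end SimpleGraph

/-- A finitely separable rayless graph has no infinite bond. -/
theorem bond_finite_of_finitelySeparable_rayless {V : Type*}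
    (G : SimpleGraph V) (hG : G.FinitelySeparable) (hray : G.Rayless) :
    ∀ B : Set (Sym2 V), G.IsBond B → B.Finite := by
  intro B hB
  by_contra hinf
  obtain ⟨C, D, hCD, hC, hD, hBCD⟩ := hB.exists_connectedOn_sides
  let e := Set.Infinite.natEmbedding B hinf
  choose x hx y hy hxy hexy using fun n => hBCD _ (e n).2
  obtain ⟨z₁, hz₁, g₁, hg₁, P, hPC, hP⟩ :=
    hray.hasEdgeDisjointFan hC (a := x) (by simpa [hx] using Set.infinite_univ)
  obtain ⟨z₂, hz₂, g₂, hg₂, Q, hQD, hQ⟩ :=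
    hray.hasEdgeDisjointFan hD (a := y ∘ g₁) (by simpa [hy] using Set.infinite_univ)
  have hinj : Function.Injective fun n => s(x (g₁ (g₂ n)), y (g₁ (g₂ n))) := fun m n h =>
    hg₂ (hg₁ (e.injective (Subtype.ext ((hexy _).trans (h.trans (hexy _).symm)))))
  exact hG.not_pairwise_disjoint_edges (hCD.ne_of_mem hz₁ hz₂) _
    (SimpleGraph.pairwise_disjoint_edges_append_cons hCD (P := fun n => P (g₂ n))
      (Q := fun n => (Q n).reverse) (fun n => hxy _) (fun n => hPC _)
      (fun n w hw => hQD n w (by simpa using hw))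
      (hP.comp_of_injective hg₂) (fun m n hmn => by simpa using hQ hmn) hinj)
end

section
/- Let D be a weakly connected digraph and let v, w be vertices with v ∼ w. If W is an inclusion-minimal witness for v ∼ w, then W is also a witness for v ∼ y for every vertex y incident with an edge of W (in particular, W meets every finite cut of D separating v and y in both directions). -/
/-- Let `v ∼ w` in a weakly connected digraph `D`. Then an inclusion-minimal
witness `W` for `v ∼ w` also witnesses `v ∼ y` for every vertex `y` incident
with an edge of `W`. -/
theorem minimal_witness_is_common_witness {V E : Type*}
    (D : MultiDigraph V E) (hD : D.WeaklyConnected)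
    (v w : V) (hvw : D.Sim v w) (W : Set E)
    (hW : D.Witness v w W)
    (hmin : ∀ W' : Set E, W' ⊆ W → D.Witness v w W' → W' = W) :
    ∀ y : V, (∃ e ∈ W, D.tail e = y ∨ D.head e = y) → D.Witness v y W := by

  intro y ⟨e₀, he₀W, he₀y⟩ X hXfin hvX hyX
  by_cases hwX : w ∈ X
  · by_contra hfail
    rw [not_and_or] at hfail
    have hfinInter : ∀ Z : Set V, (D.cutEdges Z).Finite → (D.cutEdges (Z ∩ X)).Finite := by
      intro Z hZfin
      refine (hZfin.union hXfin).subset ?_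
      intro e he
      simp only [MultiDigraph.cutEdges, Set.mem_setOf_eq, Set.mem_union,
        Set.mem_inter_iff] at he ⊢
      tauto
    have hfinUnion : ∀ Z : Set V, (D.cutEdges Z).Finite → (D.cutEdges (Z ∪ Xᶜ)).Finite := by
      intro Z hZfin
      refine (hZfin.union hXfin).subset ?_
      intro e he
      simp only [MultiDigraph.cutEdges, Set.mem_setOf_eq, Set.mem_union,
        Set.mem_compl_iff] at he ⊢
      tauto
    rcases hfail with hfail | hfail
    · push_neg at hfail
      have hno : ∀ e ∈ W, D.tail e ∈ X → D.head e ∈ X := hfail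
      set W' : Set E := {e ∈ W | D.tail e ∈ X} with hW'
      have hsub : W' ⊆ W := fun e he => he.1
      have hwit : D.Witness v w W' := by
        intro Z hZfin hvZ hwZ
        constructor
        · obtain ⟨⟨e, heW, ht, hh⟩, -⟩ :=
            hW (Z ∩ X) (hfinInter Z hZfin) ⟨hvZ, hvX⟩ (fun h => hwZ h.1)
          have hhX : D.head e ∈ X := hno e heW ht.2
          exact ⟨e, ⟨heW, ht.2⟩, ht.1, fun hZ => hh ⟨hZ, hhX⟩⟩
        · obtain ⟨-, ⟨e, heW, ht, hh⟩⟩ :=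
            hW (Z ∪ Xᶜ) (hfinUnion Z hZfin) (Or.inl hvZ)
              (fun h => h.elim hwZ (fun h' => h' hwX))
          have htX : D.tail e ∈ X := by
            by_contra h; exact ht (Or.inr h)
          have htZ : D.tail e ∉ Z := fun h => ht (Or.inl h)
          have hhX : D.head e ∈ X := hno e heW htX
          have hhZ : D.head e ∈ Z := hh.elim id (fun h => absurd hhX h)
          exact ⟨e, ⟨heW, htX⟩, htZ, hhZ⟩
      have heq := hmin W' hsub hwit
      have he₀W' : e₀ ∈ W' := heq ▸ he₀W
      rcases he₀y with h | h
      · exact hyX (h ▸ he₀W'.2)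
      · exact hyX (h ▸ hno e₀ he₀W he₀W'.2)
    · push_neg at hfail
      have hno : ∀ e ∈ W, D.head e ∈ X → D.tail e ∈ X := by
        intro e he hh
        by_contra ht
        exact hfail e he ht hh
      set W' : Set E := {e ∈ W | D.head e ∈ X} with hW'
      have hsub : W' ⊆ W := fun e he => he.1
      have hwit : D.Witness v w W' := by
        intro Z hZfin hvZ hwZ
        constructor
        · obtain ⟨⟨e, heW, ht, hh⟩, -⟩ :=
            hW (Z ∪ Xᶜ) (hfinUnion Z hZfin) (Or.inl hvZ)
              (fun h => h.elim hwZ (fun h' => h' hwX))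
          have hhX : D.head e ∈ X := by
            by_contra h; exact hh (Or.inr h)
          have hhZ : D.head e ∉ Z := fun h => hh (Or.inl h)
          have htX : D.tail e ∈ X := hno e heW hhX
          have htZ : D.tail e ∈ Z := ht.elim id (fun h => absurd htX h)
          exact ⟨e, ⟨heW, hhX⟩, htZ, hhZ⟩
        · obtain ⟨-, ⟨e, heW, ht, hh⟩⟩ :=
            hW (Z ∩ X) (hfinInter Z hZfin) ⟨hvZ, hvX⟩ (fun h => hwZ h.1)
          have htX : D.tail e ∈ X := hno e heW hh.2
          exact ⟨e, ⟨heW, hh.2⟩, fun hZ => ht ⟨hZ, htX⟩, hh.1⟩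
      have heq := hmin W' hsub hwit
      have he₀W' : e₀ ∈ W' := heq ▸ he₀W
      rcases he₀y with h | h
      · exact hyX (h ▸ hno e₀ he₀W he₀W'.2)
      · exact hyX (h ▸ he₀W'.2)
  · exact hW X hXfin hvX hwX
end
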